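/- arXiv:2309.17292 — 6 statements merged into one kernel-verified Lean document; each statement's English description precedes it below -/
import Mathlib

section
/- Let t* ≥ 1 be an integer, ε ∈ (0,1/4), and suppose (1+ε)·log N/(t*+1) ≤ d_N ≤ (1−ε)·log N/t*. Let τ ∈ (0,1) satisfy −τ log τ + τ ≤ ε/2 and let 𝒱 = {x ∈ [N] : D_x ≤ τ d_N}. Then with high probability |𝒱| ≤ N^{1 − 1/(1+t*)}. -/
open MeasureTheory Filter Real Topology

noncomputable section

namespace ER

/-- The random graph associated to edge indicators. -/
def graphOf {N : ℕ} (ω : Sym2 (Fin N) → Bool) : SimpleGraph (Fin N) where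
  Adj x y := x ≠ y ∧ ω s(x, y) = true
  symm := by
    constructor
    intro x y h
    exact ⟨h.1.symm, by rw [Sym2.eq_swap]; exact h.2⟩
  loopless := by constructor; intro x h; exact h.1 rfl

/-- The Erdős–Rényi measure: each edge present independently with probability `d/N`. -/
def erMeasure (N : ℕ) (d : ℝ) : Measure (Sym2 (Fin N) → Bool) :=
  Measure.pi fun _ => (PMF.bernoulli (min (Real.toNNReal (d / N)) 1) (min_le_right _ _)).toMeasure

/-- Degree of a vertex. -/
def gdeg {V : Type*} [Fintype V] (G : SimpleGraph V) (x : V) : ℕ :=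
  (G.neighborSet x).ncard

/-- Laplacian matrix with real entries. -/
def glap {V : Type*} [Fintype V] [DecidableEq V] (G : SimpleGraph V) : Matrix V V ℝ :=
  letI : DecidableRel G.Adj := Classical.decRel _
  SimpleGraph.lapMatrix ℝ G

/-- Adjacency matrix with real entries. -/
def gadj {V : Type*} [Fintype V] [DecidableEq V] (G : SimpleGraph V) : Matrix V V ℝ :=
  letI : DecidableRel G.Adj := Classical.decRel _
  SimpleGraph.adjMatrix ℝ G

/-- Laplacian of the Erdős–Rényi graph. -/
def lap {N : ℕ} (ω : Sym2 (Fin N) → Bool) : Matrix (Fin N) (Fin N) ℝ := glap (graphOf ω)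

/-- Smallest nonzero eigenvalue of the Laplacian. -/
def lambda2 {N : ℕ} (ω : Sym2 (Fin N) → Bool) : ℝ :=
  sInf {μ | μ ∈ spectrum ℝ (lap ω) ∧ μ ≠ 0}

/-- Set of vertices of degree at most `τ * d`. -/
def lowDeg {V : Type*} [Fintype V] (G : SimpleGraph V) (τ d : ℝ) : Set V :=
  {x | (gdeg G x : ℝ) ≤ τ * d}

/-- Ball of radius `r` for the graph distance. -/
def gball {V : Type*} (G : SimpleGraph V) (x : V) (r : ℕ) : Set V :=
  {y | G.Reachable x y ∧ G.dist x y ≤ r}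

/-- `S` is the vertex set of a connected component of the restriction of `G` to `A`. -/
def isComponentOf {V : Type*} (G : SimpleGraph V) (A : Set V) (S : Finset V) : Prop :=
  ↑S ⊆ A ∧ S.Nonempty ∧ (SimpleGraph.induce (↑S : Set V) G).Connected ∧
    ∀ x ∈ S, ∀ y ∈ A, G.Adj x y → y ∈ S

/-- The connected components of the restriction of `G` to `A`. -/
def componentsOf {V : Type*} [Fintype V] [DecidableEq V] (G : SimpleGraph V) (A : Set V) :
    Finset (Finset V) :=
  @Finset.filter _ (fun S => isComponentOf G A S) (Classical.decPred _) Finset.univ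

/-- Restriction of a matrix to the rows and columns indexed by a finite set of indices. -/
def restrict {V : Type*} (M : Matrix V V ℝ) (S : Finset V) :
    Matrix {x // x ∈ S} {x // x ∈ S} ℝ :=
  M.submatrix (fun a => a.1) (fun a => a.1)

/-- Multiset of eigenvalues (with multiplicity) of a real matrix. -/
def specMS {n : Type*} [Fintype n] [DecidableEq n] (M : Matrix n n ℝ) : Multiset ℝ :=
  M.charpoly.roots

/-- Filter a multiset of reals to those lying in `[a, b]`. -/
def msFilterIcc (a b : ℝ) (s : Multiset ℝ) : Multiset ℝ :=
  @Multiset.filter ℝ (fun μ => a ≤ μ ∧ μ ≤ b) (Classical.decPred _) s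

/-- Intersection of a finset with a set, as a finset. -/
def vFilter {V : Type*} (A : Set V) (S : Finset V) : Finset V :=
  @Finset.filter _ (fun x => x ∈ A) (Classical.decPred _) S

/-- Number of anchored lines of length `t`. -/
def lineCount (N t : ℕ) (ω : Sym2 (Fin N) → Bool) : ℕ :=
  Set.ncard {p : (Fin t → Fin N) × Fin N |
    Function.Injective p.1 ∧ p.2 ∉ Set.range p.1 ∧
    (∀ i j : Fin t, (graphOf ω).Adj (p.1 i) (p.1 j) ↔ ((i : ℕ) + 1 = j ∨ (j : ℕ) + 1 = i)) ∧
    (∀ (i : Fin t) (z : Fin N), z ∉ Set.range p.1 →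
      ((graphOf ω).Adj (p.1 i) z ↔ ((i : ℕ) = t - 1 ∧ z = p.2)))}

/-- Operator norm (ℓ² → ℓ²) of a real matrix. -/
def opNorm {n : Type*} [Fintype n] [DecidableEq n] (M : Matrix n n ℝ) : ℝ :=
  ‖Matrix.toEuclideanCLM (𝕜 := ℝ) M‖

end ER


section Aux
open ER Finset
open scoped ENNReal

namespace ERW

variable {N : ℕ}

lemma key_inj {x y y' : Fin N} (hy : y ≠ x) (h : s(x,y) = s(x,y')) : y = y' := by
  rw [Sym2.eq_iff] at h
  rcases h with ⟨-, h⟩ | ⟨h1, h2⟩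
  · exact h
  · exact absurd h2 hy

lemma gdeg_eq (ω : Sym2 (Fin N) → Bool) (x : Fin N) :
    gdeg (graphOf ω) x = ((univ.erase x).filter (fun y => ω s(x,y) = true)).card := by
  classical
  have : (graphOf ω).neighborSet x =
      ↑((univ.erase x).filter (fun y => ω s(x,y) = true)) := by
    ext y
    simp only [SimpleGraph.mem_neighborSet, graphOf, Finset.coe_filter, Finset.mem_erase,
      Set.mem_setOf_eq, Finset.mem_univ, and_true]
    constructor <;> rintro ⟨h1, h2⟩ <;> exact ⟨fun h => h1 h.symm, h2⟩
  rw [gdeg, this, Set.ncard_coe_finset]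

/-- cylinder event: trues among `y ≠ x` exactly `T` -/
def cyl (x : Fin N) (T : Finset (Fin N)) : Set (Sym2 (Fin N) → Bool) :=
  {ω | ∀ y : Fin N, y ≠ x → (ω s(x,y) = true ↔ y ∈ T)}

lemma cyl_eq_pi (x : Fin N) (T : Finset (Fin N)) :
    cyl x T = Set.pi Set.univ
      (fun e => {b | ∀ y : Fin N, y ≠ x → e = s(x,y) → (b = true ↔ y ∈ T)}) := by
  ext ω
  simp only [cyl, Set.mem_setOf_eq, Set.mem_pi, Set.mem_univ, forall_true_left]
  constructor
  · intro h e y hy he; subst he; exact h y hy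
  · intro h y hy; exact h s(x,y) y hy rfl

def bq (N : ℕ) (d : ℝ) : ℝ≥0∞ := ((min (Real.toNNReal (d / N)) 1 : NNReal) : ℝ≥0∞)

lemma tset_eq (x y : Fin N) (T : Finset (Fin N)) (hy : y ≠ x) :
    {b : Bool | ∀ y' : Fin N, y' ≠ x → s(x,y) = s(x,y') → (b = true ↔ y' ∈ T)} =
      (if y ∈ T then {true} else {false} : Set Bool) := by
  ext b
  simp only [Set.mem_setOf_eq]
  constructor
  · intro h
    have h2 := h y hy rfl
    by_cases hyT : y ∈ T <;> simp [hyT] at h2 ⊢ <;> simp [h2]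
  · intro hb y' hy' he
    have h3 := key_inj hy he
    subst h3
    by_cases hyT : y ∈ T <;> simp [hyT] at hb ⊢ <;> simp [hb, hyT]

lemma card_erase (x : Fin N) : (univ.erase x).card = N - 1 := by
  rw [Finset.card_erase_of_mem (mem_univ x), card_univ, Fintype.card_fin]

lemma meas_cyl (d : ℝ) (x : Fin N) (T : Finset (Fin N)) (hT : T ⊆ univ.erase x) :
    erMeasure N d (cyl x T) =
      (bq N d) ^ T.card * (1 - bq N d) ^ (N - 1 - T.card) := by
  classical
  set q := bq N d with hqdef
  set q0 : NNReal := min (Real.toNNReal (d / N)) 1 with hq0def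
  have hq : q0 ≤ 1 := min_le_right _ _
  set ν := (PMF.bernoulli q0 hq).toMeasure with hν
  have hνt : ν {true} = q := by
    rw [hν, (PMF.bernoulli q0 hq).toMeasure_apply_singleton true (measurableSet_singleton _),
      PMF.bernoulli_apply, Bool.cond_true]
    rfl
  have hνf : ν {false} = 1 - q := by
    rw [hν, (PMF.bernoulli q0 hq).toMeasure_apply_singleton false (measurableSet_singleton _),
      PMF.bernoulli_apply, Bool.cond_false]
    rfl
  have hmeq : erMeasure N d = Measure.pi (fun _ : Sym2 (Fin N) => ν) := rfl
  rw [cyl_eq_pi, hmeq, Measure.pi_pi]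
  set t : Sym2 (Fin N) → Set Bool :=
    fun e => {b | ∀ y : Fin N, y ≠ x → e = s(x,y) → (b = true ↔ y ∈ T)} with ht
  set E : Finset (Sym2 (Fin N)) := (univ.erase x).image (fun y => s(x,y)) with hE
  have hsplit : ∏ e, ν (t e) = (∏ e ∈ E, ν (t e)) * ∏ e ∈ Eᶜ, ν (t e) :=
    (Finset.prod_mul_prod_compl E _).symm
  have hcompl : ∏ e ∈ Eᶜ, ν (t e) = 1 := by
    apply Finset.prod_eq_one
    intro e he
    have : t e = Set.univ := by
      ext b
      simp only [ht, Set.mem_setOf_eq, Set.mem_univ, iff_true]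
      intro y hy hee
      exact absurd (Finset.mem_image.mpr ⟨y, Finset.mem_erase.mpr ⟨hy, mem_univ y⟩, hee.symm⟩)
        (Finset.mem_compl.mp he)
    rw [this]
    exact measure_univ
  have hinj : Set.InjOn (fun y => s(x,y)) ↑(univ.erase x) := by
    intro y hy y' _ h
    exact key_inj (Finset.mem_erase.mp hy).1 h
  have himg : ∏ e ∈ E, ν (t e) = ∏ y ∈ univ.erase x, ν (t s(x,y)) :=
    Finset.prod_image hinj
  have hterm : ∀ y ∈ univ.erase x, ν (t s(x,y)) = if y ∈ T then q else 1 - q := by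
    intro y hy
    rw [ht]
    have := tset_eq x y T (Finset.mem_erase.mp hy).1
    simp only [this]
    by_cases hyT : y ∈ T <;> simp [hyT, hνt, hνf]
  rw [hsplit, hcompl, mul_one, himg, Finset.prod_congr rfl hterm, Finset.prod_ite,
    Finset.prod_const, Finset.prod_const, Finset.filter_mem_eq_inter,
    Finset.inter_eq_right.mpr hT, ← Finset.sdiff_eq_filter,
    Finset.card_sdiff_of_subset hT, card_erase]

def Ax (τ d : ℝ) (x : Fin N) : Set (Sym2 (Fin N) → Bool) :=
  {ω | ((gdeg (graphOf ω) x : ℝ)) ≤ τ * d}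

lemma Ax_subset (τ d : ℝ) (x : Fin N) :
    Ax τ d x ⊆
      ⋃ T ∈ (univ.erase x).powerset.filter (fun T => T.card ≤ ⌊τ*d⌋₊), cyl x T := by
  classical
  intro ω hω
  set T := (univ.erase x).filter (fun y => ω s(x,y) = true) with hTdef
  have hcard : (T.card : ℝ) ≤ τ * d := by rw [hTdef, ← gdeg_eq]; exact hω
  refine Set.mem_iUnion₂.mpr ⟨T, ?_, ?_⟩
  · rw [Finset.mem_filter, Finset.mem_powerset]
    exact ⟨Finset.filter_subset _ _, Nat.le_floor hcard⟩
  · intro y hy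
    simp only [hTdef, Finset.mem_filter, Finset.mem_erase, Finset.mem_univ, and_true]
    constructor
    · intro h; exact ⟨hy, h⟩
    · rintro ⟨-, h⟩; exact h

lemma sum_group (s : Finset (Fin N)) (m : ℕ) (f : ℕ → ℝ≥0∞) :
    ∑ T ∈ s.powerset.filter (fun T => T.card ≤ m), f T.card
      = ∑ k ∈ Finset.range (m+1), (s.card.choose k : ℝ≥0∞) * f k := by
  classical
  have heq : s.powerset.filter (fun T => T.card ≤ m)
      = (Finset.range (m+1)).biUnion (fun k => s.powersetCard k) := by
    ext T
    simp only [Finset.mem_filter, Finset.mem_powerset, Finset.mem_biUnion, Finset.mem_range,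
      Finset.mem_powersetCard, Nat.lt_succ_iff]
    constructor
    · rintro ⟨h1, h2⟩; exact ⟨T.card, h2, h1, rfl⟩
    · rintro ⟨k, hk, h1, h2⟩; exact ⟨h1, h2 ▸ hk⟩
  rw [heq, Finset.sum_biUnion]
  · refine Finset.sum_congr rfl fun k _ => ?_
    have hc : ∀ T ∈ s.powersetCard k, f T.card = f k := fun T hT => by
      rw [(Finset.mem_powersetCard.mp hT).2]
    rw [Finset.sum_congr rfl hc, Finset.sum_const, Finset.card_powersetCard, nsmul_eq_mul]
  · intro a _ b _ hab
    apply Finset.disjoint_left.mpr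
    intro T hTa hTb
    exact hab ((Finset.mem_powersetCard.mp hTa).2.symm.trans (Finset.mem_powersetCard.mp hTb).2)

lemma meas_Ax_le (d τ : ℝ) (x : Fin N) :
    erMeasure N d (Ax τ d x)
      ≤ ∑ k ∈ Finset.range (⌊τ*d⌋₊+1),
          ((N-1).choose k : ℝ≥0∞) * ((bq N d) ^ k * (1 - bq N d) ^ (N-1-k)) := by
  classical
  calc erMeasure N d (Ax τ d x)
      ≤ erMeasure N d
          (⋃ T ∈ (univ.erase x).powerset.filter (fun T => T.card ≤ ⌊τ*d⌋₊), cyl x T) :=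
        measure_mono (Ax_subset τ d x)
    _ ≤ ∑ T ∈ (univ.erase x).powerset.filter (fun T => T.card ≤ ⌊τ*d⌋₊),
          erMeasure N d (cyl x T) := measure_biUnion_finset_le _ _
    _ = ∑ T ∈ (univ.erase x).powerset.filter (fun T => T.card ≤ ⌊τ*d⌋₊),
          (bq N d) ^ T.card * (1 - bq N d) ^ (N-1-T.card) := by
        refine Finset.sum_congr rfl fun T hT => ?_
        exact meas_cyl d x T (Finset.mem_powerset.mp (Finset.mem_filter.mp hT).1)
    _ = ∑ k ∈ Finset.range (⌊τ*d⌋₊+1),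
          ((N-1).choose k : ℝ≥0∞) * ((bq N d) ^ k * (1 - bq N d) ^ (N-1-k)) := by
        rw [sum_group (univ.erase x) ⌊τ*d⌋₊ (fun k => (bq N d) ^ k * (1 - bq N d) ^ (N-1-k)),
          card_erase]

lemma binom_tail (n m : ℕ) (p : ℝ) (hp0 : 0 ≤ p) (hp1 : p ≤ 1) (hm1 : 1 ≤ m) (hmn : m ≤ n)
    (hmnp : (m : ℝ) ≤ n * p) :
    ∑ k ∈ Finset.range (m+1), (n.choose k : ℝ) * (p ^ k * (1-p) ^ (n-k))
      ≤ (m+1) * ((1-p) ^ (n-m) * (((n : ℝ) * p / m) ^ m * Real.exp m)) := by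
  have hm0 : (0:ℝ) < m := by exact_mod_cast hm1
  have hnp1 : (1:ℝ) ≤ (n : ℝ) * p / m := (one_le_div hm0).mpr hmnp
  have hterm : ∀ k ∈ Finset.range (m+1),
      (n.choose k : ℝ) * (p ^ k * (1-p) ^ (n-k))
        ≤ (1-p) ^ (n-m) * (((n : ℝ) * p / m) ^ m * Real.exp m) := by
    intro k hk
    have hkm : k ≤ m := Nat.lt_succ_iff.mp (Finset.mem_range.mp hk)
    have h1 : (1-p) ^ (n-k) ≤ (1-p) ^ (n-m) :=
      pow_le_pow_of_le_one (by linarith) (by linarith) (Nat.sub_le_sub_left hkm n)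
    have h2 : (n.choose k : ℝ) * p ^ k ≤ ((n:ℝ) * p) ^ k / k.factorial := by
      rw [mul_pow]
      calc (n.choose k : ℝ) * p ^ k ≤ ((n:ℝ) ^ k / k.factorial) * p ^ k :=
            mul_le_mul_of_nonneg_right (Nat.choose_le_pow_div (α := ℝ) k n) (by positivity)
        _ = (n:ℝ) ^ k * p ^ k / k.factorial := by ring
    have h3 : ((n:ℝ) * p) ^ k / k.factorial
        ≤ ((n : ℝ) * p / m) ^ m * ((m:ℝ) ^ k / k.factorial) := by
      have hnp : ((n:ℝ) * p) ^ k = ((n:ℝ) * p / m) ^ k * (m:ℝ) ^ k := by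
        rw [← mul_pow, div_mul_cancel₀]
        exact ne_of_gt hm0
      rw [hnp, mul_div_assoc]
      apply mul_le_mul_of_nonneg_right _ (by positivity)
      exact pow_le_pow_right₀ hnp1 hkm
    have h4 : ((m:ℝ)) ^ k / k.factorial ≤ Real.exp m :=
      Real.pow_div_factorial_le_exp (m:ℝ) (le_of_lt hm0) k
    calc (n.choose k : ℝ) * (p ^ k * (1-p) ^ (n-k))
        = ((n.choose k : ℝ) * p ^ k) * (1-p) ^ (n-k) := by ring
      _ ≤ (((n:ℝ) * p) ^ k / k.factorial) * (1-p) ^ (n-m) := by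
          apply mul_le_mul h2 h1 (pow_nonneg (by linarith) _)
          positivity
      _ ≤ (((n : ℝ) * p / m) ^ m * ((m:ℝ) ^ k / k.factorial)) * (1-p) ^ (n-m) := by
          apply mul_le_mul_of_nonneg_right h3 (pow_nonneg (by linarith) _)
      _ ≤ (((n : ℝ) * p / m) ^ m * Real.exp m) * (1-p) ^ (n-m) := by
          apply mul_le_mul_of_nonneg_right _ (pow_nonneg (by linarith) _)
          apply mul_le_mul_of_nonneg_left h4 (by positivity)
      _ = (1-p) ^ (n-m) * (((n : ℝ) * p / m) ^ m * Real.exp m) := by ring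
  calc ∑ k ∈ Finset.range (m+1), (n.choose k : ℝ) * (p ^ k * (1-p) ^ (n-k))
      ≤ ∑ k ∈ Finset.range (m+1), (1-p) ^ (n-m) * (((n : ℝ) * p / m) ^ m * Real.exp m) :=
        Finset.sum_le_sum hterm
    _ = (m+1) * ((1-p) ^ (n-m) * (((n : ℝ) * p / m) ^ m * Real.exp m)) := by
        rw [Finset.sum_const, Finset.card_range, nsmul_eq_mul]
        push_cast
        ring

lemma meas_Ax_le_real (d τ : ℝ) (x : Fin N) (hd0 : 0 ≤ d) (hdN : d ≤ N) (hN1 : 1 ≤ N)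
    (hm1 : 1 ≤ ⌊τ*d⌋₊) (hmnp : (⌊τ*d⌋₊ : ℝ) ≤ ((N-1 : ℕ) : ℝ) * (d/N)) :
    erMeasure N d (Ax τ d x) ≤ ENNReal.ofReal
      (((⌊τ*d⌋₊ : ℝ)+1) * ((1-d/N) ^ (N-1-⌊τ*d⌋₊) *
        ((((N-1:ℕ) : ℝ) * (d/N) / (⌊τ*d⌋₊ : ℝ)) ^ ⌊τ*d⌋₊ * Real.exp ⌊τ*d⌋₊))) := by
  classical
  set m := ⌊τ*d⌋₊
  set n := N - 1
  set p := d / N with hpdef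
  have hN0 : (0:ℝ) < N := by exact_mod_cast hN1
  have hp0 : 0 ≤ p := div_nonneg hd0 (le_of_lt hN0)
  have hp1 : p ≤ 1 := (div_le_one hN0).mpr hdN
  have hq : bq N d = ENNReal.ofReal p := by
    rw [bq, min_eq_left (Real.toNNReal_le_one.mpr hp1)]
    rfl
  have hq1 : 1 - bq N d = ENNReal.ofReal (1 - p) := by
    rw [hq, ← ENNReal.ofReal_one, ← ENNReal.ofReal_sub _ hp0]
  have hmn : m ≤ n := by
    have h1 : (m:ℝ) ≤ (n:ℝ) := le_trans hmnp (by
      calc ((n:ℕ):ℝ) * p ≤ (n:ℝ) * 1 := by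
            apply mul_le_mul_of_nonneg_left hp1 (by positivity)
        _ = (n:ℝ) := mul_one _)
    exact_mod_cast h1
  calc erMeasure N d (Ax τ d x)
      ≤ ∑ k ∈ Finset.range (m+1),
          (n.choose k : ℝ≥0∞) * ((bq N d) ^ k * (1 - bq N d) ^ (n-k)) := meas_Ax_le d τ x
    _ = ENNReal.ofReal (∑ k ∈ Finset.range (m+1),
          (n.choose k : ℝ) * (p ^ k * (1-p) ^ (n-k))) := by
        rw [ENNReal.ofReal_sum_of_nonneg]
        · refine Finset.sum_congr rfl fun k _ => ?_
          rw [hq1, hq, ENNReal.ofReal_mul (by positivity), ENNReal.ofReal_mul (by positivity),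
            ENNReal.ofReal_pow hp0, ENNReal.ofReal_pow (by linarith), ENNReal.ofReal_natCast]
        · intro k _
          have : (0:ℝ) ≤ 1 - p := by linarith
          positivity
    _ ≤ _ := by
        apply ENNReal.ofReal_le_ofReal
        have := binom_tail n m p hp0 hp1 hm1 hmn hmnp
        calc ∑ k ∈ Finset.range (m+1), (n.choose k : ℝ) * (p ^ k * (1-p) ^ (n-k))
            ≤ ((m:ℝ)+1) * ((1-p) ^ (n-m) * (((n : ℝ) * p / m) ^ m * Real.exp m)) := by
              exact_mod_cast this
          _ = _ := by ring

lemma meas_all {s : Set (Sym2 (Fin N) → Bool)} : MeasurableSet s :=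
  (Set.toFinite s).measurableSet

lemma lowDeg_eq (ω : Sym2 (Fin N) → Bool) (τ d : ℝ) :
    lowDeg (graphOf ω) τ d =
      ↑(@Finset.filter _ (fun x => ((gdeg (graphOf ω) x : ℝ)) ≤ τ * d)
        (Classical.decPred _) univ) := by
  ext x
  simp [lowDeg]

lemma ncard_eq_sum (ω : Sym2 (Fin N) → Bool) (τ d : ℝ) :
    ((lowDeg (graphOf ω) τ d).ncard : ℝ≥0∞) =
      ∑ x : Fin N, (Ax τ d x).indicator (fun _ => 1) ω := by
  classical
  rw [lowDeg_eq, Set.ncard_coe_finset, Finset.card_filter]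
  push_cast
  refine Finset.sum_congr rfl fun x _ => ?_
  by_cases h : ((gdeg (graphOf ω) x : ℝ)) ≤ τ * d
  · rw [if_pos h]
    exact (Set.indicator_of_mem (show ω ∈ Ax τ d x from h) (fun _ => (1:ℝ≥0∞))).symm
  · rw [if_neg h]
    exact (Set.indicator_of_notMem (show ω ∉ Ax τ d x from h) (fun _ => (1:ℝ≥0∞))).symm

lemma markov (d τ M : ℝ) (hM : 0 < M) :
    erMeasure N d {ω | ¬ ((lowDeg (graphOf ω) τ d).ncard : ℝ) ≤ M}
      ≤ (∑ x : Fin N, erMeasure N d (Ax τ d x)) / ENNReal.ofReal M := by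
  classical
  set f : (Sym2 (Fin N) → Bool) → ℝ≥0∞ := fun ω => ((lowDeg (graphOf ω) τ d).ncard : ℝ≥0∞)
  have hmeas : Measurable f := fun _ _ => meas_all
  have hsub : {ω | ¬ ((lowDeg (graphOf ω) τ d).ncard : ℝ) ≤ M}
      ⊆ {ω | ENNReal.ofReal M ≤ f ω} := by
    intro ω hω
    simp only [Set.mem_setOf_eq, not_le] at hω ⊢
    calc ENNReal.ofReal M ≤ ENNReal.ofReal ((lowDeg (graphOf ω) τ d).ncard : ℝ) :=
          ENNReal.ofReal_le_ofReal (le_of_lt hω)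
      _ = f ω := ENNReal.ofReal_natCast _
  have hlint : ∫⁻ ω, f ω ∂(erMeasure N d) = ∑ x : Fin N, erMeasure N d (Ax τ d x) := by
    have : ∀ ω, f ω = ∑ x : Fin N, (Ax τ d x).indicator (fun _ => 1) ω := fun ω =>
      ncard_eq_sum ω τ d
    rw [lintegral_congr this, lintegral_finset_sum _ (fun x _ => fun _ _ => meas_all)]
    refine Finset.sum_congr rfl fun x _ => ?_
    exact lintegral_indicator_one meas_all
  calc erMeasure N d {ω | ¬ ((lowDeg (graphOf ω) τ d).ncard : ℝ) ≤ M}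
      ≤ erMeasure N d {ω | ENNReal.ofReal M ≤ f ω} := measure_mono hsub
    _ ≤ (∫⁻ ω, f ω ∂(erMeasure N d)) / ENNReal.ofReal M := by
        apply meas_ge_le_lintegral_div hmeas.aemeasurable
        · simpa using hM
        · exact ENNReal.ofReal_ne_top
    _ = _ := by rw [hlint]

lemma g_deriv {x : ℝ} (hx : 0 < x) :
    HasDerivAt (fun y : ℝ => y - y * Real.log y) (-Real.log x) x := by
  have h2 : HasDerivAt (fun y : ℝ => y * Real.log y) (Real.log x + 1) x := by
    have := (hasDerivAt_id x).mul (Real.hasDerivAt_log (ne_of_gt hx))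
    refine this.congr_deriv ?_
    rw [one_mul, id_eq, mul_inv_cancel₀ (ne_of_gt hx)]
  have := (hasDerivAt_id x).sub h2
  refine this.congr_deriv ?_
  ring

lemma g_mono {a b : ℝ} (ha : 0 < a) (hab : a ≤ b) (hb : b ≤ 1) :
    a - a * Real.log a ≤ b - b * Real.log b := by
  have key : MonotoneOn (fun y : ℝ => y - y * Real.log y) (Set.Icc a b) := by
    apply monotoneOn_of_deriv_nonneg (convex_Icc a b)
    · apply ContinuousOn.sub continuousOn_id
      apply ContinuousOn.mul continuousOn_id
      apply Real.continuousOn_log.mono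
      intro y hy
      exact ne_of_gt (lt_of_lt_of_le ha hy.1)
    · intro y hy
      rw [interior_Icc] at hy
      exact (g_deriv (lt_trans ha hy.1)).differentiableAt.differentiableWithinAt
    · intro y hy
      rw [interior_Icc] at hy
      rw [(g_deriv (lt_trans ha hy.1)).deriv]
      simp only [neg_nonneg]
      exact Real.log_nonpos (le_of_lt (lt_trans ha hy.1)) (le_trans (le_of_lt hy.2) hb)
  exact key (Set.mem_Icc.mpr ⟨le_refl a, hab⟩) (Set.mem_Icc.mpr ⟨hab, le_refl b⟩) hab

lemma RB_le (d τ ε : ℝ) (hτ0 : 0 < τ) (hτ1 : τ ≤ 1) (hg : -τ * Real.log τ + τ ≤ ε/2)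
    (hd0 : 0 < d) (hN2 : 2 ≤ N) (hdN : d ≤ N) (hm1 : 1 ≤ τ * d) (hτdN : τ * d ≤ (N:ℝ) - 1) :
    ((⌊τ*d⌋₊ : ℝ)+1) * ((1-d/N) ^ (N-1-⌊τ*d⌋₊) *
        ((((N-1:ℕ) : ℝ) * (d/N) / (⌊τ*d⌋₊ : ℝ)) ^ ⌊τ*d⌋₊ * Real.exp ⌊τ*d⌋₊))
      ≤ (τ*d+1) * Real.exp (ε/2 * d - d + (1+τ*d)*d/N) := by
  have hN1 : 1 ≤ N := le_trans one_le_two hN2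
  have hN0 : (0:ℝ) < N := by exact_mod_cast lt_of_lt_of_le zero_lt_one (by exact_mod_cast hN1)
  set m := ⌊τ*d⌋₊ with hmdef
  set p := d / N with hpdef
  have hτd0 : 0 < τ * d := lt_of_lt_of_le zero_lt_one hm1
  have hmr : (m:ℝ) ≤ τ * d := Nat.floor_le (le_of_lt hτd0)
  have hm1' : 1 ≤ m := Nat.le_floor (by exact_mod_cast hm1)
  have hmr1 : (1:ℝ) ≤ (m:ℝ) := by exact_mod_cast hm1'
  have hmr0 : (0:ℝ) < (m:ℝ) := lt_of_lt_of_le zero_lt_one hmr1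
  have hp0 : 0 < p := div_pos hd0 hN0
  have hp1 : p ≤ 1 := (div_le_one hN0).mpr hdN
  have hcastn : ((N-1 : ℕ) : ℝ) = (N:ℝ) - 1 := by
    push_cast [Nat.cast_sub hN1]; ring
  have hnm : m ≤ N - 1 := by
    have : (m:ℝ) ≤ ((N-1:ℕ) : ℝ) := by rw [hcastn]; linarith
    exact_mod_cast this
  have hcastnm : ((N-1-m : ℕ) : ℝ) = (N:ℝ) - 1 - (m:ℝ) := by
    rw [Nat.cast_sub hnm, hcastn]
  -- (ii) the (1-p) power
  have h1p : (1-p) ^ (N-1-m) ≤ Real.exp (-(((N:ℝ) - 1 - (m:ℝ)) * p)) := by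
    have hb : 1 - p ≤ Real.exp (-p) := by
      have := Real.add_one_le_exp (-p); linarith
    calc (1-p) ^ (N-1-m) ≤ (Real.exp (-p)) ^ (N-1-m) :=
          pow_le_pow_left₀ (by linarith) hb _
      _ = Real.exp (((N-1-m : ℕ):ℝ) * (-p)) := (Real.exp_nat_mul _ _).symm
      _ = Real.exp (-(((N:ℝ) - 1 - (m:ℝ)) * p)) := by rw [hcastnm]; ring_nf
  -- (iii) the middle power
  have hnp0 : 0 < ((N-1:ℕ):ℝ) * p := by
    apply mul_pos _ hp0
    rw [hcastn]; linarith
  have hmid : (((N-1:ℕ) : ℝ) * p / (m : ℝ)) ^ m * Real.exp m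
      ≤ Real.exp (ε/2 * d) := by
    have hx0 : 0 < ((N-1:ℕ) : ℝ) * p / (m : ℝ) := div_pos hnp0 hmr0
    have hpow : (((N-1:ℕ) : ℝ) * p / (m : ℝ)) ^ m
        = Real.exp ((m:ℝ) * Real.log (((N-1:ℕ) : ℝ) * p / (m : ℝ))) := by
      rw [Real.exp_nat_mul, Real.exp_log hx0]
    have hnpd : ((N-1:ℕ) : ℝ) * p ≤ d := by
      rw [hcastn, hpdef]
      rw [div_eq_mul_inv]
      have : ((N:ℝ) - 1) * (d * (N:ℝ)⁻¹) = d * (((N:ℝ)-1)/N) := by ring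
      rw [this]
      nlinarith [(div_le_one hN0).mpr (by linarith : (N:ℝ) - 1 ≤ (N:ℝ)), hd0]
    have hlog : Real.log (((N-1:ℕ) : ℝ) * p / (m : ℝ)) ≤ Real.log (d / (m:ℝ)) := by
      apply Real.log_le_log hx0
      gcongr
    have hlogs : Real.log ((m:ℝ)/d) = Real.log (m:ℝ) - Real.log d :=
      Real.log_div (ne_of_gt hmr0) (ne_of_gt hd0)
    have hlogdm : Real.log (d/(m:ℝ)) = Real.log d - Real.log (m:ℝ) :=
      Real.log_div (ne_of_gt hd0) (ne_of_gt hmr0)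
    have hkey : (m:ℝ) * Real.log (d/(m:ℝ)) + (m:ℝ) ≤ ε/2 * d := by
      have hgm := g_mono (show 0 < (m:ℝ)/d from div_pos hmr0 hd0)
        (show (m:ℝ)/d ≤ τ from (div_le_iff₀ hd0).mpr (by linarith)) hτ1
      have hmul := mul_le_mul_of_nonneg_left hgm (le_of_lt hd0)
      have h2 : d * (τ - τ * Real.log τ) ≤ d * (ε/2) := by
        apply mul_le_mul_of_nonneg_left _ (le_of_lt hd0)
        linarith [hg]
      have hid : d * ((m:ℝ)/d - (m:ℝ)/d * Real.log ((m:ℝ)/d))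
          = (m:ℝ) * Real.log (d/(m:ℝ)) + (m:ℝ) := by
        rw [hlogs, hlogdm]
        field_simp
        ring
      linarith [hmul, h2, hid]
    calc (((N-1:ℕ) : ℝ) * p / (m : ℝ)) ^ m * Real.exp m
        = Real.exp ((m:ℝ) * Real.log (((N-1:ℕ):ℝ) * p / (m:ℝ)) + m) := by
          rw [hpow, ← Real.exp_add]
      _ ≤ Real.exp (ε/2 * d) := by
          apply Real.exp_le_exp.mpr
          have hstep : (m:ℝ) * Real.log (((N-1:ℕ):ℝ) * p / (m:ℝ))
              ≤ (m:ℝ) * Real.log (d/(m:ℝ)) :=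
            mul_le_mul_of_nonneg_left hlog (le_of_lt hmr0)
          linarith [hkey]
  -- (iv) exponent comparison
  have hiv : -(((N:ℝ) - 1 - (m:ℝ)) * p) ≤ -d + (1+τ*d)*d/N := by
    have h1 : (N:ℝ) - 1 - τ*d ≤ (N:ℝ) - 1 - (m:ℝ) := by linarith
    have h2 : ((N:ℝ) - 1 - τ*d) * p ≤ ((N:ℝ) - 1 - (m:ℝ)) * p :=
      mul_le_mul_of_nonneg_right h1 (le_of_lt hp0)
    have hid : ((N:ℝ) - 1 - τ*d) * p = d - (1+τ*d)*d/N := by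
      rw [hpdef]
      field_simp
      ring
    linarith
  have hnn1 : (0:ℝ) ≤ (1-p) ^ (N-1-m) := pow_nonneg (by linarith) _
  have hnn2 : (0:ℝ) ≤ (((N-1:ℕ):ℝ) * p / (m:ℝ)) ^ m * Real.exp m := by positivity
  calc ((m:ℝ)+1) * ((1-p) ^ (N-1-m) * ((((N-1:ℕ):ℝ) * p / (m:ℝ)) ^ m * Real.exp m))
      ≤ (τ*d+1) * (Real.exp (-(((N:ℝ)-1-(m:ℝ)) * p)) * Real.exp (ε/2 * d)) := by
        apply mul_le_mul (by linarith) _ (mul_nonneg hnn1 hnn2) (by linarith)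
        exact mul_le_mul h1p hmid hnn2 (Real.exp_nonneg _)
    _ = (τ*d+1) * Real.exp (-(((N:ℝ)-1-(m:ℝ))*p) + ε/2*d) := by
        rw [← Real.exp_add]
    _ ≤ (τ*d+1) * Real.exp (ε/2 * d - d + (1+τ*d)*d/N) := by
        apply mul_le_mul_of_nonneg_left _ (by linarith)
        apply Real.exp_le_exp.mpr
        linarith

lemma erProb (N : ℕ) (dv : ℝ) : IsProbabilityMeasure (erMeasure N dv) := by
  unfold erMeasure
  infer_instance

end ERW
end Aux

set_option maxHeartbeats 1600000 in
/-- With high probability `|𝒱| ≤ N^(1 - 1/(1+t*))`. -/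
theorem stmt4 (t : ℕ) (ht : 1 ≤ t) (ε τ : ℝ) (hε1 : 0 < ε) (hε2 : ε < 1 / 4)
    (hτ1 : 0 < τ) (hτ2 : τ < 1) (hτ : -τ * Real.log τ + τ ≤ ε / 2) (d : ℕ → ℝ)
    (hd : ∀ N : ℕ, (1 + ε) * Real.log N / (t + 1) ≤ d N ∧ d N ≤ (1 - ε) * Real.log N / t) :
    Tendsto (fun N : ℕ => ER.erMeasure N (d N)
      {ω | ((ER.lowDeg (ER.graphOf ω) τ (d N)).ncard : ℝ) ≤
        (N : ℝ) ^ ((1 : ℝ) - 1 / (1 + (t : ℝ)))})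
      atTop (𝓝 1) := by
  classical
  have htR : (0:ℝ) < (t:ℝ) + 1 := by positivity
  set c : ℝ := ε / (8 * ((t:ℝ)+1)) with hcdef
  have hc0 : 0 < c := by positivity
  set δ : ℝ := ε / (16 * ((t:ℝ)+1)) with hδdef
  have hδ0 : 0 < δ := by positivity
  have hbad : ∀ᶠ N : ℕ in atTop,
      ER.erMeasure N (d N) {ω | ¬ (((ER.lowDeg (ER.graphOf ω) τ (d N)).ncard : ℝ) ≤
        (N : ℝ) ^ ((1 : ℝ) - 1 / (1 + (t : ℝ))))}
      ≤ ENNReal.ofReal (Real.exp (-c * Real.log N)) := by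
    have hlogT : Tendsto (fun N : ℕ => Real.log N) atTop atTop :=
      Real.tendsto_log_atTop.comp tendsto_natCast_atTop_atTop
    have hfrac : Tendsto (fun N : ℕ => (1 + Real.log N)/(N:ℝ)) atTop (𝓝 0) := by
      have h1 : Tendsto (fun x : ℝ => Real.log x / x) atTop (𝓝 0) := by
        have := Real.tendsto_pow_log_div_mul_add_atTop 1 0 1 one_ne_zero
        simpa using this
      have h2 : Tendsto (fun N : ℕ => Real.log N / (N:ℝ)) atTop (𝓝 0) :=
        h1.comp tendsto_natCast_atTop_atTop
      have h3 : Tendsto (fun N : ℕ => 1/(N:ℝ)) atTop (𝓝 0) :=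
        tendsto_one_div_atTop_nhds_zero_nat
      have h4 := h3.add h2
      simp only [add_zero] at h4
      apply h4.congr
      intro N
      rw [add_div]
    filter_upwards [eventually_ge_atTop 2,
      hlogT.eventually_ge_atTop (((t:ℝ)+1)/(τ*(1+ε))),
      hlogT.eventually_ge_atTop (2/δ^2),
      hfrac.eventually_lt_const hδ0,
      hfrac.eventually_lt_const (show (0:ℝ) < 1 - τ by linarith)]
      with N hN2 hK1 hK2 hfδ hfτ
    set L := Real.log N with hLdef
    obtain ⟨hd_lb, hd_ub⟩ := hd N
    have hN1 : 1 ≤ N := le_trans one_le_two hN2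
    have hN0 : (0:ℝ) < (N:ℝ) := by exact_mod_cast Nat.lt_of_lt_of_le Nat.zero_lt_one hN1
    have hL0 : 0 < L := Real.log_pos (by exact_mod_cast hN2)
    have hd0 : 0 < d N := lt_of_lt_of_le (by positivity) hd_lb
    have htR1 : (1:ℝ) ≤ (t:ℝ) := by exact_mod_cast ht
    have hdL : d N ≤ L := by
      refine le_trans hd_ub ?_
      calc (1-ε)*L/(t:ℝ) ≤ (1-ε)*L := div_le_self (by nlinarith) htR1
        _ ≤ L := by nlinarith
    have hLN1 : L ≤ (N:ℝ) - 1 := Real.log_le_sub_one_of_pos hN0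
    have hdN' : d N ≤ (N:ℝ) := by linarith
    have hτd1 : 1 ≤ τ * d N := by
      have hid : (1+ε)*((((t:ℝ)+1)/(τ*(1+ε))))/((t:ℝ)+1) = 1/τ := by
        field_simp
      have h1τ : 1/τ ≤ d N := by
        calc 1/τ = (1+ε)*((((t:ℝ)+1)/(τ*(1+ε))))/((t:ℝ)+1) := hid.symm
          _ ≤ (1+ε)*L/((t:ℝ)+1) := by gcongr
          _ ≤ d N := hd_lb
      rw [div_le_iff₀ hτ1] at h1τ
      calc (1:ℝ) ≤ d N * τ := h1τ
        _ = τ * d N := mul_comm _ _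
    have hτdle : τ * d N ≤ d N := by nlinarith
    have hτdN : τ * d N ≤ (N:ℝ) - 1 := by linarith
    have hττ : τ ≤ ((N:ℝ)-1)/(N:ℝ) := by
      have h1N : (1:ℝ)/(N:ℝ) < 1 - τ := by
        refine lt_of_le_of_lt ?_ hfτ
        gcongr
        linarith
      rw [le_div_iff₀ hN0]
      have := (div_lt_iff₀ hN0).mp h1N
      nlinarith
    have hm1' : 1 ≤ ⌊τ * d N⌋₊ := Nat.le_floor (by exact_mod_cast hτd1)
    have hcastn : ((N-1:ℕ):ℝ) = (N:ℝ) - 1 := by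
      push_cast [Nat.cast_sub hN1]
      ring
    have hmnp : (⌊τ * d N⌋₊ : ℝ) ≤ ((N-1:ℕ):ℝ) * (d N/(N:ℝ)) := by
      have h1 : (⌊τ * d N⌋₊ : ℝ) ≤ τ * d N :=
        Nat.floor_le (le_of_lt (mul_pos hτ1 hd0))
      have h2 : τ * d N ≤ (((N:ℝ)-1)/(N:ℝ)) * d N :=
        mul_le_mul_of_nonneg_right hττ (le_of_lt hd0)
      rw [hcastn]
      calc (⌊τ * d N⌋₊ : ℝ) ≤ (((N:ℝ)-1)/(N:ℝ)) * d N := le_trans h1 h2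
        _ = ((N:ℝ)-1) * (d N/(N:ℝ)) := by ring
    haveI : IsProbabilityMeasure (ER.erMeasure N (d N)) := ERW.erProb N (d N)
    have hMpos : (0:ℝ) < (N:ℝ) ^ ((1:ℝ) - 1/(1+(t:ℝ))) := Real.rpow_pos_of_pos hN0 _
    set m := ⌊τ * d N⌋₊ with hmdef
    set RB : ℝ := ((m : ℝ)+1) * ((1-(d N)/(N:ℝ)) ^ (N-1-m) *
        ((((N-1:ℕ) : ℝ) * ((d N)/(N:ℝ)) / (m : ℝ)) ^ m * Real.exp m)) with hRB
    have hAx : ∀ x : Fin N, ER.erMeasure N (d N) (ERW.Ax τ (d N) x) ≤ ENNReal.ofReal RB :=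
      fun x => ERW.meas_Ax_le_real (d N) τ x (le_of_lt hd0) hdN' hN1 hm1' hmnp
    -- the real-valued final bound
    have hRB2 : RB ≤ (τ * d N+1) *
        Real.exp (ε/2 * d N - d N + (1+τ* d N)*(d N)/(N:ℝ)) :=
      ERW.RB_le (d N) τ ε hτ1 (le_of_lt hτ2) hτ hd0 hN2 hdN' hτd1 hτdN
    have hRBnn : 0 ≤ RB := by
      rw [hRB]
      have hp1 : d N / (N:ℝ) ≤ 1 := (div_le_one hN0).mpr hdN'
      have h1p : (0:ℝ) ≤ 1 - d N / (N:ℝ) := by linarith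
      positivity
    clear_value RB
    have hδL : 2 ≤ δ^2 * L := by
      rw [div_le_iff₀ (by positivity)] at hK2
      linarith [hK2]
    have hLexp : L + 1 ≤ Real.exp (δ*L) := by
      have hq := Real.quadratic_le_exp_of_nonneg (by positivity : (0:ℝ) ≤ δ*L)
      nlinarith [hq, hδL, hL0, hδ0]
    have hpref : τ * d N + 1 ≤ Real.exp (δ*L) := by
      refine le_trans ?_ hLexp
      linarith
    have hE : ε/2 * d N - d N + (1+τ* d N)*(d N)/(N:ℝ)
        ≤ -((1+ε/4) * (L/((t:ℝ)+1))) + δ*L := by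
      have hA0 : 0 ≤ L/((t:ℝ)+1) := by positivity
      have hd_lb' : (1+ε) * (L/((t:ℝ)+1)) ≤ d N := by
        rw [← mul_div_assoc]
        exact hd_lb
      have hpart1 : ε/2 * d N - d N ≤ -((1+ε/4) * (L/((t:ℝ)+1))) := by
        have hnum : (1:ℝ)+ε/4 ≤ (1-ε/2)*(1+ε) := by nlinarith
        have h1 : (1+ε/4) * (L/((t:ℝ)+1)) ≤ ((1-ε/2)*(1+ε)) * (L/((t:ℝ)+1)) :=
          mul_le_mul_of_nonneg_right hnum hA0
        have h2 : ((1-ε/2)*(1+ε)) * (L/((t:ℝ)+1)) ≤ (1-ε/2) * d N := by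
          rw [mul_assoc]
          apply mul_le_mul_of_nonneg_left hd_lb' (by linarith)
        linarith
      have hpart2 : (1+τ* d N)*(d N)/(N:ℝ) ≤ δ*L := by
        have h1 : (1+τ* d N)*(d N) ≤ (1+L)*L := by
          nlinarith [mul_le_mul (le_trans hτdle hdL) hdL (le_of_lt hd0) (le_of_lt hL0)]
        have h2 : (1+τ* d N)*(d N)/(N:ℝ) ≤ (1+L)*L/(N:ℝ) :=
          (div_le_div_iff_of_pos_right hN0).mpr h1
        have h3 : (1+L)*L/(N:ℝ) = ((1+L)/(N:ℝ))*L := by ring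
        have h4 : ((1+L)/(N:ℝ))*L ≤ δ*L :=
          mul_le_mul_of_nonneg_right (le_of_lt hfδ) (le_of_lt hL0)
        linarith
      linarith
    have hfinal : (N:ℝ) * RB / ((N : ℝ) ^ ((1 : ℝ) - 1 / (1 + (t : ℝ))))
        ≤ Real.exp (-c * L) := by
      have hNM : (N:ℝ) / ((N:ℝ) ^ ((1:ℝ) - 1/(1+(t:ℝ)))) = (N:ℝ) ^ ((1:ℝ)/(1+(t:ℝ))) := by
        rw [div_eq_iff (ne_of_gt hMpos), ← Real.rpow_add hN0,
          show (1:ℝ)/(1+(t:ℝ)) + ((1:ℝ) - 1/(1+(t:ℝ))) = 1 by ring, Real.rpow_one]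
      have hNMe : (N:ℝ) ^ ((1:ℝ)/(1+(t:ℝ))) = Real.exp (L * (1/(1+(t:ℝ)))) := by
        rw [Real.rpow_def_of_pos hN0]
      calc (N:ℝ) * RB / ((N : ℝ) ^ ((1 : ℝ) - 1 / (1 + (t : ℝ))))
          = ((N:ℝ) / ((N : ℝ) ^ ((1 : ℝ) - 1 / (1 + (t : ℝ))))) * RB := by ring
        _ ≤ ((N:ℝ) / ((N : ℝ) ^ ((1 : ℝ) - 1 / (1 + (t : ℝ))))) *
            ((τ * d N+1) * Real.exp (ε/2 * d N - d N + (1+τ* d N)*(d N)/(N:ℝ))) := by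
            apply mul_le_mul_of_nonneg_left hRB2 (by positivity)
        _ ≤ Real.exp (L * (1/(1+(t:ℝ)))) *
            (Real.exp (δ*L) * Real.exp (-((1+ε/4) * (L/((t:ℝ)+1))) + δ*L)) := by
            rw [hNM, hNMe]
            apply mul_le_mul_of_nonneg_left _ (Real.exp_nonneg _)
            apply mul_le_mul hpref (Real.exp_le_exp.mpr hE) (Real.exp_nonneg _) (Real.exp_nonneg _)
        _ = Real.exp (L * (1/(1+(t:ℝ))) + (δ*L + (-((1+ε/4) * (L/((t:ℝ)+1))) + δ*L))) := by
            rw [← Real.exp_add, ← Real.exp_add]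
        _ ≤ Real.exp (-c * L) := by
            apply Real.exp_le_exp.mpr
            have hzero : L * (1/(1+(t:ℝ))) + (δ*L + (-((1+ε/4) * (L/((t:ℝ)+1))) + δ*L))
                = -c * L := by
              rw [hδdef, hcdef]
              field_simp
              ring
            linarith [hzero.le]
    -- ENNReal chain
    calc ER.erMeasure N (d N) {ω | ¬ (((ER.lowDeg (ER.graphOf ω) τ (d N)).ncard : ℝ) ≤
          (N : ℝ) ^ ((1 : ℝ) - 1 / (1 + (t : ℝ))))}
        ≤ (∑ x : Fin N, ER.erMeasure N (d N) (ERW.Ax τ (d N) x)) /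
            ENNReal.ofReal ((N : ℝ) ^ ((1 : ℝ) - 1 / (1 + (t : ℝ)))) :=
          ERW.markov (d N) τ _ hMpos
      _ ≤ ((N:ℕ) * ENNReal.ofReal RB) /
            ENNReal.ofReal ((N : ℝ) ^ ((1 : ℝ) - 1 / (1 + (t : ℝ)))) := by
          apply ENNReal.div_le_div_right
          calc ∑ x : Fin N, ER.erMeasure N (d N) (ERW.Ax τ (d N) x)
              ≤ ∑ _x : Fin N, ENNReal.ofReal RB := Finset.sum_le_sum (fun x _ => hAx x)
            _ = (N:ℕ) * ENNReal.ofReal RB := by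
                rw [Finset.sum_const, Finset.card_univ, Fintype.card_fin, nsmul_eq_mul]
      _ = ENNReal.ofReal ((N:ℝ) * RB / ((N : ℝ) ^ ((1 : ℝ) - 1 / (1 + (t : ℝ))))) := by
          rw [ENNReal.ofReal_div_of_pos hMpos, ENNReal.ofReal_mul (by positivity),
            ENNReal.ofReal_natCast]
      _ ≤ ENNReal.ofReal (Real.exp (-c * L)) := ENNReal.ofReal_le_ofReal hfinal
  -- limit of the bound
  have hbound : Tendsto (fun N : ℕ => ENNReal.ofReal (Real.exp (-c * Real.log N)))
      atTop (𝓝 0) := by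
    have h1 : Tendsto (fun N : ℕ => Real.exp (-c * Real.log N)) atTop (𝓝 0) := by
      apply Real.tendsto_exp_atBot.comp
      exact (Real.tendsto_log_atTop.comp tendsto_natCast_atTop_atTop).const_mul_atTop_of_neg
        (by linarith)
    have h2 := ENNReal.tendsto_ofReal h1
    simpa using h2
  have hbadlim : Tendsto (fun N : ℕ =>
      ER.erMeasure N (d N) {ω | ¬ (((ER.lowDeg (ER.graphOf ω) τ (d N)).ncard : ℝ) ≤
        (N : ℝ) ^ ((1 : ℝ) - 1 / (1 + (t : ℝ))))}) atTop (𝓝 0) :=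
    tendsto_of_tendsto_of_tendsto_of_le_of_le' tendsto_const_nhds hbound
      (Eventually.of_forall fun N => zero_le) hbad
  have hgood : ∀ N : ℕ, ER.erMeasure N (d N)
      {ω | ((ER.lowDeg (ER.graphOf ω) τ (d N)).ncard : ℝ) ≤
        (N : ℝ) ^ ((1 : ℝ) - 1 / (1 + (t : ℝ)))}
      = 1 - ER.erMeasure N (d N) {ω | ¬ (((ER.lowDeg (ER.graphOf ω) τ (d N)).ncard : ℝ) ≤
        (N : ℝ) ^ ((1 : ℝ) - 1 / (1 + (t : ℝ))))} := by
    intro N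
    haveI : IsProbabilityMeasure (ER.erMeasure N (d N)) := ERW.erProb N (d N)
    have h := prob_compl_eq_one_sub (μ := ER.erMeasure N (d N))
      (s := {ω | ¬ (((ER.lowDeg (ER.graphOf ω) τ (d N)).ncard : ℝ) ≤
        (N : ℝ) ^ ((1 : ℝ) - 1 / (1 + (t : ℝ))))}) ERW.meas_all
    rw [← h]
    congr 1
    ext ω
    simp
  have hT := ENNReal.Tendsto.sub (tendsto_const_nhds (x := (1:ENNReal))) hbadlim
    (Or.inl (by simp))
  simp only [tsub_zero] at hT
  exact Filter.Tendsto.congr (fun N => (hgood N).symm) hT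
end
end

section
/- Let t* ≥ 1, τ ∈ (0,1), 𝒞 > 0, and let G be a finite graph on vertex set [N] with d > 0 sufficiently large (depending on τ and 𝒞). Set 𝒱 = {x : D_x ≤ τ d} and assume: (i) every vertex has degree at most 𝒞d; (ii) every connected component U of ∪_{x∈𝒱} B₂(x) satisfies |𝒱 ∩ U| ≤ t*; (iii) the induced subgraph of G on ∪_{x∈𝒱} B₃(x) is a forest. Then there is a constant C > 0 depending only on τ and 𝒞 such that for any connected component U of ∪_{x∈𝒱} B₂(x), any eigenvalue λ ∈ [0, τd/2] of L(G)|_U, and any associated normalized eigenvector u, one has ‖u|_{∂U}‖ ≤ C/d, where ∂U = {x ∈ U : (x,y) is an edge of G for some y ∉ U} and ‖·‖ is the ℓ² norm. -/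
open MeasureTheory Filter Real Topology

noncomputable section

section AuxGraph

set_option linter.unusedSectionVars false in
section
variable {V : Type*} [DecidableEq V] {G : SimpleGraph V}

lemma aux_dist_support_le {r v x : V} (w : G.Walk r v) (hx : x ∈ w.support) :
    G.dist r x ≤ w.length :=
  le_trans (SimpleGraph.dist_le (w.takeUntil x hx)) (SimpleGraph.Walk.length_takeUntil_le w hx)

lemma aux_dist_adj_le {r a b : V} (hra : G.Reachable r a) (hab : G.Adj a b) :
    G.dist r b ≤ G.dist r a + 1 := by
  obtain ⟨w, hw⟩ := hra.exists_walk_length_eq_dist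
  have := SimpleGraph.dist_le (w.concat hab)
  rwa [SimpleGraph.Walk.length_concat, hw] at this

lemma aux_exists_parent {r x : V} (h : G.Reachable r x) (hne : x ≠ r) :
    ∃ y, G.Adj y x ∧ G.dist r y + 1 = G.dist r x := by
  obtain ⟨w, hw⟩ := h.symm.exists_walk_length_eq_dist
  cases w with
  | nil => exact absurd rfl hne
  | cons h' q =>
    rename_i y
    refine ⟨y, h'.symm, ?_⟩
    have hry : G.Reachable r y := (h.trans h'.reachable)
    have h1 : G.dist r y ≤ q.length := by
      rw [SimpleGraph.dist_comm]; exact SimpleGraph.dist_le q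
    have h2 : G.dist r x ≤ G.dist r y + 1 := aux_dist_adj_le hry h'.symm
    have h3 : q.length + 1 = G.dist r x := by
      rw [SimpleGraph.dist_comm (G := G) (u := r) (v := x)]
      simpa [SimpleGraph.Walk.length_cons] using hw
    omega

lemma aux_concat_isPath {r a b : V} {w : G.Walk r a} (hw : w.IsPath) (hab : G.Adj a b)
    (hb : b ∉ w.support) : (w.concat hab).IsPath := by
  rw [← SimpleGraph.Walk.isPath_reverse_iff, SimpleGraph.Walk.reverse_concat]
  exact hw.reverse.cons (by simpa [SimpleGraph.Walk.support_reverse] using hb)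

lemma aux_adj_dist_ne (hac : G.IsAcyclic) {r a b : V} (hra : G.Reachable r a)
    (hab : G.Adj a b) : G.dist r a ≠ G.dist r b := by
  intro heq
  obtain ⟨pa, hpa, hlen⟩ := hra.exists_path_of_dist
  have hbs : b ∉ pa.support := by
    intro hb
    have h1 : G.dist r b ≤ (pa.takeUntil b hb).length := SimpleGraph.dist_le _
    have h2 : (pa.takeUntil b hb).length + (pa.dropUntil b hb).length = pa.length := by
      rw [← SimpleGraph.Walk.length_append, SimpleGraph.Walk.take_spec]
    have h3 : (pa.dropUntil b hb).length ≠ 0 := fun h0 =>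
      hab.ne' (SimpleGraph.Walk.eq_of_length_eq_zero h0)
    omega
  have hpath2 : (pa.concat hab).IsPath := aux_concat_isPath hpa hab hbs
  obtain ⟨pb, hpb, hlenb⟩ := (hra.trans hab.reachable).exists_path_of_dist
  have heqp : (⟨pa.concat hab, hpath2⟩ : G.Path r b) = ⟨pb, hpb⟩ :=
    SimpleGraph.isAcyclic_iff_path_unique.mp hac _ _
  have hwalk : pa.concat hab = pb := congrArg Subtype.val heqp
  have := congrArg SimpleGraph.Walk.length hwalk
  rw [SimpleGraph.Walk.length_concat] at this
  omega

lemma aux_parent_unique (hac : G.IsAcyclic) {r a y b : V}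
    (hry : G.Reachable r y) (hrb : G.Reachable r b)
    (hya : G.Adj y a) (hba : G.Adj b a)
    (h1 : G.dist r y + 1 = G.dist r a) (h2 : G.dist r b + 1 = G.dist r a) : y = b := by
  obtain ⟨py, hpy, hly⟩ := hry.exists_path_of_dist
  obtain ⟨pb, hpb, hlb⟩ := hrb.exists_path_of_dist
  have hay : a ∉ py.support := fun h => by
    have := aux_dist_support_le py h
    omega
  have hab' : a ∉ pb.support := fun h => by
    have := aux_dist_support_le pb h
    omega
  have hp1 : (py.concat hya).IsPath := aux_concat_isPath hpy hya hay
  have hp2 : (pb.concat hba).IsPath := aux_concat_isPath hpb hba hab'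
  have heqp : (⟨py.concat hya, hp1⟩ : G.Path r a) = ⟨pb.concat hba, hp2⟩ :=
    SimpleGraph.isAcyclic_iff_path_unique.mp hac _ _
  have hwalk : py.concat hya = pb.concat hba := congrArg Subtype.val heqp
  have hrev := congrArg SimpleGraph.Walk.reverse hwalk
  rw [SimpleGraph.Walk.reverse_concat, SimpleGraph.Walk.reverse_concat] at hrev
  have hsup := congrArg SimpleGraph.Walk.support hrev
  rw [SimpleGraph.Walk.support_cons, SimpleGraph.Walk.support_cons,
    SimpleGraph.Walk.support_eq_cons py.reverse, SimpleGraph.Walk.support_eq_cons pb.reverse]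
    at hsup
  simp only [List.cons.injEq] at hsup
  exact hsup.2.1

lemma aux_exists_parent_map (G : SimpleGraph V) (hac : G.IsAcyclic) :
    ∃ p : V → V, (∀ x, p x ≠ x → G.Adj (p x) x) ∧
      (∀ a b, G.Adj a b → p a = b ∨ p b = a) := by
  classical
  set root : V → V := fun x => (G.connectedComponentMk x).out with hroot
  have hreach : ∀ x, G.Reachable (root x) x := fun x =>
    SimpleGraph.ConnectedComponent.eq.mp ((G.connectedComponentMk x).out_eq)
  have hrooteq : ∀ a b, G.Adj a b → root a = root b := by
    intro a b hab
    simp only [hroot]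
    rw [SimpleGraph.ConnectedComponent.sound hab.reachable]
  choose! y hy1 hy2 using fun (x : V) (h : x ≠ root x) => aux_exists_parent (hreach x) h
  refine ⟨fun x => if h : x = root x then x else y x, ?_, ?_⟩
  · intro x hx
    dsimp only at hx ⊢
    by_cases h : x = root x
    · rw [dif_pos h] at hx; exact absurd rfl hx
    · rw [dif_neg h]; exact hy1 x h
  · intro a b hab
    have hr := hrooteq a b hab
    have hne := aux_adj_dist_ne hac (hreach a) hab
    have hle1 : G.dist (root a) b ≤ G.dist (root a) a + 1 := aux_dist_adj_le (hreach a) hab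
    have hle2 : G.dist (root a) a ≤ G.dist (root a) b + 1 :=
      aux_dist_adj_le (hr ▸ hreach b) hab.symm
    rcases Nat.lt_or_ge (G.dist (root a) b) (G.dist (root a) a) with hlt | hge
    · left
      have hda : G.dist (root a) b + 1 = G.dist (root a) a := by omega
      have hane : a ≠ root a := by
        intro h
        rw [← h] at hda
        rw [SimpleGraph.dist_self (G := G)] at hda
        omega
      have h1 := hy1 a hane
      have h2 := hy2 a hane
      have hyb : y a = b := by
        refine aux_parent_unique hac ?_ ?_ h1 hab.symm h2 hda
        · exact (hreach a).trans (h1.symm.reachable)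
        · exact hr ▸ hreach b
      dsimp only; rw [dif_neg hane]; exact hyb
    · right
      have hdb : G.dist (root b) a + 1 = G.dist (root b) b := by
        rw [← hr]; omega
      have hbne : b ≠ root b := by
        intro h
        rw [← h] at hdb
        rw [SimpleGraph.dist_self (G := G)] at hdb
        omega
      have h1 := hy1 b hbne
      have h2 := hy2 b hbne
      have hyb : y b = a := by
        refine aux_parent_unique hac ?_ ?_ h1 hab ?_ hdb
        · exact (hreach b).trans (h1.symm.reachable)
        · exact hr ▸ hreach a
        · exact h2
      dsimp only; rw [dif_neg hbne]; exact hyb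

end

set_option linter.unusedSectionVars false in
set_option maxHeartbeats 1000000 in
section
variable {V : Type*} [Fintype V] [DecidableEq V]

lemma aux_glap_apply (G : SimpleGraph V) [DecidableRel G.Adj] (a b : V) :
    ER.glap G a b = (if a = b then ((G.neighborSet a).ncard : ℝ) else 0)
      - (if G.Adj a b then 1 else 0) := by
  have hdeg : ∀ (inst : Fintype (G.neighborSet a)),
      (@SimpleGraph.degree V G a inst : ℝ) = ((G.neighborSet a).ncard : ℝ) := by
    intro inst
    norm_cast
    rw [← SimpleGraph.card_neighborSet_eq_degree, ← Nat.card_eq_fintype_card,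
      Nat.card_coe_set_eq]
  simp only [ER.glap, SimpleGraph.lapMatrix, Matrix.sub_apply, SimpleGraph.degMatrix,
    Matrix.diagonal_apply, SimpleGraph.adjMatrix_apply]
  by_cases hab : a = b <;> by_cases hadj : G.Adj a b <;>
    simp [hab, hadj, hdeg]

lemma aux_BF (G : SimpleGraph V) [DecidableRel G.Adj] (A3 : Set V)
    (hac : (SimpleGraph.induce A3 G).IsAcyclic)
    (S : Finset V) (hS : ↑S ⊆ A3) (D : ℝ)
    (hdeg : ∀ z : V, ((G.neighborSet z).ncard : ℝ) ≤ D)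
    (f g : V → ℝ) (hf : ∀ x, 0 ≤ f x) (hg : ∀ x, 0 ≤ g x) :
    ∑ x ∈ S, ∑ y ∈ S, (if G.Adj x y then f x * g y else 0) ≤
      2 * Real.sqrt D * (Real.sqrt (∑ x ∈ S, f x ^ 2) * Real.sqrt (∑ x ∈ S, g x ^ 2)) := by
  classical
  obtain ⟨p, hpadj, hpcov⟩ := aux_exists_parent_map (SimpleGraph.induce A3 G) hac
  set pr : V → V := fun z => if h : z ∈ A3 then (p ⟨z, h⟩ : V) else z with hprdef
  have hprop2 : ∀ x y, x ∈ A3 → y ∈ A3 → G.Adj x y → pr x = y ∨ pr y = x := by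
    intro x y hx hy hxy
    have hadj' : (SimpleGraph.induce A3 G).Adj ⟨x, hx⟩ ⟨y, hy⟩ := by
      simp [SimpleGraph.comap_adj, hxy]
    have hex : pr x = ↑(p ⟨x, hx⟩) := dif_pos hx
    have hey : pr y = ↑(p ⟨y, hy⟩) := dif_pos hy
    rcases hpcov _ _ hadj' with h | h
    · left; rw [hex, h]
    · right; rw [hey, h]
  have hterm : ∀ f g : V → ℝ, (∀ x, 0 ≤ f x) → (∀ x, 0 ≤ g x) →
      ∑ x ∈ S, ∑ y ∈ S, (if G.Adj x y ∧ pr x = y then f x * g y else 0) ≤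
        Real.sqrt D * (Real.sqrt (∑ x ∈ S, f x ^ 2) * Real.sqrt (∑ x ∈ S, g x ^ 2)) := by
    intro f g hf hg
    set h : V → ℝ := fun x => if pr x ∈ S ∧ G.Adj x (pr x) then g (pr x) else 0 with hhdef
    have hhnn : ∀ x, 0 ≤ h x := by
      intro x; rw [hhdef]; dsimp only
      split_ifs with h1
      · exact hg _
      · exact le_refl 0
    have hinner : ∀ x ∈ S,
        ∑ y ∈ S, (if G.Adj x y ∧ pr x = y then f x * g y else 0) = f x * h x := by
      intro x hx
      have e1 : ∀ y ∈ S, (if G.Adj x y ∧ pr x = y then f x * g y else 0)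
          = if y = pr x then (if G.Adj x y then f x * g y else 0) else 0 := by
        intro y hy
        by_cases h1 : y = pr x
        · by_cases h2 : G.Adj x y <;> simp [h1, h2, eq_comm]
        · have hcc : ¬(G.Adj x y ∧ pr x = y) := fun hc => h1 hc.2.symm
          simp [h1, hcc]
      rw [Finset.sum_congr rfl e1,
        Finset.sum_ite_eq' S (pr x) (fun y => if G.Adj x y then f x * g y else 0)]
      by_cases h1 : pr x ∈ S <;> by_cases h2 : G.Adj x (pr x) <;>
        simp [hhdef, h1, h2]
    have hsq : ∑ x ∈ S, h x ^ 2 ≤ D * ∑ z ∈ S, g z ^ 2 := by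
      have e1 : ∀ x ∈ S, h x ^ 2
          = ∑ z ∈ S, (if ((pr x ∈ S ∧ G.Adj x (pr x)) ∧ pr x = z) then g z ^ 2 else 0) := by
        intro x hx
        have e2 : ∀ z ∈ S, (if ((pr x ∈ S ∧ G.Adj x (pr x)) ∧ pr x = z) then g z ^ 2 else 0)
            = if z = pr x then (if pr x ∈ S ∧ G.Adj x (pr x) then g (pr x) ^ 2 else 0) else 0 := by
          intro z hz
          by_cases h1 : z = pr x
          · subst h1
            by_cases h2 : pr x ∈ S ∧ G.Adj x (pr x) <;> simp [h2]
          · have hcc : ¬((pr x ∈ S ∧ G.Adj x (pr x)) ∧ pr x = z) := fun hc => h1 hc.2.symm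
            simp [h1, hcc]
        rw [Finset.sum_congr rfl e2,
          Finset.sum_ite_eq' S (pr x)
            (fun z => if pr x ∈ S ∧ G.Adj x (pr x) then g (pr x) ^ 2 else 0)]
        by_cases h1 : pr x ∈ S <;> by_cases h2 : G.Adj x (pr x) <;>
          simp [hhdef, h1, h2]
      rw [Finset.sum_congr rfl e1, Finset.sum_comm]
      have e3 : ∀ z ∈ S,
          ∑ x ∈ S, (if ((pr x ∈ S ∧ G.Adj x (pr x)) ∧ pr x = z) then g z ^ 2 else 0)
            ≤ D * g z ^ 2 := by
        intro z hz
        rw [← Finset.sum_filter, Finset.sum_const, nsmul_eq_mul]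
        have hsub : (S.filter (fun x => (pr x ∈ S ∧ G.Adj x (pr x)) ∧ pr x = z))
            ⊆ (G.neighborSet z).toFinset := by
          intro x hx
          rw [Finset.mem_filter] at hx
          obtain ⟨hxS, ⟨hmem, hadj⟩, heq⟩ := hx
          rw [Set.mem_toFinset]
          exact (heq ▸ hadj).symm
        have hcard : ((S.filter
            (fun x => (pr x ∈ S ∧ G.Adj x (pr x)) ∧ pr x = z)).card : ℝ) ≤ D := by
          refine le_trans ?_ (hdeg z)
          have hc2 := Finset.card_le_card hsub
          rw [← Set.ncard_eq_toFinset_card'] at hc2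
          exact_mod_cast hc2
        exact mul_le_mul_of_nonneg_right hcard (sq_nonneg _)
      refine le_trans (Finset.sum_le_sum e3) ?_
      rw [← Finset.mul_sum]
    have hfh : ∑ x ∈ S, f x * h x ≤
        Real.sqrt (∑ x ∈ S, f x ^ 2) * Real.sqrt (∑ x ∈ S, h x ^ 2) := by
      have hnn : (0:ℝ) ≤ ∑ x ∈ S, f x * h x :=
        Finset.sum_nonneg fun x _ => mul_nonneg (hf x) (hhnn x)
      have hcs := Finset.sum_mul_sq_le_sq_mul_sq S f h
      have h2 := Real.sqrt_le_sqrt hcs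
      rw [Real.sqrt_sq hnn, Real.sqrt_mul (Finset.sum_nonneg fun x _ => sq_nonneg (f x))] at h2
      exact h2
    have hlast : Real.sqrt (∑ x ∈ S, h x ^ 2) ≤ Real.sqrt D * Real.sqrt (∑ x ∈ S, g x ^ 2) := by
      have h2 := Real.sqrt_le_sqrt hsq
      rwa [Real.sqrt_mul' _ (Finset.sum_nonneg fun x _ => sq_nonneg (g x))] at h2
    calc ∑ x ∈ S, ∑ y ∈ S, (if G.Adj x y ∧ pr x = y then f x * g y else 0)
        = ∑ x ∈ S, f x * h x := Finset.sum_congr rfl hinner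
      _ ≤ Real.sqrt (∑ x ∈ S, f x ^ 2) * Real.sqrt (∑ x ∈ S, h x ^ 2) := hfh
      _ ≤ Real.sqrt (∑ x ∈ S, f x ^ 2) * (Real.sqrt D * Real.sqrt (∑ x ∈ S, g x ^ 2)) :=
          mul_le_mul_of_nonneg_left hlast (Real.sqrt_nonneg _)
      _ = Real.sqrt D * (Real.sqrt (∑ x ∈ S, f x ^ 2) * Real.sqrt (∑ x ∈ S, g x ^ 2)) := by ring
  have hsplit : ∀ x ∈ S, ∀ y ∈ S, (if G.Adj x y then f x * g y else 0) ≤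
      (if G.Adj x y ∧ pr x = y then f x * g y else 0)
        + (if G.Adj x y ∧ pr y = x then f x * g y else 0) := by
    intro x hx y hy
    by_cases hadj : G.Adj x y
    · have hnn : 0 ≤ f x * g y := mul_nonneg (hf x) (hg y)
      rcases hprop2 x y (hS hx) (hS hy) hadj with h | h
      · rw [if_pos hadj, if_pos (show G.Adj x y ∧ pr x = y from ⟨hadj, h⟩)]
        have : (0:ℝ) ≤ (if G.Adj x y ∧ pr y = x then f x * g y else 0) := by
          split_ifs
          · exact hnn
          · exact le_refl 0
        linarith
      · rw [if_pos hadj, if_pos (show G.Adj x y ∧ pr y = x from ⟨hadj, h⟩)]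
        have : (0:ℝ) ≤ (if G.Adj x y ∧ pr x = y then f x * g y else 0) := by
          split_ifs
          · exact hnn
          · exact le_refl 0
        linarith
    · simp [hadj]
  have hswap : ∑ x ∈ S, ∑ y ∈ S, (if G.Adj x y ∧ pr y = x then f x * g y else 0)
      = ∑ x ∈ S, ∑ y ∈ S, (if G.Adj x y ∧ pr x = y then g x * f y else 0) := by
    rw [Finset.sum_comm]
    refine Finset.sum_congr rfl fun a _ => Finset.sum_congr rfl fun b _ => ?_
    have e : G.Adj b a ↔ G.Adj a b := G.adj_comm b a
    by_cases h1 : G.Adj a b <;> by_cases h2 : pr a = b <;> simp [h1, h2, e, mul_comm]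
  calc ∑ x ∈ S, ∑ y ∈ S, (if G.Adj x y then f x * g y else 0)
      ≤ ∑ x ∈ S, ∑ y ∈ S, ((if G.Adj x y ∧ pr x = y then f x * g y else 0)
          + (if G.Adj x y ∧ pr y = x then f x * g y else 0)) :=
        Finset.sum_le_sum fun x hx => Finset.sum_le_sum (hsplit x hx)
    _ = ∑ x ∈ S, ∑ y ∈ S, (if G.Adj x y ∧ pr x = y then f x * g y else 0)
          + ∑ x ∈ S, ∑ y ∈ S, (if G.Adj x y ∧ pr y = x then f x * g y else 0) := by
        rw [← Finset.sum_add_distrib]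
        exact Finset.sum_congr rfl fun x _ => Finset.sum_add_distrib
    _ ≤ Real.sqrt D * (Real.sqrt (∑ x ∈ S, f x ^ 2) * Real.sqrt (∑ x ∈ S, g x ^ 2))
          + Real.sqrt D * (Real.sqrt (∑ x ∈ S, g x ^ 2) * Real.sqrt (∑ x ∈ S, f x ^ 2)) := by
        refine add_le_add (hterm f g hf hg) ?_
        rw [hswap]
        exact hterm g f hg hf
    _ = 2 * Real.sqrt D * (Real.sqrt (∑ x ∈ S, f x ^ 2) * Real.sqrt (∑ x ∈ S, g x ^ 2)) := by
        ring

end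

end AuxGraph

set_option maxHeartbeats 2000000 in
/-- Under the structural assumptions (i)–(iii), any normalized eigenvector `u`
of `L(G)|_U` with eigenvalue `λ ∈ [0, τd/2]`, where `U` is a connected component of
`∪_{x∈𝒱} B₂(x)`, satisfies `‖u|_{∂U}‖ ≤ C/d`. The constant `C` and the threshold `d₀` depend
only on `τ` and `𝒞`. -/
theorem stmt11 (τ 𝒞 : ℝ) (hτ1 : 0 < τ) (hτ2 : τ < 1) (h𝒞 : 0 < 𝒞) :
    ∃ C > (0 : ℝ), ∃ d₀ : ℝ, ∀ (t : ℕ), 1 ≤ t →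
      ∀ (N : ℕ) (G : SimpleGraph (Fin N)) (d : ℝ), d₀ ≤ d →
      (∀ x, (ER.gdeg G x : ℝ) ≤ 𝒞 * d) →
      (∀ S ∈ ER.componentsOf G (⋃ x ∈ ER.lowDeg G τ d, ER.gball G x 2),
        ((↑S ∩ ER.lowDeg G τ d : Set (Fin N)).ncard ≤ t)) →
      (SimpleGraph.induce (⋃ x ∈ ER.lowDeg G τ d, ER.gball G x 3) G).IsAcyclic →
      ∀ S ∈ ER.componentsOf G (⋃ x ∈ ER.lowDeg G τ d, ER.gball G x 2),
        ∀ (lam : ℝ) (u : {x // x ∈ S} → ℝ), 0 ≤ lam → lam ≤ τ * d / 2 →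
          (ER.restrict (ER.glap G) S).mulVec u = lam • u →
          (∑ x, u x ^ 2) = 1 →
          Real.sqrt (∑ x : {y // y ∈ S},
              ({z : Fin N | ∃ w, w ∉ (↑S : Set (Fin N)) ∧ G.Adj z w}).indicator
                (fun _ => u x ^ 2) ↑x) ≤ C / d := by
  classical
  refine ⟨16 * 𝒞 / τ ^ 2, by positivity, 1, ?_⟩
  intro t ht N G d hd hdeg hcnt hforest S hS lam u hlam0 hlam1 heig hnorm
  have hd0 : (0 : ℝ) < d := lt_of_lt_of_le one_pos hd
  have hτd2 : (0 : ℝ) < τ * d / 2 := by positivity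
  rw [ER.componentsOf, Finset.mem_filter] at hS
  obtain ⟨-, hSA, hSne, hconn, hclose⟩ := hS
  have hSA3 : (↑S : Set (Fin N)) ⊆ ⋃ x ∈ ER.lowDeg G τ d, ER.gball G x 3 := by
    refine hSA.trans (Set.iUnion₂_mono fun v hv => ?_)
    intro z hz
    exact ⟨hz.1, hz.2.trans (by norm_num)⟩
  have hdeg' : ∀ z : Fin N, ((G.neighborSet z).ncard : ℝ) ≤ 𝒞 * d := fun z => hdeg z
  set ub : Fin N → ℝ := fun z => if h : z ∈ S then |u ⟨z, h⟩| else 0 with hubdef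
  have hubnn : ∀ z, 0 ≤ ub z := by
    intro z; rw [hubdef]; dsimp only
    split_ifs
    · exact abs_nonneg _
    · exact le_refl 0
  have hubcoe : ∀ x : {y // y ∈ S}, ub ↑x = |u x| := by
    intro x; rw [hubdef]; dsimp only; rw [dif_pos x.2]
  have hnorm' : ∑ z ∈ S, ub z ^ 2 = 1 := by
    rw [← Finset.sum_coe_sort S (fun z => ub z ^ 2), ← hnorm]
    refine Finset.sum_congr rfl fun x _ => ?_
    rw [hubcoe x, sq_abs]
  -- pointwise consequence of the eigenvector equation
  have hkey : ∀ x : {y // y ∈ S}, (↑x : Fin N) ∉ ER.lowDeg G τ d →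
      τ * d / 2 * ub ↑x ≤ ∑ z ∈ S, (if G.Adj ↑x z then ub z else 0) := by
    intro x hx
    have he := congrFun heig x
    simp only [ER.restrict, Matrix.mulVec, dotProduct, Matrix.submatrix_apply,
      aux_glap_apply, Pi.smul_apply, smul_eq_mul, sub_mul] at he
    rw [Finset.sum_sub_distrib] at he
    have hdiag : ∑ y : {y // y ∈ S},
        (if (↑x : Fin N) = ↑y then (((G.neighborSet (↑x : Fin N)).ncard : ℝ)) else 0) * u y
        = ((G.neighborSet (↑x : Fin N)).ncard : ℝ) * u x := by
      rw [Finset.sum_eq_single x]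
      · rw [if_pos rfl]
      · intro y _ hne
        rw [if_neg (fun hc => hne (Subtype.ext hc.symm)), zero_mul]
      · intro hc; exact absurd (Finset.mem_univ x) hc
    rw [hdiag] at he
    have he2 : ∑ y : {y // y ∈ S}, (if G.Adj ↑x ↑y then (1:ℝ) else 0) * u y
        = (((G.neighborSet (↑x : Fin N)).ncard : ℝ) - lam) * u x := by
      rw [sub_mul]; linarith [he]
    have hxd : τ * d < ((G.neighborSet (↑x : Fin N)).ncard : ℝ) := by
      have h' := hx
      rw [ER.lowDeg, Set.mem_setOf_eq, not_le] at h'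
      exact h'
    have hcoef : τ * d / 2 ≤ ((G.neighborSet (↑x : Fin N)).ncard : ℝ) - lam := by linarith
    have habs : (((G.neighborSet (↑x : Fin N)).ncard : ℝ) - lam) * |u x|
        ≤ ∑ y : {y // y ∈ S}, (if G.Adj (↑x : Fin N) ↑y then ub ↑y else 0) := by
      have h1 : |(((G.neighborSet (↑x : Fin N)).ncard : ℝ) - lam) * u x|
          = (((G.neighborSet (↑x : Fin N)).ncard : ℝ) - lam) * |u x| := by
        rw [abs_mul, abs_of_nonneg (le_trans hτd2.le hcoef)]
      rw [← h1, ← he2]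
      refine le_trans (Finset.abs_sum_le_sum_abs _ _) (le_of_eq ?_)
      refine Finset.sum_congr rfl fun y _ => ?_
      rw [hubcoe y]
      by_cases hA : G.Adj (↑x : Fin N) ↑y <;> simp [hA]
    have hc2 : ∑ y : {y // y ∈ S}, (if G.Adj (↑x : Fin N) ↑y then ub ↑y else 0)
        = ∑ z ∈ S, (if G.Adj ↑x z then ub z else 0) :=
      Finset.sum_coe_sort S (fun z => if G.Adj ↑x z then ub z else 0)
    rw [hubcoe x]
    calc τ * d / 2 * |u x|
        ≤ (((G.neighborSet (↑x : Fin N)).ncard : ℝ) - lam) * |u x| :=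
          mul_le_mul_of_nonneg_right hcoef (abs_nonneg _)
      _ ≤ _ := le_trans habs (le_of_eq hc2)
  -- the low-degree neighborhoods
  set A1 : Set (Fin N) := ⋃ v ∈ ER.lowDeg G τ d, ER.gball G v 1 with hA1def
  have hmemA1 : ∀ z v, v ∈ ER.lowDeg G τ d → G.Reachable v z → G.dist v z ≤ 1 → z ∈ A1 := by
    intro z v hv hr hd1
    rw [hA1def]
    exact Set.mem_biUnion hv ⟨hr, hd1⟩
  have hself : ∀ z, z ∈ ER.lowDeg G τ d → z ∈ A1 := fun z hz =>
    hmemA1 z z hz (SimpleGraph.Reachable.refl z) (by rw [SimpleGraph.dist_self]; norm_num)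
  have hnbr : ∀ z y, z ∉ A1 → G.Adj z y → y ∉ ER.lowDeg G τ d := by
    intro z y hz hadj hy
    refine hz (hmemA1 z y hy hadj.symm.reachable ?_)
    have := SimpleGraph.dist_le (SimpleGraph.Walk.cons hadj.symm SimpleGraph.Walk.nil)
    simpa using this
  have hbd : ∀ z, z ∈ S → (∃ w, w ∉ (↑S : Set (Fin N)) ∧ G.Adj z w) → z ∉ A1 := by
    rintro z hzS ⟨w, hwS, hadj⟩ hzA1
    rw [hA1def, Set.mem_iUnion₂] at hzA1
    obtain ⟨v, hv, hr, hd1⟩ := hzA1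
    have hw2 : w ∈ ⋃ x ∈ ER.lowDeg G τ d, ER.gball G x 2 := by
      refine Set.mem_biUnion hv ⟨hr.trans hadj.reachable, ?_⟩
      have := aux_dist_adj_le hr hadj
      omega
    exact hwS (hclose z hzS w hw2 hadj)
  -- level functions
  set fP : Fin N → ℝ := fun z => if z ∈ ER.lowDeg G τ d then 0 else ub z with hfPdef
  set fW : Fin N → ℝ := fun z => if z ∈ A1 then 0 else ub z with hfWdef
  have hfPnn : ∀ z, 0 ≤ fP z := by
    intro z; rw [hfPdef]; dsimp only
    split_ifs
    · exact le_refl 0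
    · exact hubnn z
  have hfWnn : ∀ z, 0 ≤ fW z := by
    intro z; rw [hfWdef]; dsimp only
    split_ifs
    · exact le_refl 0
    · exact hubnn z
  have hSp0 : 0 ≤ ∑ z ∈ S, fP z ^ 2 := Finset.sum_nonneg fun z _ => sq_nonneg _
  have hSw0 : 0 ≤ ∑ z ∈ S, fW z ^ 2 := Finset.sum_nonneg fun z _ => sq_nonneg _
  have hquad : ∀ X c : ℝ, 0 ≤ X → 0 ≤ c → τ * d / 2 * X ≤ c * Real.sqrt X →
      Real.sqrt X ≤ c / (τ * d / 2) := by
    intro X c hX hc hle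
    have hs0 : 0 ≤ Real.sqrt X := Real.sqrt_nonneg X
    have hsq : Real.sqrt X ^ 2 = X := Real.sq_sqrt hX
    rcases eq_or_lt_of_le hs0 with h0 | h0
    · rw [← h0]; positivity
    · rw [le_div_iff₀ hτd2]
      nlinarith [hle, hsq, h0]
  -- Step 1 : ℓ² mass on vertices outside the low-degree set
  have hstep1 : τ * d / 2 * ∑ z ∈ S, fP z ^ 2
      ≤ (2 * Real.sqrt (𝒞 * d)) * Real.sqrt (∑ z ∈ S, fP z ^ 2) := by
    have h1 : ∀ z ∈ S, τ * d / 2 * fP z ^ 2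
        ≤ ∑ y ∈ S, (if G.Adj z y then fP z * ub y else 0) := by
      intro z hz
      by_cases hzV : z ∈ ER.lowDeg G τ d
      · have hfPz : fP z = 0 := by rw [hfPdef]; dsimp only; rw [if_pos hzV]
        rw [hfPz]
        refine le_trans (by norm_num) (Finset.sum_nonneg fun y _ => ?_)
        split_ifs
        · simp
        · exact le_refl 0
      · have hfPz : fP z = ub z := by rw [hfPdef]; dsimp only; rw [if_neg hzV]
        rw [hfPz]
        have hk : τ * d / 2 * ub z ≤ ∑ y ∈ S, (if G.Adj z y then ub y else 0) :=
          hkey ⟨z, hz⟩ hzV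
        calc τ * d / 2 * ub z ^ 2 = ub z * (τ * d / 2 * ub z) := by ring
          _ ≤ ub z * ∑ y ∈ S, (if G.Adj z y then ub y else 0) :=
              mul_le_mul_of_nonneg_left hk (hubnn z)
          _ = ∑ y ∈ S, (if G.Adj z y then ub z * ub y else 0) := by
              rw [Finset.mul_sum]
              refine Finset.sum_congr rfl fun y _ => ?_
              split_ifs <;> simp
    calc τ * d / 2 * ∑ z ∈ S, fP z ^ 2
        = ∑ z ∈ S, τ * d / 2 * fP z ^ 2 := Finset.mul_sum _ _ _
      _ ≤ ∑ z ∈ S, ∑ y ∈ S, (if G.Adj z y then fP z * ub y else 0) := Finset.sum_le_sum h1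
      _ ≤ 2 * Real.sqrt (𝒞 * d) *
            (Real.sqrt (∑ z ∈ S, fP z ^ 2) * Real.sqrt (∑ z ∈ S, ub z ^ 2)) :=
          aux_BF G _ hforest S hSA3 (𝒞 * d) hdeg' fP ub hfPnn hubnn
      _ = (2 * Real.sqrt (𝒞 * d)) * Real.sqrt (∑ z ∈ S, fP z ^ 2) := by
          rw [hnorm', Real.sqrt_one, mul_one]
  have hβ1 : Real.sqrt (∑ z ∈ S, fP z ^ 2) ≤ 2 * Real.sqrt (𝒞 * d) / (τ * d / 2) :=
    hquad _ _ hSp0 (by positivity) hstep1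
  -- Step 2 : ℓ² mass on vertices at distance ≥ 2 from the low-degree set
  have hstep2 : τ * d / 2 * ∑ z ∈ S, fW z ^ 2
      ≤ (2 * Real.sqrt (𝒞 * d) * (2 * Real.sqrt (𝒞 * d) / (τ * d / 2)))
          * Real.sqrt (∑ z ∈ S, fW z ^ 2) := by
    have h1 : ∀ z ∈ S, τ * d / 2 * fW z ^ 2
        ≤ ∑ y ∈ S, (if G.Adj z y then fW z * fP y else 0) := by
      intro z hz
      by_cases hzA : z ∈ A1
      · have hfWz : fW z = 0 := by rw [hfWdef]; dsimp only; rw [if_pos hzA]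
        rw [hfWz]
        refine le_trans (by norm_num) (Finset.sum_nonneg fun y _ => ?_)
        split_ifs
        · simp
        · exact le_refl 0
      · have hzV : z ∉ ER.lowDeg G τ d := fun hc => hzA (hself z hc)
        have hfWz : fW z = ub z := by rw [hfWdef]; dsimp only; rw [if_neg hzA]
        rw [hfWz]
        have hk : τ * d / 2 * ub z ≤ ∑ y ∈ S, (if G.Adj z y then ub y else 0) :=
          hkey ⟨z, hz⟩ hzV
        have hrefine : ∑ y ∈ S, (if G.Adj z y then ub y else 0)
            = ∑ y ∈ S, (if G.Adj z y then fP y else 0) := by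
          refine Finset.sum_congr rfl fun y _ => ?_
          by_cases hA : G.Adj z y
          · rw [if_pos hA, if_pos hA]
            have hyV : y ∉ ER.lowDeg G τ d := hnbr z y hzA hA
            rw [hfPdef]; dsimp only; rw [if_neg hyV]
          · rw [if_neg hA, if_neg hA]
        rw [hrefine] at hk
        calc τ * d / 2 * ub z ^ 2 = ub z * (τ * d / 2 * ub z) := by ring
          _ ≤ ub z * ∑ y ∈ S, (if G.Adj z y then fP y else 0) :=
              mul_le_mul_of_nonneg_left hk (hubnn z)
          _ = ∑ y ∈ S, (if G.Adj z y then ub z * fP y else 0) := by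
              rw [Finset.mul_sum]
              refine Finset.sum_congr rfl fun y _ => ?_
              split_ifs <;> simp
    calc τ * d / 2 * ∑ z ∈ S, fW z ^ 2
        = ∑ z ∈ S, τ * d / 2 * fW z ^ 2 := Finset.mul_sum _ _ _
      _ ≤ ∑ z ∈ S, ∑ y ∈ S, (if G.Adj z y then fW z * fP y else 0) := Finset.sum_le_sum h1
      _ ≤ 2 * Real.sqrt (𝒞 * d) *
            (Real.sqrt (∑ z ∈ S, fW z ^ 2) * Real.sqrt (∑ z ∈ S, fP z ^ 2)) :=
          aux_BF G _ hforest S hSA3 (𝒞 * d) hdeg' fW fP hfWnn hfPnn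
      _ ≤ 2 * Real.sqrt (𝒞 * d) *
            (Real.sqrt (∑ z ∈ S, fW z ^ 2) * (2 * Real.sqrt (𝒞 * d) / (τ * d / 2))) := by
          refine mul_le_mul_of_nonneg_left
            (mul_le_mul_of_nonneg_left hβ1 (Real.sqrt_nonneg _)) (by positivity)
      _ = (2 * Real.sqrt (𝒞 * d) * (2 * Real.sqrt (𝒞 * d) / (τ * d / 2)))
          * Real.sqrt (∑ z ∈ S, fW z ^ 2) := by ring
  have hβ2 : Real.sqrt (∑ z ∈ S, fW z ^ 2)
      ≤ (2 * Real.sqrt (𝒞 * d) * (2 * Real.sqrt (𝒞 * d) / (τ * d / 2))) / (τ * d / 2) :=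
    hquad _ _ hSw0 (by positivity) hstep2
  -- numerics
  have hfinalconst : (2 * Real.sqrt (𝒞 * d) * (2 * Real.sqrt (𝒞 * d) / (τ * d / 2)))
      / (τ * d / 2) = 16 * 𝒞 / τ ^ 2 / d := by
    have h1 : Real.sqrt (𝒞 * d) * Real.sqrt (𝒞 * d) = 𝒞 * d :=
      Real.mul_self_sqrt (by positivity)
    have hτ0 : τ ≠ 0 := ne_of_gt hτ1
    have hdne : d ≠ 0 := ne_of_gt hd0
    have h2 : (2 * Real.sqrt (𝒞 * d) * (2 * Real.sqrt (𝒞 * d) / (τ * d / 2))) / (τ * d / 2)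
        = (4 * (Real.sqrt (𝒞 * d) * Real.sqrt (𝒞 * d))) / ((τ * d / 2) * (τ * d / 2)) := by
      field_simp
      ring
    rw [h2, h1]
    field_simp
    ring
  -- conclusion
  have hfin : (∑ x : {y // y ∈ S},
      ({z : Fin N | ∃ w, w ∉ (↑S : Set (Fin N)) ∧ G.Adj z w}).indicator
        (fun _ => u x ^ 2) ↑x) ≤ ∑ z ∈ S, fW z ^ 2 := by
    rw [← Finset.sum_coe_sort S (fun z => fW z ^ 2)]
    refine Finset.sum_le_sum fun x _ => ?_
    rw [Set.indicator_apply]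
    split_ifs with hmem
    · have hnA1 : (↑x : Fin N) ∉ A1 := hbd ↑x x.2 hmem
      have hfWx : fW ↑x = ub ↑x := by rw [hfWdef]; dsimp only; rw [if_neg hnA1]
      rw [hfWx, hubcoe x, sq_abs]
    · positivity
  calc Real.sqrt (∑ x : {y // y ∈ S},
        ({z : Fin N | ∃ w, w ∉ (↑S : Set (Fin N)) ∧ G.Adj z w}).indicator
          (fun _ => u x ^ 2) ↑x)
      ≤ Real.sqrt (∑ z ∈ S, fW z ^ 2) := Real.sqrt_le_sqrt hfin
    _ ≤ (2 * Real.sqrt (𝒞 * d) * (2 * Real.sqrt (𝒞 * d) / (τ * d / 2))) / (τ * d / 2) := hβ2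
    _ = 16 * 𝒞 / τ ^ 2 / d := hfinalconst
end
end

section
/- Let t* ≥ 1, τ ∈ (0,1), 𝒞 > 0, 0 < c < 1/(1+t*), and let G be a graph on vertex set [N] with 0 < d ≤ log N and d sufficiently large (depending on τ, 𝒞). Set 𝒱 = {x : D_x ≤ τ d} and assume: (i) every vertex has degree at most 𝒞d; (ii) ‖A(G) − (d/N)(1_{[N]}1_{[N]}^* − I)‖ ≤ 𝒞√d; (iii) |𝒱| ≤ N^{1 − 1/(1+t*)}. Then for N large enough, the spectrum of L(G)|_{𝒱ᶜ} is contained in {μ} ∪ [τd/2, +∞) for a single value μ satisfying μ = O(N^{−c}); that is, the smallest eigenvalue of L(G)|_{𝒱ᶜ} is O(N^{−c}) and all other eigenvalues are at least τd/2. -/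
open MeasureTheory Filter Real Topology

noncomputable section

open Matrix Polynomial RealInnerProductSpace in
theorem stmt13aux_charpoly_conj {n : Type*} [Fintype n] [DecidableEq n] (A U V : Matrix n n ℝ)
    (hUV : U * V = 1) : (U * A * V).charpoly = A.charpoly := by
  have hch : charmatrix (U * A * V) = (U.map C) * charmatrix A * (V.map C) := by
    rw [charmatrix, charmatrix]
    rw [Matrix.mul_sub, Matrix.sub_mul]
    congr 1
    · rw [← (scalar_commute (X : ℝ[X]) (fun r => mul_comm _ _) (U.map C)).eq, Matrix.mul_assoc,
        ← Matrix.map_mul, hUV]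
      simp
    · simp [← Matrix.map_mul, Matrix.mul_assoc]
  have hdet : (U.map C).det * (V.map C).det = 1 := by
    rw [← det_mul, ← Matrix.map_mul, hUV]; simp
  rw [Matrix.charpoly, Matrix.charpoly, hch, det_mul, det_mul]
  calc (U.map ⇑C).det * (charmatrix A).det * (V.map ⇑C).det
      = (charmatrix A).det * ((U.map ⇑C).det * (V.map ⇑C).det) := by ring
    _ = (charmatrix A).det := by rw [hdet, mul_one]

open Matrix Polynomial in
theorem stmt13aux_specMS_herm {n : Type*} [Fintype n] [DecidableEq n] [LinearOrder n]
    {M : Matrix n n ℝ} (hM : M.IsHermitian) :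
    ER.specMS M = Multiset.map hM.eigenvalues Finset.univ.val := by
  have hsp := hM.spectral_theorem
  have hof : (RCLike.ofReal ∘ hM.eigenvalues : n → ℝ) = hM.eigenvalues := by
    funext i; simp [RCLike.ofReal]
  rw [hof] at hsp
  have hUV : (hM.eigenvectorUnitary : Matrix n n ℝ) * (star hM.eigenvectorUnitary :
      Matrix n n ℝ) = 1 := by
    exact_mod_cast (Unitary.mem_iff.mp hM.eigenvectorUnitary.2).2
  have h1 : M.charpoly = (Matrix.diagonal hM.eigenvalues).charpoly := by
    conv_lhs => rw [hsp, Unitary.conjStarAlgAut_apply]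
    exact stmt13aux_charpoly_conj _ _ _ hUV
  have h2 : (Matrix.diagonal hM.eigenvalues).charpoly
      = ∏ i : n, (X - C (hM.eigenvalues i)) := by
    rw [Matrix.charpoly_of_upperTriangular _ (Matrix.blockTriangular_diagonal _)]
    simp
  rw [ER.specMS, h1, h2]
  have h3 : ∏ i : n, (X - C (hM.eigenvalues i))
      = (Multiset.map (fun a => X - C a) (Multiset.map hM.eigenvalues Finset.univ.val)).prod := by
    rw [Multiset.map_map]; rfl
  rw [h3, Polynomial.roots_multiset_prod_X_sub_C]

open Matrix in
theorem stmt13aux_star_mulVec {n : Type*} [Fintype n] (U : Matrix n n ℝ) (v : n → ℝ) :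
    star U *ᵥ v = v ᵥ* U := by
  funext i
  simp [Matrix.mulVec, Matrix.vecMul, dotProduct, Matrix.star_apply, mul_comm]

open Matrix in
theorem stmt13aux_qf_spectral {n : Type*} [Fintype n] [DecidableEq n]
    {M : Matrix n n ℝ} (hM : M.IsHermitian) (v : n → ℝ) :
    v ⬝ᵥ M *ᵥ v = ∑ i, hM.eigenvalues i *
      ((star (hM.eigenvectorUnitary : Matrix n n ℝ) *ᵥ v) i) ^ 2 := by
  set U : Matrix n n ℝ := (hM.eigenvectorUnitary : Matrix n n ℝ) with hU
  have hof : (RCLike.ofReal ∘ hM.eigenvalues : n → ℝ) = hM.eigenvalues := by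
    funext i; simp [RCLike.ofReal]
  conv_lhs => rw [hM.spectral_theorem, Unitary.conjStarAlgAut_apply]
  rw [hof, ← Matrix.mulVec_mulVec, ← Matrix.mulVec_mulVec, Matrix.dotProduct_mulVec,
    ← stmt13aux_star_mulVec]
  simp only [dotProduct, Matrix.mulVec_diagonal]
  congr 1; funext i; ring

open Matrix in
theorem stmt13aux_qf_norm {n : Type*} [Fintype n] [DecidableEq n]
    {M : Matrix n n ℝ} (hM : M.IsHermitian) (v : n → ℝ) :
    (star (hM.eigenvectorUnitary : Matrix n n ℝ) *ᵥ v) ⬝ᵥ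
      (star (hM.eigenvectorUnitary : Matrix n n ℝ) *ᵥ v) = v ⬝ᵥ v := by
  set U : Matrix n n ℝ := (hM.eigenvectorUnitary : Matrix n n ℝ) with hU
  have hUV : U * star U = 1 := by
    exact_mod_cast (Unitary.mem_iff.mp hM.eigenvectorUnitary.2).2
  nth_rewrite 1 [stmt13aux_star_mulVec]
  rw [← Matrix.dotProduct_mulVec, Matrix.mulVec_mulVec, hUV, Matrix.one_mulVec]

open Matrix RealInnerProductSpace in
theorem stmt13aux_qf_opNorm_le {n : Type*} [Fintype n] [DecidableEq n]
    (M : Matrix n n ℝ) (v : n → ℝ) :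
    |v ⬝ᵥ M *ᵥ v| ≤ ER.opNorm M * (v ⬝ᵥ v) := by
  set T := Matrix.toEuclideanCLM (𝕜 := ℝ) M with hT
  set x : EuclideanSpace ℝ n := (WithLp.equiv 2 _).symm v with hx
  have h1 : ⟪x, T x⟫ = v ⬝ᵥ M *ᵥ v := by
    rw [hx, hT, WithLp.equiv_symm_apply, Matrix.toEuclideanCLM_toLp]
    simp [PiLp.inner_apply, dotProduct, RCLike.inner_apply, mul_comm]
  have h2 : ‖x‖ ^ 2 = v ⬝ᵥ v := by
    rw [← real_inner_self_eq_norm_sq]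
    simp only [PiLp.inner_apply, dotProduct, RCLike.inner_apply]
    rfl
  calc |v ⬝ᵥ M *ᵥ v| = |⟪x, T x⟫| := by rw [h1]
    _ ≤ ‖x‖ * ‖T x‖ := abs_real_inner_le_norm _ _
    _ ≤ ‖x‖ * (‖T‖ * ‖x‖) := by gcongr; exact T.le_opNorm x
    _ = ‖T‖ * ‖x‖ ^ 2 := by ring
    _ = ER.opNorm M * (v ⬝ᵥ v) := by rw [h2]; rfl

open Matrix in
theorem stmt13aux_qf_diagonal {n : Type*} [Fintype n] [DecidableEq n]
    (f : n → ℝ) (v : n → ℝ) :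
    v ⬝ᵥ (Matrix.diagonal f *ᵥ v) = ∑ i, f i * v i ^ 2 := by
  simp only [dotProduct, Matrix.mulVec_diagonal]
  congr 1; funext i; ring

open Matrix in
theorem stmt13aux_sum_ext {α : Type*} [Fintype α] [DecidableEq α] (S : Finset α)
    (v : {x // x ∈ S} → ℝ) (f : α → ℝ) :
    ∑ x, (if h : x ∈ S then v ⟨x, h⟩ else 0) * f x = ∑ a : {x // x ∈ S}, v a * f a.1 := by
  calc ∑ x : α, (if h : x ∈ S then v ⟨x, h⟩ else 0) * f x
      = ∑ x ∈ S, (if h : x ∈ S then v ⟨x, h⟩ else 0) * f x :=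
        (Finset.sum_subset (Finset.subset_univ S)
          (fun x _ hx => by rw [dif_neg hx, zero_mul])).symm
    _ = ∑ a : {x // x ∈ S}, (if h : a.1 ∈ S then v ⟨a.1, h⟩ else 0) * f a.1 :=
        (Finset.sum_coe_sort S (fun x => (if h : x ∈ S then v ⟨x, h⟩ else 0) * f x)).symm
    _ = ∑ a : {x // x ∈ S}, v a * f a.1 := by
        apply Finset.sum_congr rfl
        intro a _
        rw [dif_pos a.2]

open Matrix in
theorem stmt13aux_qf_restrict {α : Type*} [Fintype α] [DecidableEq α]
    (A : Matrix α α ℝ) (S : Finset α) (v : {x // x ∈ S} → ℝ) :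
    v ⬝ᵥ (ER.restrict A S *ᵥ v)
      = (fun x => if h : x ∈ S then v ⟨x, h⟩ else 0) ⬝ᵥ
        (A *ᵥ fun x => if h : x ∈ S then v ⟨x, h⟩ else 0) := by
  set vt : α → ℝ := fun x => if h : x ∈ S then v ⟨x, h⟩ else 0 with hvt
  simp only [dotProduct, Matrix.mulVec, ER.restrict, Matrix.submatrix_apply]
  rw [stmt13aux_sum_ext S v (fun x => ∑ y, A x y * vt y)]
  apply Finset.sum_congr rfl
  intro a _
  congr 1
  calc ∑ b : {x // x ∈ S}, A a.1 b.1 * v b = ∑ b : {x // x ∈ S}, v b * A a.1 b.1 := by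
        apply Finset.sum_congr rfl; intro b _; ring
    _ = ∑ y, vt y * A a.1 y := (stmt13aux_sum_ext S v (fun y => A a.1 y)).symm
    _ = ∑ y, A a.1 y * vt y := by apply Finset.sum_congr rfl; intro y _; ring

open Matrix in
theorem stmt13aux_dot_restrict {α : Type*} [Fintype α] [DecidableEq α]
    (S : Finset α) (v : {x // x ∈ S} → ℝ) :
    (fun x => if h : x ∈ S then v ⟨x, h⟩ else 0) ⬝ᵥ
      (fun x => if h : x ∈ S then v ⟨x, h⟩ else 0) = v ⬝ᵥ v := by
  simp only [dotProduct]
  rw [stmt13aux_sum_ext S v (fun x => if h : x ∈ S then v ⟨x, h⟩ else 0)]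
  apply Finset.sum_congr rfl
  intro a _
  rw [dif_pos a.2]

set_option maxHeartbeats 4000000 in
open Matrix in
/-- Under assumptions (i)–(iii), the spectrum of `L(G)|_{𝒱ᶜ}` consists of one
eigenvalue `μ = O(N^{-c})` together with eigenvalues that are all at least `τ d / 2`. -/
theorem stmt13 (t : ℕ) (ht : 1 ≤ t) (τ 𝒞 c : ℝ) (hτ1 : 0 < τ) (hτ2 : τ < 1) (h𝒞 : 0 < 𝒞)
    (hc1 : 0 < c) (hc2 : c < 1 / (1 + (t : ℝ))) :
    ∃ C > (0 : ℝ), ∃ d₀ : ℝ, ∃ N₀ : ℕ, ∀ N ≥ N₀, ∀ (G : SimpleGraph (Fin N)) (d : ℝ),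
      d₀ ≤ d → d ≤ Real.log N →
      (∀ x, (ER.gdeg G x : ℝ) ≤ 𝒞 * d) →
      ER.opNorm (ER.gadj G - (d / N) • (Matrix.of fun _ _ => (1 : ℝ)) + (d / N) • 1) ≤
        𝒞 * Real.sqrt d →
      ((ER.lowDeg G τ d).ncard : ℝ) ≤ (N : ℝ) ^ ((1 : ℝ) - 1 / (1 + (t : ℝ))) →
      ∃ μ ∈ ER.specMS (ER.restrict (ER.glap G) (ER.vFilter (ER.lowDeg G τ d)ᶜ Finset.univ)),
        |μ| ≤ C * (N : ℝ) ^ (-c) ∧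
        ∀ ν ∈ (ER.specMS (ER.restrict (ER.glap G)
            (ER.vFilter (ER.lowDeg G τ d)ᶜ Finset.univ))).erase μ,
          τ * d / 2 ≤ ν := by
  classical
  set δ : ℝ := 1 / (1 + (t : ℝ)) with hδdef
  have hδ : 0 < δ := by positivity
  have hcδ : c < δ := hc2
  set ε : ℝ := (δ - c) / 2 with hεdef
  have hε : 0 < ε := by rw [hεdef]; linarith
  refine ⟨2 * 𝒞 / ε, by positivity, max 1 ((2 * 𝒞 / τ) ^ 2),
    max 2 (⌈((2:ℝ) ^ (1/δ))⌉₊ + 1), ?_⟩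
  intro N hN G d hd₀d hdlog hdeg hop hV
  letI : DecidableRel G.Adj := Classical.decRel _
  have hd1 : (1:ℝ) ≤ d := le_trans (le_max_left _ _) hd₀d
  have hd : (0:ℝ) < d := lt_of_lt_of_le one_pos hd1
  have hCd : 𝒞 * Real.sqrt d ≤ τ * d / 2 := by
    have h1 : (2 * 𝒞 / τ) ^ 2 ≤ d := le_trans (le_max_right _ _) hd₀d
    have h2 : 2 * 𝒞 / τ ≤ Real.sqrt d := by
      rw [show (2 * 𝒞 / τ) = Real.sqrt ((2 * 𝒞 / τ)^2) from (Real.sqrt_sq (by positivity)).symm]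
      exact Real.sqrt_le_sqrt h1
    have h3 : Real.sqrt d * Real.sqrt d = d := Real.mul_self_sqrt hd.le
    have h4 : 2 * 𝒞 ≤ Real.sqrt d * τ := (div_le_iff₀ hτ1).mp h2
    nlinarith [mul_nonneg (Real.sqrt_nonneg d) (sub_nonneg.mpr h4)]
  have hN2 : 2 ≤ N := le_trans (le_max_left _ _) hN
  have hNR : (2:ℝ) ≤ (N:ℝ) := by exact_mod_cast hN2
  have hN0 : (0:ℝ) < N := by linarith
  have hN1 : (1:ℝ) ≤ N := by linarith
  have hNδ : (2:ℝ) ≤ (N:ℝ) ^ δ := by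
    have h2 : (⌈((2:ℝ) ^ (1/δ))⌉₊ + 1) ≤ N := le_trans (le_max_right _ _) hN
    have h1 : ((2:ℝ) ^ (1/δ)) ≤ (N:ℝ) := by
      calc ((2:ℝ) ^ (1/δ)) ≤ (⌈((2:ℝ) ^ (1/δ))⌉₊ : ℝ) := Nat.le_ceil _
        _ ≤ (N:ℝ) := by exact_mod_cast le_trans (Nat.le_succ _) h2
    have h3 : ((2:ℝ) ^ (1/δ)) ^ δ = 2 := by
      rw [← Real.rpow_mul (by norm_num), one_div_mul_cancel hδ.ne', Real.rpow_one]
    calc (2:ℝ) = ((2:ℝ) ^ (1/δ)) ^ δ := h3.symm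
      _ ≤ (N:ℝ) ^ δ := Real.rpow_le_rpow (by positivity) h1 hδ.le
  set S : Finset (Fin N) := ER.vFilter (ER.lowDeg G τ d)ᶜ Finset.univ with hS
  have hdeg_eq : ∀ x, ER.gdeg G x = G.degree x := by
    intro x
    rw [ER.gdeg, Set.ncard_eq_toFinset_card', SimpleGraph.degree]
    congr 1
  have hmemS : ∀ x : Fin N, x ∈ S ↔ τ * d < (ER.gdeg G x : ℝ) := by
    intro x
    rw [hS]
    simp [ER.vFilter, ER.lowDeg, not_le]
  set Vfin : Finset (Fin N) := (ER.lowDeg G τ d).toFinset with hVfin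
  have hScompl : S = Vfinᶜ := by
    ext x
    simp [hS, hVfin, ER.vFilter]
  have hVle : Vfin.card ≤ N := by
    simpa using Finset.card_le_univ Vfin
  have hcards : (S.card : ℝ) = (N:ℝ) - Vfin.card := by
    rw [hScompl, Finset.card_compl]
    rw [Nat.cast_sub (by simpa using hVle)]
    simp
  have hVc : (Vfin.card : ℝ) ≤ (N:ℝ) ^ ((1:ℝ) - δ) := by
    rw [hVfin, ← Set.ncard_eq_toFinset_card']
    exact hV
  have hVN2 : (Vfin.card : ℝ) ≤ (N:ℝ)/2 := by
    refine le_trans hVc ?_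
    have h1 : (N:ℝ)^((1:ℝ)-δ) = (N:ℝ) / (N:ℝ)^δ := by
      rw [Real.rpow_sub hN0, Real.rpow_one]
    rw [h1]
    gcongr
  have hScard : (N:ℝ)/2 ≤ S.card := by rw [hcards]; linarith
  have hSpos : (0:ℝ) < S.card := lt_of_lt_of_le (by positivity) hScard
  have hSne : S.Nonempty := Finset.card_pos.mp (by exact_mod_cast hSpos)
  obtain ⟨x₀, hx₀⟩ := hSne
  haveI : Nonempty {x // x ∈ S} := ⟨⟨x₀, hx₀⟩⟩
  set M : Matrix {x // x ∈ S} {x // x ∈ S} ℝ := ER.restrict (ER.glap G) S with hMdef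
  have hLP : (ER.glap G).PosSemidef := SimpleGraph.posSemidef_lapMatrix ℝ G
  have hMP : M.PosSemidef := hLP.submatrix _
  have hH : M.IsHermitian := hMP.1
  set eigs := hH.eigenvalues with heigs
  have hspec : ER.specMS M = Multiset.map eigs Finset.univ.val := stmt13aux_specMS_herm hH
  have heig0 : ∀ i, 0 ≤ eigs i := hMP.eigenvalues_nonneg
  have hQFlow : ∀ v : {x // x ∈ S} → ℝ, (∑ x, v x) = 0 →
      (τ * d - 𝒞 * Real.sqrt d) * (v ⬝ᵥ v) ≤ v ⬝ᵥ M *ᵥ v := by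
    intro v hvsum
    set E : Matrix (Fin N) (Fin N) ℝ :=
      ER.gadj G - (d / N) • (Matrix.of fun _ _ => (1 : ℝ)) + (d / N) • 1 with hE
    have hgl : ER.glap G = G.degMatrix ℝ - (d / N) • (Matrix.of fun _ _ => (1 : ℝ))
        + (d / N) • 1 - E := by
      rw [hE]
      have h0 : ER.glap G = G.degMatrix ℝ - ER.gadj G := rfl
      rw [h0]
      abel
    have hqf : v ⬝ᵥ M *ᵥ v = v ⬝ᵥ (ER.restrict (G.degMatrix ℝ) S *ᵥ v)
        - (d/N) * (v ⬝ᵥ (ER.restrict (Matrix.of fun _ _ => (1:ℝ)) S *ᵥ v))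
        + (d/N) * (v ⬝ᵥ (ER.restrict (1 : Matrix (Fin N) (Fin N) ℝ) S *ᵥ v))
        - v ⬝ᵥ (ER.restrict E S *ᵥ v) := by
      have hres : M = ER.restrict (G.degMatrix ℝ) S
          - (d/N) • ER.restrict (Matrix.of fun _ _ => (1:ℝ)) S
          + (d/N) • ER.restrict (1 : Matrix (Fin N) (Fin N) ℝ) S - ER.restrict E S := by
        rw [hMdef, hgl]
        ext a b
        simp [ER.restrict, Matrix.sub_apply, Matrix.add_apply, Matrix.smul_apply]
      rw [hres, Matrix.sub_mulVec, Matrix.add_mulVec, Matrix.sub_mulVec,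
        Matrix.smul_mulVec, Matrix.smul_mulVec, dotProduct_sub,
        dotProduct_add, dotProduct_sub, dotProduct_smul,
        dotProduct_smul]
      simp [smul_eq_mul]
    have hdiag : ER.restrict (G.degMatrix ℝ) S
        = Matrix.diagonal (fun a : {x // x ∈ S} => (G.degree a.1 : ℝ)) := by
      ext a b
      by_cases hab : a = b
      · subst hab
        simp [ER.restrict, SimpleGraph.degMatrix]
      · have h' : (a : Fin N) ≠ b := fun h => hab (Subtype.ext h)
        simp only [ER.restrict, Matrix.submatrix_apply, SimpleGraph.degMatrix]
        rw [Matrix.diagonal_apply_ne _ h', Matrix.diagonal_apply_ne _ hab]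
    have h1 : τ * d * (v ⬝ᵥ v) ≤ v ⬝ᵥ (ER.restrict (G.degMatrix ℝ) S *ᵥ v) := by
      rw [hdiag, stmt13aux_qf_diagonal]
      have hvv2 : v ⬝ᵥ v = ∑ a, v a ^ 2 := by
        simp [dotProduct, pow_two]
      rw [hvv2, Finset.mul_sum]
      apply Finset.sum_le_sum
      intro a _
      apply mul_le_mul_of_nonneg_right _ (sq_nonneg _)
      have h2 := (hmemS a.1).mp a.2
      rw [hdeg_eq] at h2
      exact h2.le
    have h2 : v ⬝ᵥ (ER.restrict (Matrix.of fun _ _ => (1:ℝ)) S *ᵥ v) = 0 := by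
      have hrow : ∀ a : {x // x ∈ S},
          (ER.restrict (Matrix.of fun _ _ => (1:ℝ)) S *ᵥ v) a = ∑ x, v x := by
        intro a
        simp [ER.restrict, Matrix.mulVec, dotProduct]
      calc v ⬝ᵥ (ER.restrict (Matrix.of fun _ _ => (1:ℝ)) S *ᵥ v)
          = ∑ a, v a * (∑ x, v x) := Finset.sum_congr rfl (fun a _ => by rw [hrow])
        _ = (∑ x, v x) * (∑ x, v x) := by rw [← Finset.sum_mul]
        _ = 0 := by rw [hvsum, mul_zero]
    have honeM : ER.restrict (1 : Matrix (Fin N) (Fin N) ℝ) S = 1 := by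
      ext a b
      by_cases hab : a = b
      · subst hab
        simp [ER.restrict]
      · have h' : (a : Fin N) ≠ b := fun h => hab (Subtype.ext h)
        simp only [ER.restrict, Matrix.submatrix_apply]
        rw [Matrix.one_apply_ne h', Matrix.one_apply_ne hab]
    have h3 : 0 ≤ v ⬝ᵥ (ER.restrict (1 : Matrix (Fin N) (Fin N) ℝ) S *ᵥ v) := by
      rw [honeM, Matrix.one_mulVec]
      exact Finset.sum_nonneg fun a _ => mul_self_nonneg _
    have hvv : 0 ≤ v ⬝ᵥ v := Finset.sum_nonneg fun a _ => mul_self_nonneg _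
    have h4 : |v ⬝ᵥ (ER.restrict E S *ᵥ v)| ≤ 𝒞 * Real.sqrt d * (v ⬝ᵥ v) := by
      rw [stmt13aux_qf_restrict]
      calc |(fun x => if h : x ∈ S then v ⟨x, h⟩ else 0) ⬝ᵥ
            (E *ᵥ fun x => if h : x ∈ S then v ⟨x, h⟩ else 0)|
          ≤ ER.opNorm E * ((fun x => if h : x ∈ S then v ⟨x, h⟩ else 0) ⬝ᵥ
            (fun x => if h : x ∈ S then v ⟨x, h⟩ else 0)) := stmt13aux_qf_opNorm_le E _
        _ = ER.opNorm E * (v ⬝ᵥ v) := by rw [stmt13aux_dot_restrict]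
        _ ≤ 𝒞 * Real.sqrt d * (v ⬝ᵥ v) := mul_le_mul_of_nonneg_right hop hvv
    have hdN : (0:ℝ) ≤ d / N := by positivity
    rw [hqf, h2]
    have hexp : (τ * d - 𝒞 * Real.sqrt d) * (v ⬝ᵥ v)
        = τ * d * (v ⬝ᵥ v) - 𝒞 * Real.sqrt d * (v ⬝ᵥ v) := by ring
    rw [hexp]
    linarith [h1, mul_nonneg hdN h3, (abs_le.mp h4).2]
  have hQF1 : (fun _ : {x // x ∈ S} => (1:ℝ)) ⬝ᵥ M *ᵥ (fun _ => (1:ℝ))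
      ≤ 𝒞 * d * (Vfin.card : ℝ) := by
    have hLg : ER.glap G = SimpleGraph.lapMatrix ℝ G := rfl
    have hAg : ER.gadj G = SimpleGraph.adjMatrix ℝ G := rfl
    have hstart : (fun _ : {x // x ∈ S} => (1:ℝ)) ⬝ᵥ M *ᵥ (fun _ => (1:ℝ))
        = ∑ a : {x // x ∈ S}, ∑ b : {x // x ∈ S}, ER.glap G a.1 b.1 := by
      simp [hMdef, ER.restrict, dotProduct, Matrix.mulVec]
    have hrow : ∀ x : Fin N, ∑ y, ER.glap G x y = 0 := by
      intro x
      have h := congrFun (SimpleGraph.lapMatrix_mulVec_const_eq_zero (R := ℝ) (G := G)) x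
      rw [hLg]
      simpa [Matrix.mulVec, dotProduct] using h
    have hoffd : ∀ x y : Fin N, x ≠ y → ER.glap G x y = -(ER.gadj G x y) := by
      intro x y hxy
      rw [hLg, hAg, SimpleGraph.lapMatrix, Matrix.sub_apply, SimpleGraph.degMatrix,
        Matrix.diagonal_apply_ne _ hxy]
      ring
    have hAnn : ∀ x y : Fin N, (0:ℝ) ≤ ER.gadj G x y := by
      intro x y
      rw [hAg]
      simp [SimpleGraph.adjMatrix_apply]
      split <;> norm_num
    have hinner : ∀ a : {x // x ∈ S},
        ∑ b : {x // x ∈ S}, ER.glap G a.1 b.1 = ∑ y ∈ Sᶜ, ER.gadj G a.1 y := by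
      intro a
      have hsplit : ∑ y ∈ S, ER.glap G a.1 y + ∑ y ∈ Sᶜ, ER.glap G a.1 y = 0 := by
        rw [Finset.sum_add_sum_compl]
        exact hrow a.1
      have hcoe : ∑ b : {x // x ∈ S}, ER.glap G a.1 b.1 = ∑ y ∈ S, ER.glap G a.1 y :=
        Finset.sum_coe_sort S (fun y => ER.glap G a.1 y)
      have hcompl : ∑ y ∈ Sᶜ, ER.glap G a.1 y = -∑ y ∈ Sᶜ, ER.gadj G a.1 y := by
        rw [← Finset.sum_neg_distrib]
        apply Finset.sum_congr rfl
        intro y hy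
        apply hoffd
        intro hxy
        rw [Finset.mem_compl] at hy
        exact hy (hxy ▸ a.2)
      rw [hcoe]
      linarith [hsplit, hcompl]
    have hcol : ∀ y : Fin N, ∑ x, ER.gadj G x y = (G.degree y : ℝ) := by
      intro y
      rw [hAg]
      have h := SimpleGraph.adjMatrix_mulVec_const_apply (α := ℝ) (G := G) (a := (1:ℝ)) (v := y)
      rw [mul_one] at h
      have hsymm : ∀ x, (G.adjMatrix ℝ) x y = (G.adjMatrix ℝ) y x := by
        intro x
        by_cases hadj : G.Adj x y
        · rw [SimpleGraph.adjMatrix_apply, SimpleGraph.adjMatrix_apply, if_pos hadj,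
            if_pos ((G.adj_comm x y).mp hadj)]
        · rw [SimpleGraph.adjMatrix_apply, SimpleGraph.adjMatrix_apply, if_neg hadj,
            if_neg (fun h' => hadj ((G.adj_comm y x).mp h'))]
      calc ∑ x, (G.adjMatrix ℝ) x y = ∑ x, (G.adjMatrix ℝ) y x :=
            Finset.sum_congr rfl (fun x _ => hsymm x)
        _ = (G.adjMatrix ℝ *ᵥ fun _ => (1:ℝ)) y := by
            simp [Matrix.mulVec, dotProduct]
        _ = (G.degree y : ℝ) := h
    calc (fun _ : {x // x ∈ S} => (1:ℝ)) ⬝ᵥ M *ᵥ (fun _ => (1:ℝ))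
        = ∑ a : {x // x ∈ S}, ∑ b : {x // x ∈ S}, ER.glap G a.1 b.1 := hstart
      _ = ∑ a : {x // x ∈ S}, ∑ y ∈ Sᶜ, ER.gadj G a.1 y :=
          Finset.sum_congr rfl (fun a _ => hinner a)
      _ = ∑ x ∈ S, ∑ y ∈ Sᶜ, ER.gadj G x y :=
          Finset.sum_coe_sort S (fun x => ∑ y ∈ Sᶜ, ER.gadj G x y)
      _ ≤ ∑ x, ∑ y ∈ Sᶜ, ER.gadj G x y := by
          apply Finset.sum_le_sum_of_subset_of_nonneg (Finset.subset_univ S)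
          intro x _ _
          exact Finset.sum_nonneg fun y _ => hAnn x y
      _ = ∑ y ∈ Sᶜ, ∑ x, ER.gadj G x y := Finset.sum_comm
      _ = ∑ y ∈ Sᶜ, (G.degree y : ℝ) := Finset.sum_congr rfl (fun y _ => hcol y)
      _ ≤ ∑ _y ∈ Sᶜ, 𝒞 * d := by
          apply Finset.sum_le_sum
          intro y _
          rw [← hdeg_eq]
          exact hdeg y
      _ = (Sᶜ.card : ℝ) * (𝒞 * d) := by rw [Finset.sum_const, nsmul_eq_mul]
      _ = 𝒞 * d * (Vfin.card : ℝ) := by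
          rw [hScompl, compl_compl]
          ring
  obtain ⟨i₀, -, hmin⟩ := Finset.exists_min_image Finset.univ eigs Finset.univ_nonempty
  have hone : (fun _ : {x // x ∈ S} => (1:ℝ)) ⬝ᵥ (fun _ : {x // x ∈ S} => (1:ℝ))
      = (S.card : ℝ) := by
    simp [dotProduct]
  have hray : eigs i₀ * (S.card:ℝ) ≤ 𝒞 * d * (Vfin.card:ℝ) := by
    have h1 := stmt13aux_qf_spectral hH (fun _ => (1:ℝ))
    have h2 := stmt13aux_qf_norm hH (fun _ => (1:ℝ))
    set w := star (hH.eigenvectorUnitary : Matrix {x // x ∈ S} {x // x ∈ S} ℝ)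
      *ᵥ (fun _ => (1:ℝ)) with hw
    have h3 : eigs i₀ * (S.card:ℝ) = ∑ i, eigs i₀ * (w i)^2 := by
      rw [← Finset.mul_sum]
      congr 1
      calc (S.card:ℝ) = (fun _ : {x // x ∈ S} => (1:ℝ)) ⬝ᵥ (fun _ => (1:ℝ)) := hone.symm
        _ = w ⬝ᵥ w := h2.symm
        _ = ∑ i, w i ^ 2 := by simp [dotProduct, pow_two]
    calc eigs i₀ * (S.card:ℝ) = ∑ i, eigs i₀ * w i ^ 2 := h3
      _ ≤ ∑ i, eigs i * w i ^ 2 := Finset.sum_le_sum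
          (fun i _ => mul_le_mul_of_nonneg_right (hmin i (Finset.mem_univ i)) (sq_nonneg _))
      _ = (fun _ : {x // x ∈ S} => (1:ℝ)) ⬝ᵥ M *ᵥ (fun _ => (1:ℝ)) := h1.symm
      _ ≤ 𝒞 * d * (Vfin.card:ℝ) := hQF1
  have hμbound : eigs i₀ ≤ 2 * 𝒞 / ε * (N:ℝ) ^ (-c) := by
    have e1 : eigs i₀ ≤ 𝒞 * d * (Vfin.card:ℝ) / (S.card:ℝ) := by
      rw [le_div_iff₀ hSpos]
      exact hray
    have e2 : 𝒞 * d * (Vfin.card:ℝ) / (S.card:ℝ) ≤ 𝒞 * d * (N:ℝ)^((1:ℝ)-δ) / ((N:ℝ)/2) := by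
      apply div_le_div₀ (by positivity) ?_ (by positivity) hScard
      have : (0:ℝ) ≤ 𝒞 * d := by positivity
      exact mul_le_mul_of_nonneg_left hVc this
    have e3 : 𝒞 * d * (N:ℝ)^((1:ℝ)-δ) / ((N:ℝ)/2) = 2 * 𝒞 * d * (N:ℝ)^(-δ) := by
      have h1 : (N:ℝ)^((1:ℝ)-δ) = (N:ℝ) * (N:ℝ)^(-δ) := by
        rw [show (1:ℝ)-δ = 1 + -δ by ring, Real.rpow_add hN0, Real.rpow_one]
      rw [h1]
      field_simp
    have e4 : d ≤ (N:ℝ)^ε / ε := le_trans hdlog (Real.log_le_rpow_div hN0.le hε)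
    have e5 : 2 * 𝒞 * d * (N:ℝ)^(-δ) ≤ 2 * 𝒞 * ((N:ℝ)^ε / ε) * (N:ℝ)^(-δ) := by
      have hNd : (0:ℝ) ≤ (N:ℝ)^(-δ) := by positivity
      have h𝒞2 : (0:ℝ) ≤ 2 * 𝒞 := by positivity
      apply mul_le_mul_of_nonneg_right _ hNd
      exact mul_le_mul_of_nonneg_left e4 h𝒞2
    have e6 : 2 * 𝒞 * ((N:ℝ)^ε / ε) * (N:ℝ)^(-δ) = (2 * 𝒞 / ε) * (N:ℝ)^(ε - δ) := by
      rw [show ε - δ = ε + -δ by ring, Real.rpow_add hN0]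
      ring
    have e7 : (N:ℝ)^(ε - δ) ≤ (N:ℝ)^(-c) := by
      apply Real.rpow_le_rpow_of_exponent_le hN1
      rw [hεdef]
      linarith
    calc eigs i₀ ≤ 𝒞 * d * (Vfin.card:ℝ) / (S.card:ℝ) := e1
      _ ≤ 𝒞 * d * (N:ℝ)^((1:ℝ)-δ) / ((N:ℝ)/2) := e2
      _ = 2 * 𝒞 * d * (N:ℝ)^(-δ) := e3
      _ ≤ 2 * 𝒞 * ((N:ℝ)^ε / ε) * (N:ℝ)^(-δ) := e5
      _ = (2 * 𝒞 / ε) * (N:ℝ)^(ε - δ) := e6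
      _ ≤ (2 * 𝒞 / ε) * (N:ℝ)^(-c) :=
          mul_le_mul_of_nonneg_left e7 (by positivity)
  have huniq : ∀ i j, i ≠ j → eigs i < τ*d/2 → eigs j < τ*d/2 → False := by
    intro i j hij hi hj
    set u : {x // x ∈ S} → {x // x ∈ S} → ℝ := fun k => ⇑(hH.eigenvectorBasis k) with hu
    obtain ⟨a, b, hab, habsum⟩ : ∃ a b : ℝ, (a ≠ 0 ∨ b ≠ 0) ∧
        a * (∑ x, u i x) + b * (∑ x, u j x) = 0 := by
      by_cases hsi : (∑ x, u i x) = 0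
      · exact ⟨1, 0, Or.inl one_ne_zero, by rw [hsi]; ring⟩
      · exact ⟨∑ x, u j x, -(∑ x, u i x), Or.inr (neg_ne_zero.mpr hsi), by ring⟩
    set v : {x // x ∈ S} → ℝ := a • u i + b • u j with hv
    have hvsum : (∑ x, v x) = 0 := by
      simp only [hv, Pi.add_apply, Pi.smul_apply, smul_eq_mul]
      rw [Finset.sum_add_distrib, ← Finset.mul_sum, ← Finset.mul_sum]
      exact habsum
    have hwv : star (hH.eigenvectorUnitary : Matrix {x // x ∈ S} {x // x ∈ S} ℝ) *ᵥ v
        = a • (Pi.single i (1:ℝ) : {x // x ∈ S} → ℝ) + b • (Pi.single j (1:ℝ) : {x // x ∈ S} → ℝ) := by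
      rw [hv]
      rw [Matrix.mulVec_add, Matrix.mulVec_smul, Matrix.mulVec_smul, hu]
      rw [Matrix.IsHermitian.star_eigenvectorUnitary_mulVec,
        Matrix.IsHermitian.star_eigenvectorUnitary_mulVec]
    have happ : ∀ k, (a • (Pi.single i (1:ℝ) : {x // x ∈ S} → ℝ) + b • (Pi.single j (1:ℝ) : {x // x ∈ S} → ℝ)) k
        = (if k = i then a else 0) + (if k = j then b else 0) := by
      intro k
      simp only [Pi.add_apply, Pi.smul_apply, Pi.single_apply, smul_eq_mul]
      by_cases hki : k = i <;> by_cases hkj : k = j <;> simp [hki, hkj]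
    have hQv : v ⬝ᵥ M *ᵥ v = a^2 * eigs i + b^2 * eigs j := by
      rw [stmt13aux_qf_spectral hH v, hwv]
      have hterm : ∀ k, eigs k * ((a • (Pi.single i (1:ℝ) : {x // x ∈ S} → ℝ) + b • (Pi.single j (1:ℝ) : {x // x ∈ S} → ℝ)) k)^2
          = (if k = i then a^2 * eigs i else 0) + (if k = j then b^2 * eigs j else 0) := by
        intro k
        rw [happ]
        by_cases hki : k = i
        · subst hki
          rw [if_pos rfl, if_pos rfl, if_neg hij, if_neg hij]
          ring
        · by_cases hkj : k = j
          · subst hkj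
            rw [if_neg hki, if_pos rfl, if_neg hki, if_pos rfl]
            ring
          · rw [if_neg hki, if_neg hkj, if_neg hki, if_neg hkj]
            ring
      rw [Finset.sum_congr rfl (fun k _ => hterm k), Finset.sum_add_distrib,
        Finset.sum_ite_eq' Finset.univ i (fun _ => a^2 * eigs i),
        Finset.sum_ite_eq' Finset.univ j (fun _ => b^2 * eigs j)]
      simp
    have hnv : v ⬝ᵥ v = a^2 + b^2 := by
      rw [← stmt13aux_qf_norm hH v, hwv]
      have hterm : ∀ k, ((a • (Pi.single i (1:ℝ) : {x // x ∈ S} → ℝ) + b • (Pi.single j (1:ℝ) : {x // x ∈ S} → ℝ)) k)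
            * ((a • (Pi.single i (1:ℝ) : {x // x ∈ S} → ℝ) + b • (Pi.single j (1:ℝ) : {x // x ∈ S} → ℝ)) k)
          = (if k = i then a^2 else 0) + (if k = j then b^2 else 0) := by
        intro k
        rw [happ]
        by_cases hki : k = i
        · subst hki
          rw [if_pos rfl, if_pos rfl, if_neg hij, if_neg hij]
          ring
        · by_cases hkj : k = j
          · subst hkj
            rw [if_neg hki, if_pos rfl, if_neg hki, if_pos rfl]
            ring
          · rw [if_neg hki, if_neg hkj, if_neg hki, if_neg hkj]
            ring
      rw [dotProduct]
      rw [Finset.sum_congr rfl (fun k _ => hterm k), Finset.sum_add_distrib,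
        Finset.sum_ite_eq' Finset.univ i (fun _ => a^2),
        Finset.sum_ite_eq' Finset.univ j (fun _ => b^2)]
      simp
    have hpos : 0 < a^2 + b^2 := by
      rcases hab with h | h
      · have h2 : 0 < a^2 := lt_of_le_of_ne (sq_nonneg a) (Ne.symm (pow_ne_zero 2 h))
        nlinarith [sq_nonneg b]
      · have h2 : 0 < b^2 := lt_of_le_of_ne (sq_nonneg b) (Ne.symm (pow_ne_zero 2 h))
        nlinarith [sq_nonneg a]
    have hlow := hQFlow v hvsum
    rw [hQv, hnv] at hlow
    have hup : a^2 * eigs i + b^2 * eigs j < (τ*d/2) * (a^2 + b^2) := by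
      rcases hab with h | h
      · have h2 : 0 < a^2 := lt_of_le_of_ne (sq_nonneg a) (Ne.symm (pow_ne_zero 2 h))
        nlinarith [sq_nonneg b, mul_le_mul_of_nonneg_left hj.le (sq_nonneg b)]
      · have h2 : 0 < b^2 := lt_of_le_of_ne (sq_nonneg b) (Ne.symm (pow_ne_zero 2 h))
        nlinarith [sq_nonneg a, mul_le_mul_of_nonneg_left hi.le (sq_nonneg a)]
    have hmid : (τ*d/2) * (a^2 + b^2) ≤ (τ * d - 𝒞 * Real.sqrt d) * (a^2 + b^2) :=
      mul_le_mul_of_nonneg_right (by linarith [hCd]) hpos.le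
    linarith
  refine ⟨eigs i₀, ?_, ?_, ?_⟩
  · rw [hspec, Multiset.mem_map]
    exact ⟨i₀, Finset.mem_univ_val i₀, rfl⟩
  · rw [abs_of_nonneg (heig0 i₀)]
    exact hμbound
  · intro ν hν
    by_contra hcon
    push_neg at hcon
    rw [hspec] at hν
    by_cases hνμ : ν = eigs i₀
    · have h2 : 2 ≤ Multiset.count (eigs i₀) (Multiset.map eigs Finset.univ.val) := by
        have h1 : 1 ≤ Multiset.count ν ((Multiset.map eigs Finset.univ.val).erase (eigs i₀)) :=
          Multiset.one_le_count_iff_mem.mpr hν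
        rw [hνμ, Multiset.count_erase_self] at h1
        omega
      rw [Multiset.count_map] at h2
      have h3 : 1 < (Finset.filter (fun a => eigs i₀ = eigs a) Finset.univ).card := by
        rw [Finset.card_def, Finset.filter_val]
        omega
      obtain ⟨a, ha, b, hb, hab⟩ := Finset.one_lt_card.mp h3
      have hea : eigs a = ν := by
        rw [hνμ]; exact ((Finset.mem_filter.mp ha).2).symm
      have heb : eigs b = ν := by
        rw [hνμ]; exact ((Finset.mem_filter.mp hb).2).symm
      exact huniq a b hab (hea ▸ hcon) (heb ▸ hcon)
    · have hνmem : ν ∈ Multiset.map eigs Finset.univ.val := Multiset.mem_of_mem_erase hν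
      rw [Multiset.mem_map] at hνmem
      obtain ⟨j, -, hj⟩ := hνmem
      have hij : i₀ ≠ j := fun h => hνμ (by rw [← hj, ← h])
      have hi0 : eigs i₀ < τ * d / 2 := lt_of_le_of_lt
        (le_of_le_of_eq (hmin j (Finset.mem_univ j)) hj) hcon
      exact huniq i₀ j hij hi0 (hj ▸ hcon)
end
end

section
/- Let t ≥ 1 be an integer. For any tree T with |T| ≤ t vertices and any multiset X̂ of vertices of T, the smallest eigenvalue of L(𝕃_t; {1}) (the weighted Laplacian of the line of size t with unit weight at the endpoint 1) is less than or equal to the smallest nonzero element of Spec(L(T; X̂)), i.e. λ₁(L(𝕃_t,{1})) ≤ min(Spec(L(T,X̂)) \ {0}). -/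
open MeasureTheory Filter Real Topology

noncomputable section

noncomputable section

/-- The weighted Laplacian `L(𝕃_t; {1})` of the line of size `t` with unit weight at the
endpoint (vertex `0` of `SimpleGraph.pathGraph t`). -/
def lineLap (t : ℕ) : Matrix (Fin t) (Fin t) ℝ :=
  ER.glap (SimpleGraph.pathGraph t) +
    Matrix.diagonal (fun i : Fin t => if (i : ℕ) = 0 then (1 : ℝ) else 0)


open Matrix Finset



lemma aux_exists_eigenvector {m : Type*} [Fintype m] [DecidableEq m] (A : Matrix m m ℝ) {μ : ℝ}
    (h : μ ∈ spectrum ℝ A) : ∃ v, v ≠ 0 ∧ A *ᵥ v = μ • v := by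
  rw [spectrum.mem_iff] at h
  have hdet : (algebraMap ℝ (Matrix m m ℝ) μ - A).det = 0 := by
    by_contra hd
    exact h ((Matrix.isUnit_iff_isUnit_det _).2 (isUnit_iff_ne_zero.2 hd))
  obtain ⟨v, hv0, hv⟩ := (Matrix.exists_mulVec_eq_zero_iff).2 hdet
  refine ⟨v, hv0, ?_⟩
  have h2 : (algebraMap ℝ (Matrix m m ℝ) μ - A) *ᵥ v = μ • v - A *ᵥ v := by
    rw [Matrix.sub_mulVec]
    congr 1
    rw [Algebra.algebraMap_eq_smul_one, Matrix.smul_mulVec, Matrix.one_mulVec]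
  rw [h2] at hv
  exact (sub_eq_zero.mp hv).symm

lemma aux_quad_lower {m : Type*} [Fintype m] [DecidableEq m] {A : Matrix m m ℝ}
    (hA : A.IsHermitian) {c : ℝ} (hc : ∀ i, c ≤ hA.eigenvalues i) (g : m → ℝ) :
    c * (g ⬝ᵥ g) ≤ g ⬝ᵥ (A *ᵥ g) := by
  set U : Matrix m m ℝ := (hA.eigenvectorUnitary : Matrix m m ℝ) with hU
  have hUU : U * star U = 1 := Matrix.mem_unitaryGroup_iff.mp hA.eigenvectorUnitary.2
  set y : m → ℝ := star U *ᵥ g with hy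
  have key1 : ∀ z : m → ℝ, g ⬝ᵥ (U *ᵥ z) = y ⬝ᵥ z := by
    intro z
    rw [Matrix.dotProduct_mulVec]
    congr 1
    rw [hy, Matrix.star_eq_conjTranspose, Matrix.conjTranspose_eq_transpose_of_trivial,
      Matrix.mulVec_transpose]
  have hgg : g ⬝ᵥ g = y ⬝ᵥ y := by
    calc g ⬝ᵥ g = g ⬝ᵥ ((U * star U) *ᵥ g) := by rw [hUU, Matrix.one_mulVec]
    _ = g ⬝ᵥ (U *ᵥ (star U *ᵥ g)) := by rw [Matrix.mulVec_mulVec]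
    _ = y ⬝ᵥ y := key1 _
  have hAg : g ⬝ᵥ (A *ᵥ g) = ∑ i, hA.eigenvalues i * (y i * y i) := by
    conv_lhs => rw [hA.spectral_theorem, Unitary.conjStarAlgAut_apply]
    rw [Matrix.mul_assoc, ← Matrix.mulVec_mulVec, ← Matrix.mulVec_mulVec, key1]
    rw [dotProduct]
    refine Finset.sum_congr rfl fun i _ => ?_
    rw [Matrix.mulVec_diagonal]
    simp [RCLike.ofReal_real_eq_id]
    ring
  rw [hAg, hgg, dotProduct]
  calc c * ∑ i, y i * y i = ∑ i, c * (y i * y i) := by rw [Finset.mul_sum]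
  _ ≤ ∑ i, hA.eigenvalues i * (y i * y i) :=
      Finset.sum_le_sum fun i _ => mul_le_mul_of_nonneg_right (hc i) (mul_self_nonneg _)

lemma aux_dot_self_pos {m : Type*} [Fintype m] {v : m → ℝ} (hv : v ≠ 0) : 0 < v ⬝ᵥ v := by
  have h1 : 0 ≤ v ⬝ᵥ v := Finset.sum_nonneg fun i _ => mul_self_nonneg _
  rcases h1.lt_or_eq with h | h
  · exact h
  · exact absurd (dotProduct_self_eq_zero.mp h.symm) hv

lemma aux_spec_lower {m : Type*} [Fintype m] [DecidableEq m] {A : Matrix m m ℝ}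
    (hA : A.IsHermitian) {c : ℝ} (hc : ∀ i, c ≤ hA.eigenvalues i) {μ : ℝ}
    (hμ : μ ∈ spectrum ℝ A) : c ≤ μ := by
  obtain ⟨v, hv0, hv⟩ := aux_exists_eigenvector A hμ
  have h1 := aux_quad_lower hA hc v
  rw [hv] at h1
  have h2 : v ⬝ᵥ (μ • v) = μ * (v ⬝ᵥ v) := by
    simp [dotProduct, Finset.mul_sum, mul_comm, mul_left_comm, pow_two]
  rw [h2] at h1
  exact le_of_mul_le_mul_right h1 (aux_dot_self_pos hv0)

lemma aux_sInf_le {t : ℕ} (ht : 1 ≤ t) {A : Matrix (Fin t) (Fin t) ℝ} (hA : A.IsHermitian)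
    {g : Fin t → ℝ} (hg : 0 < g ⬝ᵥ g) {μ : ℝ} (hq : g ⬝ᵥ (A *ᵥ g) ≤ μ * (g ⬝ᵥ g)) :
    sInf (spectrum ℝ A) ≤ μ := by
  haveI : Nonempty (Fin t) := ⟨⟨0, ht⟩⟩
  have hbdd : BddBelow (spectrum ℝ A) := by
    refine ⟨Finset.univ.inf' Finset.univ_nonempty hA.eigenvalues, fun ν hν => ?_⟩
    exact aux_spec_lower hA (fun i => Finset.inf'_le _ (Finset.mem_univ i)) hν
  have hle : ∀ i, sInf (spectrum ℝ A) ≤ hA.eigenvalues i := fun i =>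
    csInf_le hbdd (hA.eigenvalues_mem_spectrum_real i)
  have h1 := aux_quad_lower hA hle g
  exact le_of_mul_le_mul_right (h1.trans hq) hg



lemma aux_getVert_inj {V : Type*} {G : SimpleGraph V} {a b : V} (p : G.Walk a b) (hp : p.IsPath) :
    ∀ i, i ≤ p.length → ∀ j, j ≤ p.length → p.getVert i = p.getVert j → i = j := by
  induction p with
  | nil => intro i hi j hj _; simp at hi hj; omega
  | @cons a c b hadj q ih =>
    rw [SimpleGraph.Walk.cons_isPath_iff] at hp
    intro i hi j hj hij
    rw [SimpleGraph.Walk.length_cons] at hi hj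
    match i, j with
    | 0, 0 => rfl
    | 0, (j+1) =>
      exfalso
      apply hp.2
      rw [SimpleGraph.Walk.mem_support_iff_exists_getVert]
      refine ⟨j, ?_, by omega⟩
      have : (q.cons hadj).getVert (j+1) = q.getVert j := SimpleGraph.Walk.getVert_cons_succ q hadj
      rw [this] at hij
      rw [← hij, SimpleGraph.Walk.getVert_zero]
    | (i+1), 0 =>
      exfalso
      apply hp.2
      rw [SimpleGraph.Walk.mem_support_iff_exists_getVert]
      refine ⟨i, ?_, by omega⟩
      have : (q.cons hadj).getVert (i+1) = q.getVert i := SimpleGraph.Walk.getVert_cons_succ q hadj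
      rw [this] at hij
      rw [hij, SimpleGraph.Walk.getVert_zero]
    | (i+1), (j+1) =>
      have h1 : (q.cons hadj).getVert (i+1) = q.getVert i := SimpleGraph.Walk.getVert_cons_succ q hadj
      have h2 : (q.cons hadj).getVert (j+1) = q.getVert j := SimpleGraph.Walk.getVert_cons_succ q hadj
      rw [h1, h2] at hij
      have := ih hp.1 i (by omega) j (by omega) hij
      omega

lemma aux_path_sum {V : Type*} [Fintype V] [DecidableEq V] {G : SimpleGraph V}
    (inst : DecidableRel G.Adj) {a b : V} (p : G.Walk a b) (hp : p.IsPath) (h : V → ℝ) :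
    2 * ∑ k ∈ Finset.range p.length, (h (p.getVert k) - h (p.getVert (k+1)))^2 ≤
      ∑ u : V, ∑ v : V, if G.Adj u v then (h u - h v)^2 else 0 := by
  classical
  set q := p.getVert with hq
  set F : V × V → ℝ := fun uv => if G.Adj uv.1 uv.2 then (h uv.1 - h uv.2)^2 else 0 with hF
  have hFnn : ∀ uv : V × V, 0 ≤ F uv := by
    intro uv; simp only [hF]; split <;> positivity
  have hRHS : ∑ u : V, ∑ v : V, (if G.Adj u v then (h u - h v)^2 else 0)
      = ∑ uv ∈ Finset.univ ×ˢ Finset.univ, F uv := by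
    rw [Finset.sum_product]
  set s1 : Finset (V × V) := (Finset.range p.length).image (fun k => (q k, q (k+1))) with hs1
  set s2 : Finset (V × V) := (Finset.range p.length).image (fun k => (q (k+1), q k)) with hs2
  have hinj : ∀ k ∈ Finset.range p.length, ∀ m ∈ Finset.range p.length,
      q k = q m → k = m := fun k hk m hm e =>
    aux_getVert_inj p hp k (by simp at hk; omega) m (by simp at hm; omega) e
  have hinj1 : ∀ k ∈ Finset.range p.length, ∀ m ∈ Finset.range p.length,
      (q k, q (k+1)) = (q m, q (m+1)) → k = m := by
    intro k hk m hm e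
    exact hinj k hk m hm (congrArg Prod.fst e)
  have hinj2 : ∀ k ∈ Finset.range p.length, ∀ m ∈ Finset.range p.length,
      (q (k+1), q k) = (q (m+1), q m) → k = m := by
    intro k hk m hm e
    exact hinj k hk m hm (congrArg Prod.snd e)
  have hdisj : Disjoint s1 s2 := by
    rw [Finset.disjoint_left]
    rintro ⟨u, v⟩ h1 h2
    rw [hs1, Finset.mem_image] at h1
    rw [hs2, Finset.mem_image] at h2
    obtain ⟨k, hk, ek⟩ := h1
    obtain ⟨m, hm, em⟩ := h2
    have e1 : q k = q (m+1) := by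
      have a1 : q k = u := (Prod.ext_iff.1 ek).1
      have a2 : q (m+1) = u := (Prod.ext_iff.1 em).1
      rw [a1, a2]
    have e2 : q (k+1) = q m := by
      have a1 : q (k+1) = v := (Prod.ext_iff.1 ek).2
      have a2 : q m = v := (Prod.ext_iff.1 em).2
      rw [a1, a2]
    simp only [Finset.mem_range] at hk hm
    have hk1 := aux_getVert_inj p hp k (by omega) (m+1) (by omega) e1
    have hk2 := aux_getVert_inj p hp (k+1) (by omega) m (by omega) e2
    omega
  have hsum1 : ∑ uv ∈ s1, F uv = ∑ k ∈ Finset.range p.length, (h (q k) - h (q (k+1)))^2 := by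
    rw [hs1, Finset.sum_image hinj1]
    refine Finset.sum_congr rfl fun k hk => ?_
    simp only [Finset.mem_range] at hk
    simp only [hF]
    rw [if_pos (p.adj_getVert_succ hk)]
  have hsum2 : ∑ uv ∈ s2, F uv = ∑ k ∈ Finset.range p.length, (h (q k) - h (q (k+1)))^2 := by
    rw [hs2, Finset.sum_image hinj2]
    refine Finset.sum_congr rfl fun k hk => ?_
    simp only [Finset.mem_range] at hk
    simp only [hF]
    rw [if_pos (p.adj_getVert_succ hk).symm]
    ring
  have hsub : s1 ∪ s2 ⊆ Finset.univ ×ˢ Finset.univ := by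
    intro x _; simp
  calc 2 * ∑ k ∈ Finset.range p.length, (h (q k) - h (q (k+1)))^2
      = ∑ uv ∈ s1 ∪ s2, F uv := by
        rw [Finset.sum_union hdisj, hsum1, hsum2]; ring
    _ ≤ ∑ uv ∈ Finset.univ ×ˢ Finset.univ, F uv :=
        Finset.sum_le_sum_of_subset_of_nonneg hsub (fun x _ _ => hFnn x)
    _ = _ := hRHS.symm




section
variable {V : Type*} [Fintype V] [DecidableEq V] (G : SimpleGraph V) [inst : DecidableRel G.Adj]

lemma aux_key (hGc : G.Connected)
    {t : ℕ} (ht : 1 ≤ t) (hcard : Fintype.card V ≤ t) (w : V → ℕ) {μ : ℝ} (hμpos : 0 < μ)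
    {f : V → ℝ}
    (hf : (G.lapMatrix ℝ + Matrix.diagonal (fun x => (w x : ℝ))) *ᵥ f = μ • f)
    (hpos : ∃ x, 0 < f x) :
    sInf (spectrum ℝ (lineLap t)) ≤ μ := by
  classical
  set M : Matrix V V ℝ := G.lapMatrix ℝ + Matrix.diagonal (fun x => (w x : ℝ)) with hM
  set h : V → ℝ := fun x => max (f x) 0 with hh
  have hhnn : ∀ x, 0 ≤ h x := fun x => le_max_right _ _
  have hhf : ∀ x, h x * f x = h x * h x := by
    intro x
    rcases le_or_gt 0 (f x) with hx | hx
    · simp [hh, max_eq_left hx]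
    · simp [hh, max_eq_right hx.le]
  have hzero : ∀ x, h x * (f x - h x) = 0 := by
    intro x
    rcases le_or_gt 0 (f x) with hx | hx
    · simp [hh, max_eq_left hx]
    · simp [hh, max_eq_right hx.le]
  have hfh : ∀ x, f x - h x ≤ 0 := by
    intro x
    rcases le_or_gt 0 (f x) with hx | hx
    · simp [hh, max_eq_left hx]
    · simp [hh, max_eq_right hx.le]; linarith
  have hMoff : ∀ u v : V, u ≠ v → M u v ≤ 0 := by
    intro u v huv
    simp only [hM, Matrix.add_apply, SimpleGraph.lapMatrix, Matrix.sub_apply,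
      SimpleGraph.degMatrix, Matrix.diagonal_apply_ne _ huv, SimpleGraph.adjMatrix_apply]
    split <;> norm_num
  -- quadratic form bound
  have hQ : h ⬝ᵥ (M *ᵥ h) ≤ μ * (h ⬝ᵥ h) := by
    have e1 : h ⬝ᵥ (M *ᵥ f) = μ * (h ⬝ᵥ h) := by
      rw [hf]
      simp only [dotProduct, Pi.smul_apply, smul_eq_mul, Finset.mul_sum]
      refine Finset.sum_congr rfl fun x _ => ?_
      rw [← mul_assoc, mul_comm (h x) μ, mul_assoc, hhf x]
    have e3 : 0 ≤ h ⬝ᵥ (M *ᵥ (f - h)) := by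
      simp only [dotProduct, Matrix.mulVec, Finset.mul_sum]
      refine Finset.sum_nonneg fun u _ => Finset.sum_nonneg fun v _ => ?_
      rcases eq_or_ne u v with rfl | huv
      · have e : h u * (M u u * (f - h) u) = M u u * (h u * (f u - h u)) := by
          simp only [Pi.sub_apply]; ring
        rw [e, hzero u, mul_zero]
      · have h1 : 0 ≤ M u v * (f - h) v := mul_nonneg_of_nonpos_of_nonpos (hMoff u v huv) (hfh v)
        exact mul_nonneg (hhnn u) h1
    have e4 : h ⬝ᵥ (M *ᵥ (f - h)) = h ⬝ᵥ (M *ᵥ f) - h ⬝ᵥ (M *ᵥ h) := by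
      rw [Matrix.mulVec_sub, dotProduct_sub]
    rw [e4, e1] at e3
    linarith
  -- anchor vertex
  have hanchor : ∃ v0 : V, h v0 * h v0 ≤ ∑ x : V, (w x : ℝ) * (h x * h x) := by
    by_cases hex : ∃ z, f z ≤ 0
    · obtain ⟨z, hz⟩ := hex
      refine ⟨z, ?_⟩
      have hz0 : h z = 0 := by simp [hh, max_eq_right hz]
      rw [hz0, mul_zero]
      exact Finset.sum_nonneg fun x _ =>
        mul_nonneg (Nat.cast_nonneg _) (mul_self_nonneg _)
    · push_neg at hex
      haveI : Nonempty V := hGc.nonempty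
      have hfeq : h = f := by
        funext x; simp [hh, max_eq_left (hex x).le]
      -- sum over all coordinates of the eigenvalue equation
      have hL0 : ∑ x : V, (G.lapMatrix ℝ *ᵥ f) x = 0 := by
        have hcol : ∀ y : V, ∑ x : V, G.lapMatrix ℝ x y = 0 := by
          intro y
          have hrow : ∑ x : V, G.lapMatrix ℝ y x = 0 := by
            have := congrFun (G.lapMatrix_mulVec_const_eq_zero (R := ℝ)) y
            simpa [Matrix.mulVec, dotProduct] using this
          rw [← hrow]
          refine Finset.sum_congr rfl fun x _ => ?_
          exact ((G.isSymm_lapMatrix (R := ℝ)).apply x y).symm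
        calc ∑ x : V, (G.lapMatrix ℝ *ᵥ f) x
            = ∑ x : V, ∑ y : V, G.lapMatrix ℝ x y * f y := by
              refine Finset.sum_congr rfl fun x _ => ?_
              simp [Matrix.mulVec, dotProduct]
          _ = ∑ y : V, (∑ x : V, G.lapMatrix ℝ x y) * f y := by
              rw [Finset.sum_comm]
              simp_rw [Finset.sum_mul]
          _ = 0 := by simp [hcol]
      have hsum : ∑ x : V, (w x : ℝ) * f x = μ * ∑ x : V, f x := by
        have e := congrArg (fun v => ∑ x : V, v x) hf
        simp only [hM, Matrix.add_mulVec, Pi.add_apply, Finset.sum_add_distrib] at e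
        rw [hL0, zero_add] at e
        simpa [Matrix.mulVec_diagonal, Finset.mul_sum] using e
      have hfs : 0 < ∑ x : V, f x :=
        Finset.sum_pos (fun x _ => hex x) Finset.univ_nonempty
      have hws : 0 < ∑ x : V, (w x : ℝ) * f x := by
        rw [hsum]; exact mul_pos hμpos hfs
      have hx0 : ∃ x0, (w x0 : ℝ) * f x0 ≠ 0 := by
        by_contra hc
        push_neg at hc
        rw [Finset.sum_eq_zero (fun x _ => hc x)] at hws
        exact lt_irrefl 0 hws
      obtain ⟨x0, hx0⟩ := hx0
      have hw1 : (1 : ℝ) ≤ (w x0 : ℝ) := by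
        have : w x0 ≠ 0 := by
          intro hz; apply hx0; rw [hz]; simp
        exact_mod_cast Nat.one_le_iff_ne_zero.2 this
      refine ⟨x0, ?_⟩
      have h1 : h x0 * h x0 ≤ (w x0 : ℝ) * (h x0 * h x0) :=
        le_mul_of_one_le_left (mul_self_nonneg _) hw1
      refine h1.trans (Finset.single_le_sum (f := fun x => (w x : ℝ) * (h x * h x))
        (fun x _ => mul_nonneg (Nat.cast_nonneg _) (mul_self_nonneg _)) (Finset.mem_univ x0))
  obtain ⟨v0, hanchor⟩ := hanchor
  -- maximum vertex
  obtain ⟨vs, -, hvs⟩ := Finset.exists_max_image Finset.univ h ⟨v0, Finset.mem_univ v0⟩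
  have hmax : ∀ x, h x ≤ h vs := fun x => hvs x (Finset.mem_univ x)
  have hvspos : 0 < h vs := by
    obtain ⟨x, hx⟩ := hpos
    have : 0 < h x := lt_max_of_lt_left hx
    exact lt_of_lt_of_le this (hmax x)
    -- path from v0 to vs
  obtain ⟨pw⟩ := hGc.preconnected v0 vs
  set p : G.Walk v0 vs := (pw.toPath : G.Path v0 vs).val with hpdef
  have hp : p.IsPath := (pw.toPath : G.Path v0 vs).property
  set l := p.length with hldef
  have hl : l < Fintype.card V := hp.length_lt
  have hlt : l < t := lt_of_lt_of_le hl hcard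
  set q : ℕ → V := p.getVert with hqdef
  have hq0 : q 0 = v0 := p.getVert_zero
  have hqsat : ∀ k, l ≤ k → q k = vs := fun k hk => p.getVert_of_length_le hk
  set g' : ℕ → ℝ := fun k => h (q k) with hg'
  set g : Fin t → ℝ := fun i => g' (i : ℕ) with hg
  letI instP : DecidableRel (SimpleGraph.pathGraph t).Adj := Classical.decRel _
  have hlineeq : lineLap t = (SimpleGraph.pathGraph t).lapMatrix ℝ +
      Matrix.diagonal (fun i : Fin t => if (i : ℕ) = 0 then (1 : ℝ) else 0) := rfl
  have hH : (lineLap t).IsHermitian := by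
    rw [hlineeq]
    exact ((SimpleGraph.posSemidef_lapMatrix ℝ (SimpleGraph.pathGraph t)).1).add
      (Matrix.isHermitian_diagonal _)
  -- diagonal part of the numerator
  have hdiagP : g ⬝ᵥ (Matrix.diagonal (fun i : Fin t => if (i : ℕ) = 0 then (1 : ℝ) else 0) *ᵥ g)
      = g' 0 * g' 0 := by
    simp only [dotProduct, Matrix.mulVec_diagonal]
    rw [Finset.sum_eq_single (⟨0, by omega⟩ : Fin t)]
    · simp; rfl
    · intro i _ hne
      have h0 : (i : ℕ) ≠ 0 := fun h0 => hne (Fin.ext h0)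
      simp [h0]
    · intro habs; exact absurd (Finset.mem_univ _) habs
  -- Laplacian part of the numerator
  have hlapP : g ⬝ᵥ ((SimpleGraph.pathGraph t).lapMatrix ℝ *ᵥ g)
      = ∑ k ∈ Finset.range l, (g' k - g' (k + 1))^2 := by
    have e0 : g ⬝ᵥ ((SimpleGraph.pathGraph t).lapMatrix ℝ *ᵥ g)
        = (∑ i : Fin t, ∑ j : Fin t,
            if (SimpleGraph.pathGraph t).Adj i j then (g i - g j)^2 else 0) / 2 := by
      rw [← Matrix.toLinearMap₂'_apply', SimpleGraph.lapMatrix_toLinearMap₂']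
    rw [e0]
    have hsplitc : ∀ i j : Fin t,
        (if (SimpleGraph.pathGraph t).Adj i j then (g i - g j)^2 else 0)
        = (if (i : ℕ) + 1 = (j : ℕ) then (g i - g j)^2 else 0)
          + (if (j : ℕ) + 1 = (i : ℕ) then (g i - g j)^2 else 0) := by
      intro i j
      by_cases h1 : (i : ℕ) + 1 = (j : ℕ) <;> by_cases h2 : (j : ℕ) + 1 = (i : ℕ)
      · omega
      · rw [if_pos (SimpleGraph.pathGraph_adj.2 (Or.inl h1)), if_pos h1, if_neg h2, add_zero]
      · rw [if_pos (SimpleGraph.pathGraph_adj.2 (Or.inr h2)), if_neg h1, if_pos h2, zero_add]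
      · rw [if_neg, if_neg h1, if_neg h2, add_zero]
        rw [SimpleGraph.pathGraph_adj]; push_neg; exact ⟨h1, h2⟩
    simp_rw [hsplitc, Finset.sum_add_distrib]
    have hswap : (∑ i : Fin t, ∑ j : Fin t, if (j : ℕ) + 1 = (i : ℕ) then (g i - g j)^2 else 0)
        = ∑ i : Fin t, ∑ j : Fin t, if (i : ℕ) + 1 = (j : ℕ) then (g i - g j)^2 else 0 := by
      rw [Finset.sum_comm]
      refine Finset.sum_congr rfl fun i _ => Finset.sum_congr rfl fun j _ => ?_
      by_cases hc : (i : ℕ) + 1 = (j : ℕ)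
      · rw [if_pos hc, if_pos hc]; ring
      · rw [if_neg hc, if_neg hc]
    rw [hswap]
    have hone : (∑ i : Fin t, ∑ j : Fin t, if (i : ℕ) + 1 = (j : ℕ) then (g i - g j)^2 else 0)
        = ∑ k ∈ Finset.range l, (g' k - g' (k + 1))^2 := by
      have hinner : ∀ i : Fin t,
          (∑ j : Fin t, if (i : ℕ) + 1 = (j : ℕ) then (g i - g j)^2 else 0)
          = if (i : ℕ) + 1 < t then (g' (i : ℕ) - g' ((i : ℕ) + 1))^2 else 0 := by
        intro i
        by_cases hi : (i : ℕ) + 1 < t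
        · have e1 : (∑ j : Fin t, if (i : ℕ) + 1 = (j : ℕ) then (g i - g j)^2 else 0)
              = (g i - g ⟨(i : ℕ) + 1, hi⟩)^2 := by
            rw [Finset.sum_eq_single (⟨(i : ℕ) + 1, hi⟩ : Fin t)]
            · rw [if_pos rfl]
            · intro j _ hne
              rw [if_neg (fun hc => hne (Fin.ext hc.symm))]
            · intro habs; exact absurd (Finset.mem_univ _) habs
          rw [e1, if_pos hi]
        · rw [if_neg hi, Finset.sum_eq_zero]
          intro j _
          rw [if_neg]
          intro hc
          exact hi (hc ▸ j.isLt)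
      simp_rw [hinner]
      rw [Fin.sum_univ_eq_sum_range (fun k => if k + 1 < t then (g' k - g' (k + 1))^2 else 0) t]
      have hsplitr : Finset.range t = Finset.range l ∪ Finset.Ico l t := by
        rw [Finset.range_eq_Ico, ← Finset.Ico_union_Ico_eq_Ico (Nat.zero_le l) hlt.le, Finset.range_eq_Ico]
      rw [hsplitr, Finset.sum_union (Finset.disjoint_left.2 (fun a ha1 ha2 => by
        simp only [Finset.mem_range] at ha1
        rw [Finset.mem_Ico] at ha2
        omega))]
      have hz : ∑ k ∈ Finset.Ico l t, (if k + 1 < t then (g' k - g' (k + 1))^2 else 0) = 0 := by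
        refine Finset.sum_eq_zero fun k hk => ?_
        rw [Finset.mem_Ico] at hk
        have e1 : g' k = h vs := by rw [hg']; simp only; rw [hqsat k hk.1]
        have e2 : g' (k + 1) = h vs := by rw [hg']; simp only; rw [hqsat (k + 1) (by omega)]
        rw [e1, e2, sub_self]
        simp
      rw [hz, add_zero]
      refine Finset.sum_congr rfl fun k hk => ?_
      rw [Finset.mem_range] at hk
      rw [if_pos (by omega)]
    rw [hone]
    ring
    -- denominator comparison
  set S : Finset V := p.support.toFinset with hS
  have hScard : S.card = l + 1 := by
    rw [hS, List.toFinset_card_of_nodup hp.support_nodup, SimpleGraph.Walk.length_support]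
  have hSim : S = (Finset.range (l + 1)).image q := by
    ext x
    simp only [hS, List.mem_toFinset, Finset.mem_image, Finset.mem_range]
    rw [SimpleGraph.Walk.mem_support_iff_exists_getVert]
    constructor
    · rintro ⟨k, hk1, hk2⟩; exact ⟨k, by omega, hk1⟩
    · rintro ⟨k, hk1, hk2⟩; exact ⟨k, hk2, by omega⟩
  have hSsum : ∑ x ∈ S, h x * h x = ∑ k ∈ Finset.range (l + 1), g' k * g' k := by
    rw [hSim, Finset.sum_image]
    intro a ha b hb hab
    rw [Finset.mem_coe, Finset.mem_range] at ha hb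
    exact aux_getVert_inj p hp a (by omega) b (by omega) hab
  have hcompl : ∑ x ∈ Sᶜ, h x * h x ≤ ((Fintype.card V - (l + 1) : ℕ) : ℝ) * (h vs * h vs) := by
    have h1 : ∑ x ∈ Sᶜ, h x * h x ≤ ∑ _x ∈ Sᶜ, h vs * h vs :=
      Finset.sum_le_sum fun x _ => mul_le_mul (hmax x) (hmax x) (hhnn x) (hhnn vs)
    have e : ∑ _x ∈ Sᶜ, (h vs * h vs) = (Sᶜ.card : ℝ) * (h vs * h vs) := by
      rw [Finset.sum_const, nsmul_eq_mul]
    rw [e] at h1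
    have ecard : Sᶜ.card = Fintype.card V - (l + 1) := by
      rw [Finset.card_compl, hScard]
    rw [ecard] at h1
    exact h1
  have hhd : h ⬝ᵥ h = ∑ x ∈ S, h x * h x + ∑ x ∈ Sᶜ, h x * h x :=
    (Finset.sum_add_sum_compl S _).symm
  have hgsum : g ⬝ᵥ g = ∑ k ∈ Finset.range (l + 1), g' k * g' k
      + ((t - (l + 1) : ℕ) : ℝ) * (h vs * h vs) := by
    have e1 : g ⬝ᵥ g = ∑ k ∈ Finset.range t, g' k * g' k :=
      Fin.sum_univ_eq_sum_range (fun k => g' k * g' k) t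
    rw [e1]
    have hsplitr : Finset.range t = Finset.range (l + 1) ∪ Finset.Ico (l + 1) t := by
      rw [Finset.range_eq_Ico,
        ← Finset.Ico_union_Ico_eq_Ico (Nat.zero_le (l + 1)) (by omega : l + 1 ≤ t), Finset.range_eq_Ico]
    rw [hsplitr, Finset.sum_union (Finset.disjoint_left.2 (fun a ha1 ha2 => by
      rw [Finset.mem_range] at ha1; rw [Finset.mem_Ico] at ha2; omega))]
    congr 1
    have e2 : ∀ k ∈ Finset.Ico (l + 1) t, g' k * g' k = h vs * h vs := by
      intro k hk
      rw [Finset.mem_Ico] at hk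
      have e3 : g' k = h vs := by show h (q k) = h vs; rw [hqsat k (by omega)]
      rw [e3]
    rw [Finset.sum_congr rfl e2, Finset.sum_const, nsmul_eq_mul, Nat.card_Ico]
  have hD : h ⬝ᵥ h ≤ g ⬝ᵥ g := by
    rw [hhd, hgsum, hSsum]
    have hcst : ((Fintype.card V - (l + 1) : ℕ) : ℝ) ≤ ((t - (l + 1) : ℕ) : ℝ) := by
      exact_mod_cast Nat.sub_le_sub_right hcard (l + 1)
    have h2 := mul_le_mul_of_nonneg_right hcst (mul_self_nonneg (h vs))
    linarith [hcompl]
  have hhpos : 0 < h ⬝ᵥ h := by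
    obtain ⟨x, hx⟩ := hpos
    have hxh : 0 < h x := lt_max_iff.mpr (Or.inl hx)
    exact Finset.sum_pos' (fun y _ => mul_self_nonneg _)
      ⟨x, Finset.mem_univ x, mul_pos hxh hxh⟩
  have hgpos : 0 < g ⬝ᵥ g := lt_of_lt_of_le hhpos hD
  -- numerator bound
  have hnum : g ⬝ᵥ (lineLap t *ᵥ g) ≤ μ * (g ⬝ᵥ g) := by
    rw [hlineeq, Matrix.add_mulVec, dotProduct_add, hlapP, hdiagP]
    have hps := aux_path_sum inst p hp h
    have hps' : 2 * ∑ k ∈ Finset.range l, (g' k - g' (k + 1))^2 ≤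
        ∑ u : V, ∑ v : V, if G.Adj u v then (h u - h v)^2 else 0 := hps
    have hlapG : h ⬝ᵥ (G.lapMatrix ℝ *ᵥ h)
        = (∑ u : V, ∑ v : V, if G.Adj u v then (h u - h v)^2 else 0) / 2 := by
      rw [← Matrix.toLinearMap₂'_apply', SimpleGraph.lapMatrix_toLinearMap₂']
    have h1 : ∑ k ∈ Finset.range l, (g' k - g' (k + 1))^2 ≤ h ⬝ᵥ (G.lapMatrix ℝ *ᵥ h) := by
      rw [hlapG]; linarith
    have hdiagG : h ⬝ᵥ (Matrix.diagonal (fun x => (w x : ℝ)) *ᵥ h)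
        = ∑ x : V, (w x : ℝ) * (h x * h x) := by
      simp only [dotProduct, Matrix.mulVec_diagonal]
      exact Finset.sum_congr rfl fun x _ => by ring
    have h2 : g' 0 * g' 0 ≤ h ⬝ᵥ (Matrix.diagonal (fun x => (w x : ℝ)) *ᵥ h) := by
      rw [hdiagG]
      have e : g' 0 = h v0 := by show h (q 0) = h v0; rw [hq0]
      rw [e]
      exact hanchor
    have h3 : h ⬝ᵥ (M *ᵥ h)
        = h ⬝ᵥ (G.lapMatrix ℝ *ᵥ h) + h ⬝ᵥ (Matrix.diagonal (fun x => (w x : ℝ)) *ᵥ h) := by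
      rw [hM, Matrix.add_mulVec, dotProduct_add]
    have h4 : μ * (h ⬝ᵥ h) ≤ μ * (g ⬝ᵥ g) := mul_le_mul_of_nonneg_left hD hμpos.le
    linarith [hQ]
  exact aux_sInf_le ht hH hgpos hnum

end

/-- For any tree `T` on at most `t` vertices and any multiset `X̂` of its
vertices (given by a multiplicity function `w`), the smallest eigenvalue of `L(𝕃_t; {1})` is at
most every nonzero eigenvalue of `L(T; X̂)`, i.e.
`λ₁(L(𝕃_t,{1})) ≤ min(Spec(L(T,X̂)) \ {0})`. -/
theorem stmt14 (t : ℕ) (ht : 1 ≤ t) (V : Type) [Fintype V] [DecidableEq V]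
    (G : SimpleGraph V) (hGc : G.Connected) (hGa : G.IsAcyclic)
    (hcard : Fintype.card V ≤ t) (w : V → ℕ) :
    ∀ μ ∈ spectrum ℝ (ER.glap G + Matrix.diagonal fun x => (w x : ℝ)), μ ≠ 0 →
      sInf (spectrum ℝ (lineLap t)) ≤ μ := by
  intro μ hμ hμ0
  letI inst : DecidableRel G.Adj := Classical.decRel _
  have hglap : ER.glap G = G.lapMatrix ℝ := rfl
  rw [hglap] at hμ
  set M : Matrix V V ℝ := G.lapMatrix ℝ + Matrix.diagonal (fun x => (w x : ℝ)) with hM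
  obtain ⟨f, hf0, hf⟩ := aux_exists_eigenvector M hμ
  have hPSD : M.PosSemidef :=
    (SimpleGraph.posSemidef_lapMatrix ℝ G).add
      (Matrix.PosSemidef.diagonal (fun x => by positivity))
  have hsf : star f = f := by
    funext x; exact star_trivial _
  have hmupos : 0 < μ := by
    have h1 := hPSD.dotProduct_mulVec_nonneg f
    rw [hsf, hf, dotProduct_smul, smul_eq_mul] at h1
    have hff : 0 < f ⬝ᵥ f := aux_dot_self_pos hf0
    rcases lt_trichotomy μ 0 with hneg | hz | hpos
    · exfalso; nlinarith
    · exact absurd hz hμ0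
    · exact hpos
  by_cases hpos : ∃ x, 0 < f x
  · exact aux_key G hGc ht hcard w hmupos hf hpos
  · push_neg at hpos
    have hf' : M *ᵥ (-f) = μ • (-f) := by
      rw [Matrix.mulVec_neg, hf, smul_neg]
    have hpos' : ∃ x, 0 < (-f) x := by
      obtain ⟨x, hx⟩ := Function.ne_iff.mp hf0
      exact ⟨x, by simpa using lt_of_le_of_ne (hpos x) hx⟩
    exact aux_key G hGc ht hcard w hmupos hf' hpos'
end
end
end

section
/- Let t ≥ 1 be an integer. The eigenvalues of the t×t matrix L(𝕃_t; {1}), i.e. the tridiagonal matrix with diagonal entries (2,2,…,2,1), sub- and super-diagonal entries −1, are exactly λ_k = 2 − 2cos(π/(2t+1) + 2kπ/(2t+1)) = 2 − 2cos((2k+1)π/(2t+1)) for 0 ≤ k < t. -/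
open MeasureTheory Filter Real Topology

noncomputable section

noncomputable section

section Aux

open Polynomial Matrix

variable {n : Type*} [Fintype n] [DecidableEq n]

lemma aux_charpoly_eval (M : Matrix n n ℝ) (μ : ℝ) :
    M.charpoly.eval μ = (μ • (1 : Matrix n n ℝ) - M).det := by
  unfold Matrix.charpoly
  rw [← Polynomial.coe_evalRingHom, RingHom.map_det]
  congr 1
  ext i j
  by_cases h : i = j <;>
    simp [Matrix.charmatrix_apply, h, Matrix.one_apply, Matrix.smul_apply, Matrix.diagonal_apply]

lemma aux_mem_spectrum (M : Matrix n n ℝ) (μ : ℝ) :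
    μ ∈ spectrum ℝ M ↔ (μ • (1 : Matrix n n ℝ) - M).det = 0 := by
  rw [spectrum.mem_iff, Matrix.isUnit_iff_isUnit_det, isUnit_iff_ne_zero, not_not,
    Algebra.algebraMap_eq_smul_one]

lemma aux_det_eq_zero_of_eigen (M : Matrix n n ℝ) (μ : ℝ) (v : n → ℝ) (hv : v ≠ 0)
    (h : M *ᵥ v = μ • v) : (μ • (1 : Matrix n n ℝ) - M).det = 0 := by
  by_contra hd
  have hu : IsUnit (μ • (1 : Matrix n n ℝ) - M) :=
    (Matrix.isUnit_iff_isUnit_det _).2 (isUnit_iff_ne_zero.2 hd)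
  obtain ⟨B, hB⟩ := hu.exists_left_inv
  apply hv
  have h0 : (μ • (1 : Matrix n n ℝ) - M) *ᵥ v = 0 := by
    rw [Matrix.sub_mulVec, Matrix.smul_mulVec, Matrix.one_mulVec, h, sub_self]
  calc v = (B * (μ • (1 : Matrix n n ℝ) - M)) *ᵥ v := by rw [hB, Matrix.one_mulVec]
    _ = B *ᵥ ((μ • (1 : Matrix n n ℝ) - M) *ᵥ v) := (Matrix.mulVec_mulVec _ _ _).symm
    _ = 0 := by rw [h0, Matrix.mulVec_zero]

lemma aux_glap_eq {V : Type*} [Fintype V] [DecidableEq V] (G : SimpleGraph V)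
    [inst : DecidableRel G.Adj] : ER.glap G = G.lapMatrix ℝ := by
  unfold ER.glap
  congr!

lemma lineLap_mulVec (t : ℕ) (θ : ℝ)
    (H : Real.sin (((t : ℝ) + 1) * θ) = Real.sin ((t : ℝ) * θ)) :
    lineLap t *ᵥ (fun j : Fin t => Real.sin (((j : ℕ) + 1) * θ)) =
      (2 - 2 * Real.cos θ) • fun j : Fin t => Real.sin (((j : ℕ) + 1) * θ) := by
  classical
  have K : ∀ a : ℝ, Real.sin (a - θ) + Real.sin (a + θ) = 2 * Real.cos θ * Real.sin a :=
    fun a => by rw [Real.sin_sub, Real.sin_add]; ring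
  funext i
  obtain ⟨n, hn⟩ := i
  unfold lineLap
  rw [Matrix.add_mulVec, aux_glap_eq, Pi.add_apply,
    SimpleGraph.lapMatrix_mulVec_apply, Matrix.mulVec_diagonal, Pi.smul_apply, smul_eq_mul]
  rcases Nat.lt_or_ge n 1 with h0 | h0
  · have hn0 : n = 0 := by omega
    subst hn0
    rcases Nat.lt_or_ge t 2 with h1 | h1
    · -- t = 1
      have ht1 : t = 1 := by omega
      have hN : (SimpleGraph.pathGraph t).neighborFinset ⟨0, hn⟩ = ∅ := by
        ext u
        have hu := u.isLt
        simp only [SimpleGraph.mem_neighborFinset, SimpleGraph.pathGraph_adj,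
          Finset.notMem_empty, iff_false]
        omega
      rw [← SimpleGraph.card_neighborFinset_eq_degree, hN]
      subst ht1
      have H' : 2 * Real.sin θ * Real.cos θ = Real.sin θ := by
        have e2 : ((1 : ℕ) : ℝ) + 1 = 2 := by norm_num
        rw [e2] at H
        rw [Real.sin_two_mul] at H
        simpa using H
      simp only [Finset.card_empty, Finset.sum_empty, Nat.cast_zero, Nat.cast_ofNat,
        Nat.cast_zero, Nat.cast_one]
      norm_num
      linear_combination H'
    · -- n = 0, t ≥ 2
      have hN : (SimpleGraph.pathGraph t).neighborFinset ⟨0, hn⟩ = {(⟨1, by omega⟩ : Fin t)} := by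
        ext u
        have hu := u.isLt
        simp only [SimpleGraph.mem_neighborFinset, SimpleGraph.pathGraph_adj,
          Finset.mem_singleton, Fin.ext_iff, Fin.val_mk]
        omega
      rw [← SimpleGraph.card_neighborFinset_eq_degree, hN, Finset.sum_singleton,
        Finset.card_singleton]
      norm_num
      rw [Real.sin_two_mul]
      ring
  · -- 1 ≤ n
    rcases Nat.lt_or_ge n (t - 1) with h2 | h2
    · -- interior
      have hne : (⟨n - 1, by omega⟩ : Fin t) ≠ ⟨n + 1, by omega⟩ := by
        simp only [ne_eq, Fin.ext_iff]
        omega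
      have hN : (SimpleGraph.pathGraph t).neighborFinset ⟨n, hn⟩ =
          {(⟨n - 1, by omega⟩ : Fin t), ⟨n + 1, by omega⟩} := by
        ext u
        have hu := u.isLt
        simp only [SimpleGraph.mem_neighborFinset, SimpleGraph.pathGraph_adj,
          Finset.mem_insert, Finset.mem_singleton, Fin.ext_iff, Fin.val_mk]
        omega
      rw [← SimpleGraph.card_neighborFinset_eq_degree, hN, Finset.sum_pair hne,
        Finset.card_pair hne]
      have e1 : (((n - 1 : ℕ) : ℝ) + 1) * θ = ((n : ℝ) + 1) * θ - θ := by
        have e0 : ((n - 1 : ℕ) : ℝ) + 1 = (n : ℝ) := by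
          exact_mod_cast (show n - 1 + 1 = n by omega)
        linear_combination θ * e0
      have e2 : (((n + 1 : ℕ) : ℝ) + 1) * θ = ((n : ℝ) + 1) * θ + θ := by
        push_cast
        ring
      rw [if_neg (show ¬(((⟨n, hn⟩ : Fin t) : ℕ) = 0) from by simp only [Fin.val_mk]; omega)]
      simp only [e1, e2]
      have K' := K (((n : ℝ) + 1) * θ)
      push_cast
      linear_combination -K'
    · -- n = t - 1, n ≥ 1
      have hnt : n + 1 = t := by omega
      have hN : (SimpleGraph.pathGraph t).neighborFinset ⟨n, hn⟩ =
          {(⟨n - 1, by omega⟩ : Fin t)} := by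
        ext u
        have hu := u.isLt
        simp only [SimpleGraph.mem_neighborFinset, SimpleGraph.pathGraph_adj,
          Finset.mem_singleton, Fin.ext_iff, Fin.val_mk]
        omega
      rw [← SimpleGraph.card_neighborFinset_eq_degree, hN, Finset.sum_singleton,
        Finset.card_singleton]
      have et : ((n : ℝ) + 1) = (t : ℝ) := by exact_mod_cast hnt
      have e1 : (((n - 1 : ℕ) : ℝ) + 1) * θ = (t : ℝ) * θ - θ := by
        have e0 : ((n - 1 : ℕ) : ℝ) + 2 = (t : ℝ) := by
          exact_mod_cast (show n - 1 + 2 = t by omega)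
        linear_combination θ * e0
      have e2 : ((n : ℝ) + 1) * θ = (t : ℝ) * θ := by linear_combination θ * et
      rw [if_neg (show ¬(((⟨n, hn⟩ : Fin t) : ℕ) = 0) from by simp only [Fin.val_mk]; omega)]
      simp only [e1, e2]
      have K' := K ((t : ℝ) * θ)
      rw [show (t : ℝ) * θ + θ = ((t : ℝ) + 1) * θ from by ring] at K'
      push_cast
      linear_combination H - K'

end Aux

/-- The eigenvalues of `L(𝕃_t; {1})` are exactly
`2 - 2 cos((2k+1)π/(2t+1))` for `0 ≤ k < t`. -/
theorem stmt16 (t : ℕ) (ht : 1 ≤ t) :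
    spectrum ℝ (lineLap t) =
      {x : ℝ | ∃ k : Fin t,
        x = 2 - 2 * Real.cos ((2 * (k : ℕ) + 1) * π / (2 * t + 1))} := by
  classical
  set f : Fin t → ℝ := fun k => 2 - 2 * Real.cos ((2 * (k : ℕ) + 1) * π / (2 * t + 1)) with hf
  have hden : (0 : ℝ) < 2 * (t : ℝ) + 1 := by positivity
  have hθpos : ∀ k : Fin t, 0 < (2 * ((k : ℕ) : ℝ) + 1) * π / (2 * (t : ℝ) + 1) := by
    intro k; positivity
  have hθlt : ∀ k : Fin t, (2 * ((k : ℕ) : ℝ) + 1) * π / (2 * (t : ℝ) + 1) < π := by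
    intro k
    rw [div_lt_iff₀ hden]
    have hk : ((k : ℕ) : ℝ) < t := by exact_mod_cast k.isLt
    nlinarith [Real.pi_pos]
  have hmem : ∀ k : Fin t, f k ∈ spectrum ℝ (lineLap t) := by
    intro k
    set θ : ℝ := (2 * ((k : ℕ) : ℝ) + 1) * π / (2 * (t : ℝ) + 1) with hθ
    have hfk : f k = 2 - 2 * Real.cos θ := by simp only [hf, hθ]
    have h1 : (2 * (t : ℝ) + 1) * θ = (2 * ((k : ℕ) : ℝ) + 1) * π := by
      rw [hθ, mul_comm, div_mul_cancel₀ _ (ne_of_gt hden)]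
    have H : Real.sin (((t : ℝ) + 1) * θ) = Real.sin ((t : ℝ) * θ) := by
      have e : ((t : ℝ) + 1) * θ = (π - (t : ℝ) * θ) + ((k : ℕ) : ℝ) * (2 * π) := by
        linear_combination h1
      rw [e, Real.sin_add_nat_mul_two_pi, Real.sin_pi_sub]
    have hv0 : (fun j : Fin t => Real.sin (((j : ℕ) + 1) * θ)) ≠ 0 := by
      intro hcon
      have h00 := congrFun hcon ⟨0, ht⟩
      simp only [Fin.val_mk, Nat.cast_zero, zero_add, one_mul, Pi.zero_apply] at h00
      exact (Real.sin_pos_of_pos_of_lt_pi (hθpos k) (hθlt k)).ne' h00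
    rw [aux_mem_spectrum]
    apply aux_det_eq_zero_of_eigen _ _ _ hv0
    rw [hfk]
    exact lineLap_mulVec t θ H
  have hc : (0 : ℝ) < π / (2 * (t : ℝ) + 1) := by positivity
  have hinj : Function.Injective f := by
    intro a b hab
    simp only [hf] at hab
    have hca : Real.cos ((2 * ((a : ℕ) : ℝ) + 1) * π / (2 * (t : ℝ) + 1)) =
        Real.cos ((2 * ((b : ℕ) : ℝ) + 1) * π / (2 * (t : ℝ) + 1)) := by linarith
    have hθab := Real.injOn_cos ⟨(hθpos a).le, (hθlt a).le⟩ ⟨(hθpos b).le, (hθlt b).le⟩ hca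
    rw [show (2 * ((a : ℕ) : ℝ) + 1) * π / (2 * (t : ℝ) + 1)
          = (2 * ((a : ℕ) : ℝ) + 1) * (π / (2 * (t : ℝ) + 1)) from by ring,
        show (2 * ((b : ℕ) : ℝ) + 1) * π / (2 * (t : ℝ) + 1)
          = (2 * ((b : ℕ) : ℝ) + 1) * (π / (2 * (t : ℝ) + 1)) from by ring] at hθab
    have h2 := mul_right_cancel₀ (ne_of_gt hc) hθab
    have h3 : ((a : ℕ) : ℝ) = ((b : ℕ) : ℝ) := by linarith
    have h4 : (a : ℕ) = (b : ℕ) := by exact_mod_cast h3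
    exact Fin.ext h4
  have hroot : ∀ k : Fin t, (lineLap t).charpoly.IsRoot (f k) := by
    intro k
    have h := (aux_mem_spectrum (lineLap t) (f k)).1 (hmem k)
    rwa [Polynomial.IsRoot, aux_charpoly_eval]
  have hp0 : (lineLap t).charpoly ≠ 0 := (Matrix.charpoly_monic _).ne_zero
  have hdeg : (lineLap t).charpoly.natDegree = t := by
    rw [Matrix.charpoly_natDegree_eq_dim, Fintype.card_fin]
  have hsub : Finset.univ.image f ⊆ (lineLap t).charpoly.roots.toFinset := by
    intro x hx
    obtain ⟨k, -, rfl⟩ := Finset.mem_image.1 hx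
    rw [Multiset.mem_toFinset, Polynomial.mem_roots hp0]
    exact hroot k
  have hcard : (lineLap t).charpoly.roots.toFinset.card ≤ (Finset.univ.image f).card := by
    rw [Finset.card_image_of_injective _ hinj, Finset.card_univ, Fintype.card_fin]
    exact le_trans (Multiset.toFinset_card_le _) (le_trans (Polynomial.card_roots' _) hdeg.le)
  have heq := Finset.eq_of_subset_of_card_le hsub hcard
  ext x
  simp only [Set.mem_setOf_eq]
  constructor
  · intro hx
    have hxr : x ∈ (lineLap t).charpoly.roots.toFinset := by
      rw [Multiset.mem_toFinset, Polynomial.mem_roots hp0, Polynomial.IsRoot, aux_charpoly_eval]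
      exact (aux_mem_spectrum _ _).1 hx
    rw [← heq] at hxr
    obtain ⟨k, -, hk⟩ := Finset.mem_image.1 hxr
    exact ⟨k, hk.symm⟩
  · rintro ⟨k, rfl⟩
    exact hmem k
end
end
end

section
/- Let T be a finite forest (a graph without cycles) all of whose vertices have degree at most M > 0, and let A be its adjacency matrix. Then the operator norm satisfies ‖A‖ ≤ 2√M. -/
open MeasureTheory Filter Real Topology

noncomputable section

section StmtAuxSection

open SimpleGraph Finset

namespace StmtAux

variable {V : Type} [Fintype V] [DecidableEq V] (G : SimpleGraph V)

set_option linter.unusedSectionVars false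






/-- A canonical root of the connected component of `v`. -/
def root (v : V) : V := (G.connectedComponentMk v).out

lemma reachable_root (v : V) : G.Reachable v (root G v) :=
  (SimpleGraph.ConnectedComponent.exact (Quot.out_eq (G.connectedComponentMk v))).symm

/-- A chosen path from `v` to the root of its component. -/
def pathTo (v : V) : G.Path v (root G v) :=
  (Classical.choice (reachable_root G v)).toPath

/-- The parent of `v`: the second vertex on the chosen path to the root. -/
def parent (v : V) : V := (pathTo G v).1.getVert 1

lemma parent_eq_or_adj (v : V) : parent G v = v ∨ G.Adj v (parent G v) := by
  by_cases h : (pathTo G v).1.length = 0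
  · left
    have h1 : (pathTo G v).1.getVert 1 = root G v :=
      (pathTo G v).1.getVert_of_length_le (by omega)
    have h0 : (pathTo G v).1.getVert 0 = root G v :=
      (pathTo G v).1.getVert_of_length_le (by omega)
    rw [Walk.getVert_zero] at h0
    rw [parent, h1, ← h0]
  · right
    have := (pathTo G v).1.adj_getVert_succ (i := 0) (by omega)
    rwa [Walk.getVert_zero] at this

lemma parent_cover (hG : G.IsAcyclic) {u v : V} (h : G.Adj u v) :
    parent G u = v ∨ parent G v = u := by
  classical
  by_cases hu : u ∈ (pathTo G v).1.support
  · right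
    have hq : ((pathTo G v).1.takeUntil u hu).IsPath := (pathTo G v).2.takeUntil hu
    have hsingle : (Walk.cons h.symm Walk.nil : G.Walk v u).IsPath := by
      simp [h.ne']
    have huniq := hG.path_unique (⟨(pathTo G v).1.takeUntil u hu, hq⟩ : G.Path v u)
      ⟨Walk.cons h.symm Walk.nil, hsingle⟩
    have htq : (pathTo G v).1.takeUntil u hu = Walk.cons h.symm Walk.nil :=
      congrArg Subtype.val huniq
    have hspec := (pathTo G v).1.take_spec hu
    have : (pathTo G v).1.getVert 1 = u := by
      conv_lhs => rw [← hspec, htq]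
      simp [Walk.cons_append, Walk.nil_append, Walk.getVert_cons_succ, Walk.getVert_zero]
    exact this
  · left
    have hroots : root G u = root G v := by
      unfold root
      rw [SimpleGraph.ConnectedComponent.sound h.reachable]
    have hcons : (Walk.cons h (pathTo G v).1).IsPath :=
      (pathTo G v).2.cons hu
    have hw : ((Walk.cons h (pathTo G v).1).copy rfl hroots.symm).IsPath := by
      simpa using hcons
    have huniq := hG.path_unique (pathTo G u)
      ⟨(Walk.cons h (pathTo G v).1).copy rfl hroots.symm, hw⟩
    have : (pathTo G u).1 = (Walk.cons h (pathTo G v).1).copy rfl hroots.symm :=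
      congrArg Subtype.val huniq
    rw [parent, this]
    simp [Walk.getVert_copy, Walk.getVert_cons_succ, Walk.getVert_zero]








/-- Key counting bound: if each `s v` has at most `K` elements and each `u` lies in at most `L`
of the `s v`, then the ℓ² mass of the row sums is at most `K*L` times that of `x`. -/
lemma counting (s : V → Finset V) (xf : V → ℝ) (K L : ℝ) (hK0 : 0 ≤ K) (hL0 : 0 ≤ L)
    (hK : ∀ v, ((s v).card : ℝ) ≤ K)
    (hL : ∀ u, (((univ.filter fun v => u ∈ s v).card : ℝ)) ≤ L) :
    ∑ v, (∑ u ∈ s v, xf u) ^ 2 ≤ K * L * ∑ u, xf u ^ 2 := by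
  have swap : ∑ v, ∑ u ∈ s v, xf u ^ 2
      = ∑ u, (((univ.filter fun v => u ∈ s v).card : ℝ)) * xf u ^ 2 := by
    have : ∀ v, ∑ u ∈ s v, xf u ^ 2 = ∑ u, if u ∈ s v then xf u ^ 2 else 0 := by
      intro v
      rw [Finset.sum_ite_mem, Finset.univ_inter]
    simp_rw [this]
    rw [Finset.sum_comm]
    congr 1
    funext u
    rw [Finset.sum_ite, Finset.sum_const, Finset.sum_const]
    simp [nsmul_eq_mul]
  calc ∑ v, (∑ u ∈ s v, xf u) ^ 2
      ≤ ∑ v, K * ∑ u ∈ s v, xf u ^ 2 := by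
        apply Finset.sum_le_sum
        intro v _
        calc (∑ u ∈ s v, xf u) ^ 2 ≤ ((s v).card : ℝ) * ∑ u ∈ s v, xf u ^ 2 :=
              sq_sum_le_card_mul_sum_sq
          _ ≤ K * ∑ u ∈ s v, xf u ^ 2 :=
              mul_le_mul_of_nonneg_right (hK v) (by positivity)
    _ = K * ∑ v, ∑ u ∈ s v, xf u ^ 2 := by rw [Finset.mul_sum]
    _ ≤ K * (L * ∑ u, xf u ^ 2) := by
        apply mul_le_mul_of_nonneg_left _ hK0
        rw [swap, Finset.mul_sum]
        apply Finset.sum_le_sum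
        intro u _
        exact mul_le_mul_of_nonneg_right (hL u) (by positivity)
    _ = K * L * ∑ u, xf u ^ 2 := by ring

lemma norm_bound (G : SimpleGraph V) [DecidableRel G.Adj] (p : V → V)
    (H1 : ∀ v, p v = v ∨ G.Adj v (p v))
    (H2 : ∀ u v, G.Adj u v → p u = v ∨ p v = u)
    (M : ℝ) (hM : 0 < M) (hdeg : ∀ x, ((G.degree x : ℝ)) ≤ M) :
    ‖Matrix.toEuclideanCLM (𝕜 := ℝ) (G.adjMatrix ℝ)‖ ≤ 2 * Real.sqrt M := by
  refine ContinuousLinearMap.opNorm_le_bound _ (by positivity) (fun x => ?_)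
  set xf : V → ℝ := WithLp.equiv 2 (V → ℝ) x with hxf
  have hx : x = (WithLp.equiv 2 (V → ℝ)).symm xf := by simp [hxf]
  set P1 : V → Finset V := fun v => univ.filter (fun u => p v = u ∧ v ≠ u) with hP1
  set P2 : V → Finset V := fun v => univ.filter (fun u => p u = v ∧ u ≠ v ∧ p v ≠ u) with hP2
  have hmemP1 : ∀ v u, u ∈ P1 v ↔ (p v = u ∧ v ≠ u) := by
    intro v u; simp [hP1]
  have hmemP2 : ∀ v u, u ∈ P2 v ↔ (p u = v ∧ u ≠ v ∧ p v ≠ u) := by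
    intro v u; simp [hP2]
  have hadj_of_P1 : ∀ v u, u ∈ P1 v → G.Adj v u := by
    intro v u hu
    rw [hmemP1] at hu
    rcases H1 v with h | h
    · exact absurd (hu.1.symm.trans h) (Ne.symm hu.2)
    · rwa [hu.1] at h
  have hadj_of_P2 : ∀ v u, u ∈ P2 v → G.Adj v u := by
    intro v u hu
    rw [hmemP2] at hu
    rcases H1 u with h | h
    · exact absurd (hu.1.symm.trans h).symm hu.2.1
    · rw [hu.1] at h; exact h.symm
  have hsplit : ∀ v, G.neighborFinset v = P1 v ∪ P2 v := by
    intro v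
    apply Finset.Subset.antisymm
    · intro u hu
      rw [SimpleGraph.mem_neighborFinset] at hu
      by_cases hpv : p v = u
      · exact Finset.mem_union_left _ ((hmemP1 v u).2 ⟨hpv, hu.ne⟩)
      · rcases H2 u v hu.symm with h | h
        · exact Finset.mem_union_right _ ((hmemP2 v u).2 ⟨h, hu.ne', hpv⟩)
        · exact absurd h hpv
    · intro u hu
      rw [SimpleGraph.mem_neighborFinset]
      rcases Finset.mem_union.1 hu with h | h
      · exact hadj_of_P1 v u h
      · exact hadj_of_P2 v u h
  have hdisj : ∀ v, Disjoint (P1 v) (P2 v) := by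
    intro v
    rw [Finset.disjoint_left]
    intro u h1 h2
    exact ((hmemP2 v u).1 h2).2.2 ((hmemP1 v u).1 h1).1
  -- cardinality bounds
  have hcardP1 : ∀ v, ((P1 v).card : ℝ) ≤ 1 := by
    intro v
    have : P1 v ⊆ {p v} := by
      intro u hu
      rw [Finset.mem_singleton]
      exact ((hmemP1 v u).1 hu).1.symm
    have := Finset.card_le_card this
    simp only [Finset.card_singleton] at this
    exact_mod_cast this
  have hfibP1 : ∀ u, (((univ.filter fun v => u ∈ P1 v).card : ℝ)) ≤ M := by
    intro u
    refine le_trans ?_ (hdeg u)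
    have hsub : (univ.filter fun v => u ∈ P1 v) ⊆ G.neighborFinset u := by
      intro v hv
      rw [Finset.mem_filter] at hv
      rw [SimpleGraph.mem_neighborFinset]
      exact (hadj_of_P1 v u hv.2).symm
    exact_mod_cast Finset.card_le_card hsub
  have hcardP2 : ∀ v, ((P2 v).card : ℝ) ≤ M := by
    intro v
    refine le_trans ?_ (hdeg v)
    have hsub : P2 v ⊆ G.neighborFinset v := by
      intro u hu
      rw [SimpleGraph.mem_neighborFinset]
      exact hadj_of_P2 v u hu
    exact_mod_cast Finset.card_le_card hsub
  have hfibP2 : ∀ u, (((univ.filter fun v => u ∈ P2 v).card : ℝ)) ≤ 1 := by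
    intro u
    have hsub : (univ.filter fun v => u ∈ P2 v) ⊆ {p u} := by
      intro v hv
      rw [Finset.mem_filter] at hv
      rw [Finset.mem_singleton]
      exact ((hmemP2 v u).1 hv.2).1.symm
    have := Finset.card_le_card hsub
    simp only [Finset.card_singleton] at this
    exact_mod_cast this
  -- the two vectors
  set Y : EuclideanSpace ℝ V := (WithLp.equiv 2 (V → ℝ)).symm (fun v => ∑ u ∈ P1 v, xf u) with hY
  set Z : EuclideanSpace ℝ V := (WithLp.equiv 2 (V → ℝ)).symm (fun v => ∑ u ∈ P2 v, xf u) with hZ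
  have hYZ : Matrix.toEuclideanCLM (𝕜 := ℝ) (G.adjMatrix ℝ) x = Y + Z := by
    rw [hx, hY, hZ, WithLp.equiv_symm_apply, Matrix.toEuclideanCLM_toLp, ← WithLp.toLp_add]
    congr 1
    funext v
    show (G.adjMatrix ℝ).mulVec xf v = _
    rw [SimpleGraph.adjMatrix_mulVec_apply, hsplit v, Finset.sum_union (hdisj v)]
    rfl
  -- norms
  have hnormsq : ∀ (f : V → ℝ), ‖(WithLp.equiv 2 (V → ℝ)).symm f‖
      = Real.sqrt (∑ v, f v ^ 2) := by
    intro f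
    rw [EuclideanSpace.norm_eq]
    congr 1
    apply Finset.sum_congr rfl
    intro v _
    rw [WithLp.equiv_symm_apply, PiLp.toLp_apply, Real.norm_eq_abs, sq_abs]
  have hxnorm : ‖x‖ = Real.sqrt (∑ v, xf v ^ 2) := by
    rw [hx, hnormsq]
  have hbound : ∀ (s : V → Finset V), (∀ v, ((s v).card : ℝ) ≤ 1 ∨ ((s v).card : ℝ) ≤ M) →
      True := fun _ _ => trivial
  have hYn : ‖Y‖ ≤ Real.sqrt M * ‖x‖ := by
    rw [hY, hnormsq, hxnorm, ← Real.sqrt_mul hM.le]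
    apply Real.sqrt_le_sqrt
    have := counting P1 xf 1 M zero_le_one hM.le hcardP1 hfibP1
    linarith
  have hZn : ‖Z‖ ≤ Real.sqrt M * ‖x‖ := by
    rw [hZ, hnormsq, hxnorm, ← Real.sqrt_mul hM.le]
    apply Real.sqrt_le_sqrt
    have := counting P2 xf M 1 hM.le zero_le_one hcardP2 hfibP2
    linarith
  calc ‖Matrix.toEuclideanCLM (𝕜 := ℝ) (G.adjMatrix ℝ) x‖ = ‖Y + Z‖ := by rw [hYZ]
    _ ≤ ‖Y‖ + ‖Z‖ := norm_add_le Y Z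
    _ ≤ Real.sqrt M * ‖x‖ + Real.sqrt M * ‖x‖ := add_le_add hYn hZn
    _ = 2 * Real.sqrt M * ‖x‖ := by ring

end StmtAux

end StmtAuxSection

/-- The adjacency matrix of a forest with maximal degree at most `M`
has operator norm at most `2√M`. -/
theorem stmt18 (V : Type) [Fintype V] [DecidableEq V] (G : SimpleGraph V)
    (hG : G.IsAcyclic) (M : ℝ) (hM : 0 < M) (hdeg : ∀ x, (ER.gdeg G x : ℝ) ≤ M) :
    ER.opNorm (ER.gadj G) ≤ 2 * Real.sqrt M := by
  letI : DecidableRel G.Adj := Classical.decRel _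
  have hdeg' : ∀ x, ((G.degree x : ℝ)) ≤ M := by
    intro x
    refine le_trans (le_of_eq ?_) (hdeg x)
    norm_cast
    simp [ER.gdeg, Set.ncard_eq_toFinset_card', SimpleGraph.degree, SimpleGraph.neighborFinset]
  have key := StmtAux.norm_bound G (StmtAux.parent G)
      (StmtAux.parent_eq_or_adj G) (fun u v h => StmtAux.parent_cover G hG h) M hM hdeg'
  exact key
end
end
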